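/- arXiv:2211.14101 — 9 statements merged into one kernel-verified Lean document; each statement's English description precedes it below -/
import Mathlib

section
/- If H is a 3-uniform hypergraph on n vertices, then the number of maximal strongly independent sets of H is at most g(n), where g(n) = 3^{n/3} if n ≡ 0 (mod 3), g(n) = 4·3^{(n-4)/3} if n ≡ 1 (mod 3), and g(n) = 16·3^{(n-8)/3} if n ≡ 2 (mod 3). (For small n with n ≡ 1 or 2 (mod 3) the bound is interpreted as a real number.) -/
/-- The bound `g(n)`, interpreted as a real number. -/
noncomputable def g (n : ℕ) : ℝ :=
  if n % 3 = 0 then (3 : ℝ) ^ ((n : ℝ) / 3)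
  else if n % 3 = 1 then 4 * (3 : ℝ) ^ (((n : ℝ) - 4) / 3)
  else 16 * (3 : ℝ) ^ (((n : ℝ) - 8) / 3)

/-- `S` is strongly independent: every hyperedge shares at most one vertex with `S`. -/
def StronglyIndep {n : ℕ} (E : Finset (Finset (Fin n))) (S : Finset (Fin n)) : Prop :=
  ∀ H ∈ E, (H ∩ S).card ≤ 1

/-- `S` is a maximal strongly independent set. -/
def MaximalStronglyIndep {n : ℕ} (E : Finset (Finset (Fin n))) (S : Finset (Fin n)) : Prop :=
  StronglyIndep E S ∧ ∀ T : Finset (Fin n), StronglyIndep E T → S ⊆ T → S = T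



/-- Scaled Moon–Moser bound: `F n = 9 * (Moon-Moser bound on n vertices)`. -/
def F (n : ℕ) : ℕ :=
  if n % 3 = 0 then 3 ^ (n / 3 + 2)
  else if n % 3 = 1 then 4 * 3 ^ ((n + 2) / 3)
  else 2 * 3 ^ ((n + 4) / 3)

/-- Scaled hypergraph bound: `G n = 9 * g n`. -/
def G (n : ℕ) : ℕ :=
  if n % 3 = 2 then 16 * 3 ^ ((n - 2) / 3) else F n

lemma Fval0 {n : ℕ} (h : n % 3 = 0) : F n = 9 * 3 ^ (n / 3) := by
  unfold F; rw [if_pos h, pow_add]; ring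

lemma Fval1 {n : ℕ} (h : n % 3 = 1) : F n = 12 * 3 ^ (n / 3) := by
  unfold F; rw [if_neg (by omega), if_pos h,
    show (n + 2) / 3 = n / 3 + 1 from by omega, pow_succ]; ring

lemma Fval2 {n : ℕ} (h : n % 3 = 2) : F n = 18 * 3 ^ (n / 3) := by
  unfold F; rw [if_neg (by omega), if_neg (by omega),
    show (n + 4) / 3 = n / 3 + 2 from by omega, pow_add]; ring

lemma Gval2 {n : ℕ} (h : n % 3 = 2) : G n = 16 * 3 ^ (n / 3) := by
  unfold G; rw [if_pos h, show (n - 2) / 3 = n / 3 from by omega]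

lemma GeqF {n : ℕ} (h : n % 3 ≠ 2) : G n = F n := by
  unfold G; rw [if_neg h]

lemma F_succ (n : ℕ) : F n ≤ F (n + 1) := by
  have h3 : 0 < (3:ℕ) ^ (n / 3) := by positivity
  rcases (show n % 3 = 0 ∨ n % 3 = 1 ∨ n % 3 = 2 from by omega) with h | h | h
  · rw [Fval0 h, Fval1 (by omega), show (n + 1) / 3 = n / 3 from by omega]; omega
  · rw [Fval1 h, Fval2 (by omega), show (n + 1) / 3 = n / 3 from by omega]; omega
  · rw [Fval2 h, Fval0 (by omega), show (n + 1) / 3 = n / 3 + 1 from by omega, pow_succ]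
    nlinarith

lemma Fmono : Monotone F := monotone_nat_of_le_succ F_succ

lemma Fpos (n : ℕ) : 0 < F n := by
  rcases (show n % 3 = 0 ∨ n % 3 = 1 ∨ n % 3 = 2 from by omega) with h | h | h
  · rw [Fval0 h]; positivity
  · rw [Fval1 h]; positivity
  · rw [Fval2 h]; positivity

lemma F_add_three (n : ℕ) : F (n + 3) = 3 * F n := by
  have e : (n + 3) / 3 = n / 3 + 1 := by omega
  rcases (show n % 3 = 0 ∨ n % 3 = 1 ∨ n % 3 = 2 from by omega) with h | h | h
  · rw [Fval0 h, Fval0 (by omega), e, pow_succ]; ring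
  · rw [Fval1 h, Fval1 (by omega), e, pow_succ]; ring
  · rw [Fval2 h, Fval2 (by omega), e, pow_succ]; ring

lemma A2 (n : ℕ) : 2 * F n ≤ F (n + 2) := by
  have h3 : 0 < (3:ℕ) ^ (n / 3) := by positivity
  rcases (show n % 3 = 0 ∨ n % 3 = 1 ∨ n % 3 = 2 from by omega) with h | h | h
  · rw [Fval0 h, Fval2 (by omega), show (n + 2) / 3 = n / 3 from by omega]; omega
  · rw [Fval1 h, Fval0 (by omega), show (n + 2) / 3 = n / 3 + 1 from by omega, pow_succ]
    nlinarith
  · rw [Fval2 h, Fval1 (by omega), show (n + 2) / 3 = n / 3 + 1 from by omega, pow_succ]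
    nlinarith

lemma A4 (n : ℕ) : 4 * F n ≤ F (n + 4) := by
  have h3 : 0 < (3:ℕ) ^ (n / 3) := by positivity
  rcases (show n % 3 = 0 ∨ n % 3 = 1 ∨ n % 3 = 2 from by omega) with h | h | h
  · rw [Fval0 h, Fval1 (by omega), show (n + 4) / 3 = n / 3 + 1 from by omega, pow_succ]
    nlinarith
  · rw [Fval1 h, Fval2 (by omega), show (n + 4) / 3 = n / 3 + 1 from by omega, pow_succ]
    nlinarith
  · rw [Fval2 h, Fval0 (by omega), show (n + 4) / 3 = n / 3 + 2 from by omega, pow_add]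
    nlinarith

lemma key1 : ∀ δ m, (δ + 1) * F m ≤ F (m + δ + 1) := by
  intro δ
  induction δ using Nat.strong_induction_on with
  | _ δ IH =>
    intro m
    match δ with
    | 0 => simpa using F_succ m
    | 1 => simpa [two_mul] using A2 m
    | 2 => have := F_add_three m
           rw [show m + 2 + 1 = m + 3 from by ring]; omega
    | 3 => have := A4 m
           rw [show m + 3 + 1 = m + 4 from by ring]; omega
    | (d + 4) =>
      have h1 := IH (d + 1) (by omega) m
      have h2 : F (m + (d + 4) + 1) = 3 * F (m + (d + 1) + 1) := by
        rw [show m + (d + 4) + 1 = (m + (d + 1) + 1) + 3 from by ring, F_add_three]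
      rw [h2]
      nlinarith [Fpos m]

lemma G_add_three {n : ℕ} (h : n % 3 = 2) : G (n + 3) = 3 * G n := by
  rw [Gval2 h, Gval2 (by omega), show (n + 3) / 3 = n / 3 + 1 from by omega, pow_succ]; ring

lemma key2 : ∀ δ m, 3 ≤ δ → (m + δ + 1) % 3 = 2 → (δ + 1) * F m ≤ G (m + δ + 1) := by
  intro δ
  induction δ using Nat.strong_induction_on with
  | _ δ IH =>
    intro m h3 hmod
    have hp : 0 < (3:ℕ) ^ (m / 3) := by positivity
    match δ, h3 with
    | 3, _ =>
      rw [Fval1 (by omega), Gval2 hmod,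
        show (m + 3 + 1) / 3 = m / 3 + 1 from by omega, pow_succ]
      nlinarith
    | 4, _ =>
      rw [Fval0 (by omega), Gval2 hmod,
        show (m + 4 + 1) / 3 = m / 3 + 1 from by omega, pow_succ]
      nlinarith
    | 5, _ =>
      rw [Fval2 (by omega), Gval2 hmod,
        show (m + 5 + 1) / 3 = m / 3 + 2 from by omega, pow_add]
      nlinarith
    | (d + 6), _ =>
      have h1 := IH (d + 3) (by omega) m (by omega) (by omega)
      have h2 : G (m + (d + 6) + 1) = 3 * G (m + (d + 3) + 1) := by
        rw [show m + (d + 6) + 1 = (m + (d + 3) + 1) + 3 from by ring,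
          G_add_three (by omega)]
      rw [h2]
      nlinarith [Fpos m]

lemma F_pred_le_G {n : ℕ} (h : n % 3 = 2) : F (n - 1) ≤ G n := by
  have h2 : 2 ≤ n := by omega
  rw [Fval1 (by omega), Gval2 h, show (n - 1) / 3 = n / 3 from by omega]
  have hp : 0 < (3:ℕ) ^ (n / 3) := by positivity
  omega

lemma nine_le_G (n : ℕ) : 9 ≤ G n := by
  have hp : 1 ≤ (3:ℕ) ^ (n / 3) := Nat.one_le_pow _ _ (by norm_num)
  rcases (show n % 3 = 0 ∨ n % 3 = 1 ∨ n % 3 = 2 from by omega) with h | h | h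
  · rw [GeqF (by omega), Fval0 h]; nlinarith
  · rw [GeqF (by omega), Fval1 h]; nlinarith
  · rw [Gval2 h]; nlinarith

lemma delta2_sum {n : ℕ} (h : n % 3 = 2) (h5 : 5 ≤ n) :
    F (n - 3) + (F (n - 3) + F (n - 4)) ≤ G n := by
  obtain ⟨q, hq⟩ : ∃ q, n / 3 = q + 1 := ⟨n / 3 - 1, by omega⟩
  have e3 : (n - 3) / 3 = q := by omega
  have e4 : (n - 4) / 3 = q := by omega
  rw [Fval2 (by omega), Fval1 (by omega), Gval2 h, e3, e4, hq, pow_succ]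
  have hp : 0 < (3:ℕ) ^ q := by positivity
  nlinarith

section Graph
set_option linter.unusedSectionVars false

variable {α : Type*} [DecidableEq α] (adj : α → α → Prop)

/-- `S` is an independent set for the relation `adj`. -/
def Ind (S : Finset α) : Prop := ∀ x ∈ S, ∀ y ∈ S, ¬ adj x y

open Classical in
/-- Neighbours of `v` inside `V`. -/
noncomputable def nbr (V : Finset α) (v : α) : Finset α := V.filter (fun w => adj v w)

/-- Closed neighbourhood of `v` inside `V`. -/
noncomputable def cnbr (V : Finset α) (v : α) : Finset α := insert v (nbr adj V v)

open Classical in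
/-- The set of maximal independent subsets of `V`. -/
noncomputable def misSet (V : Finset α) : Finset (Finset α) :=
  V.powerset.filter (fun S => Ind adj S ∧ ∀ w ∈ V, w ∉ S → ¬ Ind adj (insert w S))

lemma mem_misSet {V S : Finset α} :
    S ∈ misSet adj V ↔ S ⊆ V ∧ Ind adj S ∧ ∀ w ∈ V, w ∉ S → ¬ Ind adj (insert w S) := by
  simp [misSet, Finset.mem_filter, Finset.mem_powerset, and_assoc]

lemma mem_nbr {V : Finset α} {v w : α} : w ∈ nbr adj V v ↔ w ∈ V ∧ adj v w := by
  simp [nbr]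

lemma mem_cnbr {V : Finset α} {v w : α} :
    w ∈ cnbr adj V v ↔ w = v ∨ (w ∈ V ∧ adj v w) := by
  simp [cnbr, mem_nbr]

lemma cnbr_subset {V : Finset α} {v : α} (hv : v ∈ V) : cnbr adj V v ⊆ V := by
  intro x hx
  rcases (mem_cnbr adj).mp hx with rfl | ⟨h, _⟩ <;> assumption

variable {adj}
variable (hsym : ∀ x y, adj x y → adj y x) (hirr : ∀ x, ¬ adj x x)

include hirr in
lemma cnbr_card {V : Finset α} {v : α} :
    (cnbr adj V v).card = (nbr adj V v).card + 1 := by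
  unfold cnbr
  rw [Finset.card_insert_of_notMem]
  rw [mem_nbr]
  exact fun h => hirr v h.2

include hirr in
lemma card_sdiff_cnbr {V : Finset α} {v : α} (hv : v ∈ V) :
    (V \ cnbr adj V v).card = V.card - (nbr adj V v).card - 1 := by
  rw [Finset.card_sdiff_of_subset (cnbr_subset adj hv), cnbr_card hirr]
  omega

include hsym hirr in
lemma misSet_meet {V S : Finset α} {v : α} (hS : S ∈ misSet adj V) (hv : v ∈ V) :
    ∃ u ∈ cnbr adj V v, u ∈ S := by
  by_contra hc
  push_neg at hc
  rw [mem_misSet] at hS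
  obtain ⟨hSV, hInd, hMax⟩ := hS
  have hvS : v ∉ S := hc v (by rw [mem_cnbr]; left; rfl)
  refine hMax v hv hvS ?_
  intro x hx y hy
  have key : ∀ z ∈ S, ¬ adj v z := by
    intro z hz hadj
    exact hc z (by rw [mem_cnbr]; right; exact ⟨hSV hz, hadj⟩) hz
  rcases Finset.mem_insert.mp hx with hxv | hxS
  · rcases Finset.mem_insert.mp hy with hyv | hyS
    · subst hxv; subst hyv; exact hirr _
    · subst hxv; exact key y hyS
  · rcases Finset.mem_insert.mp hy with hyv | hyS
    · subst hyv; exact fun h => key x hxS (hsym _ _ h)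
    · exact hInd x hxS y hyS

include hsym in
lemma misSet_erase {V S : Finset α} {u : α} (hS : S ∈ misSet adj V) (hu : u ∈ S) :
    S.erase u ∈ misSet adj (V \ cnbr adj V u) := by
  rw [mem_misSet] at hS ⊢
  obtain ⟨hSV, hInd, hMax⟩ := hS
  refine ⟨?_, ?_, ?_⟩
  · intro x hx
    obtain ⟨hxu, hxS⟩ := Finset.mem_erase.mp hx
    refine Finset.mem_sdiff.mpr ⟨hSV hxS, ?_⟩
    rw [mem_cnbr]
    rintro (rfl | ⟨-, hadj⟩)
    · exact hxu rfl
    · exact hInd u hu x hxS hadj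
  · intro x hx y hy
    exact hInd x (Finset.mem_of_mem_erase hx) y (Finset.mem_of_mem_erase hy)
  · intro w hw hwS hIndw
    obtain ⟨hwV, hwnc⟩ := Finset.mem_sdiff.mp hw
    have hwu : w ≠ u := by
      rintro rfl
      exact hwnc (by rw [mem_cnbr]; left; rfl)
    have hwS' : w ∉ S := fun h => hwS (Finset.mem_erase.mpr ⟨hwu, h⟩)
    refine hMax w hwV hwS' ?_
    have key : ∀ z ∈ S, ¬ adj w z := by
      intro z hz
      by_cases hzu : z = u
      · subst hzu
        intro hadj
        apply hwnc
        rw [mem_cnbr]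
        right
        exact ⟨hwV, hsym _ _ hadj⟩
      · exact hIndw w (Finset.mem_insert_self _ _) z
          (Finset.mem_insert_of_mem (Finset.mem_erase.mpr ⟨hzu, hz⟩))
    intro x hx y hy
    rcases Finset.mem_insert.mp hx with hxw | hxS
    · rcases Finset.mem_insert.mp hy with hyw | hyS
      · subst hxw; subst hyw
        exact hIndw _ (Finset.mem_insert_self _ _) _ (Finset.mem_insert_self _ _)
      · subst hxw; exact key y hyS
    · rcases Finset.mem_insert.mp hy with hyw | hyS
      · subst hyw; exact fun h => key x hxS (hsym _ _ h)
      · exact hInd x hxS y hyS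

include hsym in
lemma count_le {V : Finset α} (u : α) :
    ((misSet adj V).filter (fun S => u ∈ S)).card ≤ (misSet adj (V \ cnbr adj V u)).card := by
  classical
  apply Finset.card_le_card_of_injOn (fun S => S.erase u)
  · intro S hS
    obtain ⟨hS, huS⟩ := Finset.mem_filter.mp hS
    exact misSet_erase hsym hS huS
  · intro S1 h1 S2 h2 he
    have hu1 : u ∈ S1 := (Finset.mem_filter.mp (Finset.mem_coe.mp h1)).2
    have hu2 : u ∈ S2 := (Finset.mem_filter.mp (Finset.mem_coe.mp h2)).2
    rw [← Finset.insert_erase hu1, ← Finset.insert_erase hu2]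
    simp only at he
    rw [he]

include hsym hirr in
lemma mis_rec {V : Finset α} {v : α} (hv : v ∈ V) :
    (misSet adj V).card ≤ ∑ u ∈ cnbr adj V v, (misSet adj (V \ cnbr adj V u)).card := by
  classical
  have hsub : misSet adj V ⊆ (cnbr adj V v).biUnion
      (fun u => (misSet adj V).filter (fun S => u ∈ S)) := by
    intro S hS
    obtain ⟨u, hu, huS⟩ := misSet_meet hsym hirr hS hv
    exact Finset.mem_biUnion.mpr ⟨u, hu, Finset.mem_filter.mpr ⟨hS, huS⟩⟩
  calc (misSet adj V).card
      ≤ ((cnbr adj V v).biUnion (fun u => (misSet adj V).filter (fun S => u ∈ S))).card :=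
        Finset.card_le_card hsub
    _ ≤ ∑ u ∈ cnbr adj V v, ((misSet adj V).filter (fun S => u ∈ S)).card :=
        Finset.card_biUnion_le
    _ ≤ ∑ u ∈ cnbr adj V v, (misSet adj (V \ cnbr adj V u)).card :=
        Finset.sum_le_sum (fun u _ => count_le hsym u)

lemma misSet_empty_card : (misSet adj (∅ : Finset α)).card ≤ 1 := by
  have h : misSet adj (∅ : Finset α) ⊆ {∅} := by
    intro S hS
    have := (mem_misSet adj).mp hS |>.1
    simp only [Finset.subset_empty] at this
    simp [this]
  simpa using Finset.card_le_card h

include hsym hirr in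
/-- Moon–Moser bound (scaled by 9). -/
lemma misT : ∀ (N : ℕ) (V : Finset α), V.card ≤ N → 9 * (misSet adj V).card ≤ F V.card := by
  intro N
  induction N with
  | zero =>
    intro V hV
    have hVe : V = ∅ := Finset.card_eq_zero.mp (Nat.le_zero.mp hV)
    subst hVe
    have := misSet_empty_card (adj := adj)
    rw [Finset.card_empty, Fval0 (by norm_num)]
    omega
  | succ N IH =>
    intro V hV
    rcases Finset.eq_empty_or_nonempty V with rfl | hne
    · have := misSet_empty_card (adj := adj)
      rw [Finset.card_empty, Fval0 (by norm_num)]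
      omega
    · obtain ⟨v, hv, hmin⟩ := Finset.exists_min_image V (fun u => (nbr adj V u).card) hne
      set n := V.card with hn
      set δ := (nbr adj V v).card with hδ
      have hδ1 : δ + 1 ≤ n := by
        calc δ + 1 = (cnbr adj V v).card := (cnbr_card hirr).symm
          _ ≤ n := Finset.card_le_card (cnbr_subset adj hv)
      have hterm : ∀ u ∈ cnbr adj V v,
          9 * (misSet adj (V \ cnbr adj V u)).card ≤ F (n - δ - 1) := by
        intro u hu
        have huV : u ∈ V := cnbr_subset adj hv hu
        have hcard : (V \ cnbr adj V u).card = n - (nbr adj V u).card - 1 :=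
          card_sdiff_cnbr hirr huV
        have hlt : (V \ cnbr adj V u).card ≤ N := by
          have := hmin u huV
          omega
        have h1 := IH (V \ cnbr adj V u) hlt
        refine h1.trans (Fmono ?_)
        rw [hcard]
        have := hmin u huV
        omega
      have hrec := mis_rec hsym hirr hv
      calc 9 * (misSet adj V).card
          ≤ 9 * ∑ u ∈ cnbr adj V v, (misSet adj (V \ cnbr adj V u)).card :=
            Nat.mul_le_mul_left 9 hrec
        _ = ∑ u ∈ cnbr adj V v, 9 * (misSet adj (V \ cnbr adj V u)).card := by
            rw [Finset.mul_sum]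
        _ ≤ ∑ _u ∈ cnbr adj V v, F (n - δ - 1) := Finset.sum_le_sum hterm
        _ = (δ + 1) * F (n - δ - 1) := by
            rw [Finset.sum_const, cnbr_card hirr, smul_eq_mul]
        _ ≤ F n := by
            have h := key1 δ (n - δ - 1)
            rw [show n - δ - 1 + δ + 1 = n from by omega] at h
            exact h

end Graph

section Tri
set_option linter.unusedSectionVars false

variable {α : Type*} [DecidableEq α]

/-- Every edge of `adj` inside `V` lies in a triangle inside `V`. -/
def TriProp (adj : α → α → Prop) (V : Finset α) : Prop :=
  ∀ v ∈ V, ∀ w ∈ V, adj v w → ∃ x ∈ V, adj v x ∧ adj w x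

variable {adj : α → α → Prop}
variable (hsym : ∀ x y, adj x y → adj y x) (hirr : ∀ x, ¬ adj x x)

include hsym hirr in
lemma misG : ∀ (N : ℕ) (V : Finset α), V.card ≤ N → TriProp adj V →
    9 * (misSet adj V).card ≤ G V.card := by
  intro N
  induction N with
  | zero =>
    intro V hV _
    have hVe : V = ∅ := Finset.card_eq_zero.mp (Nat.le_zero.mp hV)
    subst hVe
    have := misSet_empty_card (adj := adj)
    rw [Finset.card_empty, GeqF (by norm_num), Fval0 (by norm_num)]
    omega
  | succ N IH =>
    intro V hV htri
    by_cases hmod : V.card % 3 = 2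
    case neg => rw [GeqF hmod]; exact misT hsym hirr (N + 1) V hV
    set n := V.card with hn
    have hne : V.Nonempty := Finset.card_pos.mp (by omega)
    by_cases hiso : ∃ v ∈ V, nbr adj V v = ∅
    · -- an isolated vertex
      obtain ⟨v, hv, hnbrv⟩ := hiso
      have hcv : cnbr adj V v = {v} := by unfold cnbr; rw [hnbrv]; rfl
      have hrec := mis_rec hsym hirr hv
      rw [hcv, Finset.sum_singleton, hcv] at hrec
      have h1 := misT hsym hirr ((V \ {v}).card) (V \ {v}) le_rfl
      have hc : (V \ {v}).card = n - 1 := by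
        rw [Finset.card_sdiff_of_subset (by simpa using hv)]
        simp [hn]
      rw [hc] at h1
      calc 9 * (misSet adj V).card ≤ 9 * (misSet adj (V \ {v})).card :=
            Nat.mul_le_mul_left 9 hrec
        _ ≤ F (n - 1) := h1
        _ ≤ G n := F_pred_le_G hmod
    · push_neg at hiso
      have hdeg2 : ∀ v ∈ V, 2 ≤ (nbr adj V v).card := by
        intro v hv
        obtain ⟨w, hw⟩ := (hiso v hv)
        have hwV : w ∈ V := ((mem_nbr adj).mp hw).1
        have hadj : adj v w := ((mem_nbr adj).mp hw).2
        obtain ⟨x, hxV, hvx, hwx⟩ := htri v hv w hwV hadj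
        have hwx' : w ≠ x := fun h => hirr x (h ▸ hwx)
        have hx : x ∈ nbr adj V v := (mem_nbr adj).mpr ⟨hxV, hvx⟩
        have hsub : ({w, x} : Finset α) ⊆ nbr adj V v :=
          Finset.insert_subset_iff.mpr ⟨hw, Finset.singleton_subset_iff.mpr hx⟩
        calc 2 = ({w, x} : Finset α).card := (Finset.card_pair hwx').symm
          _ ≤ _ := Finset.card_le_card hsub
      obtain ⟨v, hv, hmin⟩ := Finset.exists_min_image V (fun u => (nbr adj V u).card) hne
      have hδ2 : 2 ≤ (nbr adj V v).card := hdeg2 v hv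
      have hδ1 : (nbr adj V v).card + 1 ≤ n := by
        calc (nbr adj V v).card + 1 = (cnbr adj V v).card := (cnbr_card hirr).symm
          _ ≤ n := Finset.card_le_card (cnbr_subset adj hv)
      by_cases hδ3 : 3 ≤ (nbr adj V v).card
      · -- minimum degree at least 3
        set δ := (nbr adj V v).card with hδdef
        have hterm : ∀ u ∈ cnbr adj V v,
            9 * (misSet adj (V \ cnbr adj V u)).card ≤ F (n - δ - 1) := by
          intro u hu
          have huV : u ∈ V := cnbr_subset adj hv hu
          have hcard : (V \ cnbr adj V u).card = n - (nbr adj V u).card - 1 :=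
            card_sdiff_cnbr hirr huV
          have h1 := misT hsym hirr ((V \ cnbr adj V u).card) _ le_rfl
          refine h1.trans (Fmono ?_)
          rw [hcard]
          have := hmin u huV
          omega
        have hrec := mis_rec hsym hirr hv
        calc 9 * (misSet adj V).card
            ≤ 9 * ∑ u ∈ cnbr adj V v, (misSet adj (V \ cnbr adj V u)).card :=
              Nat.mul_le_mul_left 9 hrec
          _ = ∑ u ∈ cnbr adj V v, 9 * (misSet adj (V \ cnbr adj V u)).card := by
              rw [Finset.mul_sum]
          _ ≤ ∑ _u ∈ cnbr adj V v, F (n - δ - 1) := Finset.sum_le_sum hterm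
          _ = (δ + 1) * F (n - δ - 1) := by
              rw [Finset.sum_const, cnbr_card hirr, smul_eq_mul]
          _ ≤ G n := by
              have h := key2 δ (n - δ - 1) hδ3
                (by rw [show n - δ - 1 + δ + 1 = n from by omega]; exact hmod)
              rw [show n - δ - 1 + δ + 1 = n from by omega] at h
              exact h
      · -- minimum degree exactly 2
        have hd2 : (nbr adj V v).card = 2 := by omega
        obtain ⟨a, b, hab, hnbr⟩ := Finset.card_eq_two.mp hd2
        have haN : a ∈ nbr adj V v := by rw [hnbr]; simp
        have hbN : b ∈ nbr adj V v := by rw [hnbr]; simp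
        have haV : a ∈ V := ((mem_nbr adj).mp haN).1
        have hbV : b ∈ V := ((mem_nbr adj).mp hbN).1
        have hva : adj v a := ((mem_nbr adj).mp haN).2
        have hvb : adj v b := ((mem_nbr adj).mp hbN).2
        have hvna : v ≠ a := fun h => hirr a (h ▸ hva)
        have hvnb : v ≠ b := fun h => hirr b (h ▸ hvb)
        have hadjab : adj a b := by
          obtain ⟨x, hxV, hvx, hax⟩ := htri v hv a haV hva
          have hxN : x ∈ nbr adj V v := (mem_nbr adj).mpr ⟨hxV, hvx⟩
          rw [hnbr] at hxN
          rcases Finset.mem_insert.mp hxN with hxa | hxb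
          · exact absurd (hxa ▸ hax) (hirr a)
          · exact (Finset.mem_singleton.mp hxb) ▸ hax
        have hTset : cnbr adj V v = insert v {a, b} := by unfold cnbr; rw [hnbr]
        have hTsub : insert v ({a, b} : Finset α) ⊆ V := hTset ▸ cnbr_subset adj hv
        have hvnotin : v ∉ ({a, b} : Finset α) := by simp [hvna, hvnb]
        have hTcard : (insert v ({a, b} : Finset α)).card = 3 := by
          rw [Finset.card_insert_of_notMem hvnotin, Finset.card_pair hab]
        have h3n : 3 ≤ n := hTcard ▸ Finset.card_le_card hTsub
        have h5n : 5 ≤ n := by omega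
        by_cases hdd : (nbr adj V a).card = 2 ∧ (nbr adj V b).card = 2
        · -- isolated triangle {v, a, b}
          have hnbra : nbr adj V a = {v, b} := by
            refine (Finset.eq_of_subset_of_card_le ?_ ?_).symm
            · refine Finset.insert_subset_iff.mpr ⟨?_, Finset.singleton_subset_iff.mpr ?_⟩
              · exact (mem_nbr adj).mpr ⟨hv, hsym _ _ hva⟩
              · exact (mem_nbr adj).mpr ⟨hbV, hadjab⟩
            · rw [hdd.1, Finset.card_pair hvnb]
          have hnbrb : nbr adj V b = {v, a} := by
            refine (Finset.eq_of_subset_of_card_le ?_ ?_).symm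
            · refine Finset.insert_subset_iff.mpr ⟨?_, Finset.singleton_subset_iff.mpr ?_⟩
              · exact (mem_nbr adj).mpr ⟨hv, hsym _ _ hvb⟩
              · exact (mem_nbr adj).mpr ⟨haV, hsym _ _ hadjab⟩
            · rw [hdd.2, Finset.card_pair hvna]
          have hca : cnbr adj V a = insert v {a, b} := by
            unfold cnbr; rw [hnbra]
            apply Finset.ext
            intro z
            simp only [Finset.mem_insert, Finset.mem_singleton]
            tauto
          have hcb : cnbr adj V b = insert v {a, b} := by
            unfold cnbr; rw [hnbrb]
            apply Finset.ext
            intro z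
            simp only [Finset.mem_insert, Finset.mem_singleton]
            tauto
          have hrec := mis_rec hsym hirr hv
          rw [hTset] at hrec
          have hsum : ∑ u ∈ insert v ({a, b} : Finset α),
              (misSet adj (V \ cnbr adj V u)).card
              = 3 * (misSet adj (V \ insert v {a, b})).card := by
            rw [Finset.sum_congr rfl (g := fun _ => (misSet adj (V \ insert v {a, b})).card)
              ?_, Finset.sum_const, hTcard, smul_eq_mul]
            intro u hu
            rcases Finset.mem_insert.mp hu with h | h
            · rw [h, hTset]
            · rcases Finset.mem_insert.mp h with h' | h'
              · rw [h', hca]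
              · rw [Finset.mem_singleton.mp h', hcb]
          rw [hsum] at hrec
          have htri' : TriProp adj (V \ insert v {a, b}) := by
            intro x hx y hy hadj
            obtain ⟨hxV, hxT⟩ := Finset.mem_sdiff.mp hx
            obtain ⟨hyV, hyT⟩ := Finset.mem_sdiff.mp hy
            obtain ⟨z, hzV, hxz, hyz⟩ := htri x hxV y hyV hadj
            refine ⟨z, Finset.mem_sdiff.mpr ⟨hzV, ?_⟩, hxz, hyz⟩
            intro hzT
            have hxN : x ∈ nbr adj V z := (mem_nbr adj).mpr ⟨hxV, hsym _ _ hxz⟩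
            apply hxT
            rcases Finset.mem_insert.mp hzT with h | h
            · rw [h, hnbr] at hxN
              exact Finset.mem_insert_of_mem hxN
            · rcases Finset.mem_insert.mp h with h' | h'
              · rw [h', hnbra] at hxN
                simp only [Finset.mem_insert, Finset.mem_singleton] at hxN ⊢
                tauto
              · rw [Finset.mem_singleton.mp h', hnbrb] at hxN
                simp only [Finset.mem_insert, Finset.mem_singleton] at hxN ⊢
                tauto
          have hcard' : (V \ insert v {a, b}).card = n - 3 := by
            rw [Finset.card_sdiff_of_subset hTsub, hTcard]
          have hIH := IH (V \ insert v {a, b}) (by omega) htri'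
          rw [hcard'] at hIH
          have hG : G n = 3 * G (n - 3) := by
            have h := G_add_three (show (n - 3) % 3 = 2 by omega)
            rw [show n - 3 + 3 = n from by omega] at h
            exact h
          calc 9 * (misSet adj V).card
              ≤ 9 * (3 * (misSet adj (V \ insert v {a, b})).card) :=
                Nat.mul_le_mul_left 9 hrec
            _ = 3 * (9 * (misSet adj (V \ insert v {a, b})).card) := by ring
            _ ≤ 3 * G (n - 3) := Nat.mul_le_mul_left 3 hIH
            _ = G n := hG.symm
        · -- one of a, b has degree at least 3
          have hone : 3 ≤ (nbr adj V a).card ∨ 3 ≤ (nbr adj V b).card := by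
            have h2a := hdeg2 a haV
            have h2b := hdeg2 b hbV
            omega
          have hrec := mis_rec hsym hirr hv
          rw [hTset, Finset.sum_insert hvnotin,
            Finset.sum_insert (by simp [hab] : a ∉ ({b} : Finset α)),
            Finset.sum_singleton] at hrec
          have hbound : ∀ u ∈ V, 9 * (misSet adj (V \ cnbr adj V u)).card
              ≤ F (n - (nbr adj V u).card - 1) := by
            intro u hu
            have h1 := misT hsym hirr ((V \ cnbr adj V u).card) _ le_rfl
            rwa [card_sdiff_cnbr hirr hu] at h1
          have hv' := hbound v hv
          have ha' := hbound a haV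
          have hb' := hbound b hbV
          have e0 : F (n - (nbr adj V v).card - 1) ≤ F (n - 3) := Fmono (by omega)
          have hds := delta2_sum hmod h5n
          rcases hone with h3a | h3b
          · have e1 : F (n - (nbr adj V a).card - 1) ≤ F (n - 4) := Fmono (by omega)
            have e2 : F (n - (nbr adj V b).card - 1) ≤ F (n - 3) :=
              Fmono (by have := hdeg2 b hbV; omega)
            omega
          · have e1 : F (n - (nbr adj V b).card - 1) ≤ F (n - 4) := Fmono (by omega)
            have e2 : F (n - (nbr adj V a).card - 1) ≤ F (n - 3) :=
              Fmono (by have := hdeg2 a haV; omega)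
            omega

end Tri

lemma Greal (n : ℕ) : (G n : ℝ) = 9 * g n := by
  unfold g
  rcases (show n % 3 = 0 ∨ n % 3 = 1 ∨ n % 3 = 2 from by omega) with h | h | h
  · rw [if_pos h, GeqF (by omega), Fval0 h]
    have e : ((n : ℝ)) / 3 = ((n / 3 : ℕ) : ℝ) := by
      rw [div_eq_iff (by norm_num : (3:ℝ) ≠ 0)]
      exact_mod_cast (Nat.div_mul_cancel (Nat.dvd_of_mod_eq_zero h)).symm
    rw [e, Real.rpow_natCast]
    push_cast
    ring
  · rw [if_neg (by omega), if_pos h, GeqF (by omega), Fval1 h]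
    have e : ((n : ℝ) - 4) / 3 = ((n / 3 : ℕ) : ℝ) - 1 := by
      have hn : (n : ℝ) = 3 * ((n / 3 : ℕ) : ℝ) + 1 := by
        exact_mod_cast (show n = 3 * (n / 3) + 1 from by omega)
      rw [hn]; ring
    rw [e, Real.rpow_sub (by norm_num : (0:ℝ) < 3), Real.rpow_natCast, Real.rpow_one]
    push_cast
    ring
  · rw [if_neg (by omega), if_neg (by omega), Gval2 h]
    have e : ((n : ℝ) - 8) / 3 = ((n / 3 : ℕ) : ℝ) - 2 := by
      have hn : (n : ℝ) = 3 * ((n / 3 : ℕ) : ℝ) + 2 := by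
        exact_mod_cast (show n = 3 * (n / 3) + 2 from by omega)
      rw [hn]; ring
    rw [e, Real.rpow_sub (by norm_num : (0:ℝ) < 3), Real.rpow_natCast,
      show (2:ℝ) = ((2:ℕ):ℝ) from by norm_num, Real.rpow_natCast]
    push_cast
    ring

theorem msis_le_g (n : ℕ) (E : Finset (Finset (Fin n)))
    (hE : ∀ H ∈ E, H.card = 3) :
    ({S : Finset (Fin n) | MaximalStronglyIndep E S}.ncard : ℝ) ≤ g n := by
  classical
  set adj : Fin n → Fin n → Prop := fun u w => u ≠ w ∧ ∃ H ∈ E, u ∈ H ∧ w ∈ H with hadj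
  have hsym : ∀ x y, adj x y → adj y x := by
    rintro x y ⟨hne, H, hH, hx, hy⟩
    exact ⟨hne.symm, H, hH, hy, hx⟩
  have hirr : ∀ x, ¬ adj x x := by
    rintro x ⟨hne, -⟩
    exact hne rfl
  have hSI : ∀ S : Finset (Fin n), StronglyIndep E S ↔ Ind adj S := by
    intro S
    constructor
    · rintro hSI x hx y hy ⟨hne, H, hH, hxH, hyH⟩
      have hsub : ({x, y} : Finset (Fin n)) ⊆ H ∩ S :=
        Finset.insert_subset_iff.mpr ⟨Finset.mem_inter.mpr ⟨hxH, hx⟩,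
          Finset.singleton_subset_iff.mpr (Finset.mem_inter.mpr ⟨hyH, hy⟩)⟩
      have h2 : 2 ≤ (H ∩ S).card := by
        rw [← Finset.card_pair hne]
        exact Finset.card_le_card hsub
      have := hSI H hH
      omega
    · intro hInd H hH
      by_contra hc
      push_neg at hc
      obtain ⟨x, hx, y, hy, hne⟩ := Finset.one_lt_card.mp hc
      exact hInd x (Finset.mem_inter.mp hx).2 y (Finset.mem_inter.mp hy).2
        ⟨hne, H, hH, (Finset.mem_inter.mp hx).1, (Finset.mem_inter.mp hy).1⟩
  have hMSI : ∀ S, MaximalStronglyIndep E S ↔ S ∈ misSet adj Finset.univ := by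
    intro S
    rw [mem_misSet]
    constructor
    · rintro ⟨h1, h2⟩
      refine ⟨Finset.subset_univ S, (hSI S).mp h1, ?_⟩
      intro w _ hwS hIndw
      have hSIw : StronglyIndep E (insert w S) := (hSI _).mpr hIndw
      have heq := h2 (insert w S) hSIw (Finset.subset_insert _ _)
      apply hwS
      rw [heq]
      exact Finset.mem_insert_self w S
    · rintro ⟨-, h2, h3⟩
      refine ⟨(hSI S).mpr h2, ?_⟩
      intro T hT hST
      by_contra hne
      obtain ⟨w, hwT, hwS⟩ := Finset.exists_of_ssubset (hST.ssubset_of_ne hne)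
      apply h3 w (Finset.mem_univ w) hwS
      intro x hx y hy
      have hTI : Ind adj T := (hSI T).mp hT
      have hins : insert w S ⊆ T := Finset.insert_subset hwT hST
      exact hTI x (hins hx) y (hins hy)
  have htri : TriProp adj (Finset.univ : Finset (Fin n)) := by
    rintro v - w - ⟨hne, H, hH, hv, hw⟩
    have hcard := hE H hH
    have hns : ¬ H ⊆ {v, w} := by
      intro hsub
      have h1 := Finset.card_le_card hsub
      have h2 : ({v, w} : Finset (Fin n)).card ≤ 2 := by
        calc ({v, w} : Finset (Fin n)).card ≤ ({w} : Finset (Fin n)).card + 1 :=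
              Finset.card_insert_le v {w}
          _ = 2 := by simp
      omega
    obtain ⟨x, hxH, hxvw⟩ := Finset.not_subset.mp hns
    simp only [Finset.mem_insert, Finset.mem_singleton, not_or] at hxvw
    exact ⟨x, Finset.mem_univ x, ⟨Ne.symm hxvw.1, H, hH, hv, hxH⟩,
      ⟨Ne.symm hxvw.2, H, hH, hw, hxH⟩⟩
  have hset : {S : Finset (Fin n) | MaximalStronglyIndep E S}
      = ↑(misSet adj Finset.univ) := by
    ext S
    simp only [Set.mem_setOf_eq, Finset.coe_sort_coe, Finset.mem_coe]
    exact hMSI S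
  rw [hset, Set.ncard_coe_finset]
  have h9 := misG hsym hirr (Finset.univ : Finset (Fin n)).card Finset.univ le_rfl htri
  rw [Finset.card_univ, Fintype.card_fin] at h9
  have h9' : ((misSet adj Finset.univ).card : ℝ) * 9 ≤ (G n : ℝ) := by
    exact_mod_cast (show (misSet adj Finset.univ).card * 9 ≤ G n from by omega)
  have hg := Greal n
  linarith
end

section
/- For every integer n ≥ 6 there exists a 3-uniform hypergraph H on n vertices whose number of maximal strongly independent sets equals g(n), where g(n) = 3^{n/3} if n ≡ 0 (mod 3), g(n) = 4·3^{(n-4)/3} if n ≡ 1 (mod 3), and g(n) = 16·3^{(n-8)/3} if n ≡ 2 (mod 3). -/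
def gN (n : ℕ) : ℕ :=
  if n % 3 = 0 then 3 ^ (n / 3)
  else if n % 3 = 1 then 4 * 3 ^ ((n - 4) / 3)
  else 16 * 3 ^ ((n - 8) / 3)

section Main
variable {n : ℕ} (f : Fin n → ℕ)

/-- the fiber/block of label `i` -/
def fib (i : ℕ) : Finset (Fin n) := Finset.univ.filter (fun x => f x = i)

/-- the label set -/
def lbl : Finset ℕ := Finset.univ.image f

/-- edges: all 3-subsets of each block -/
def edg : Finset (Finset (Fin n)) := (lbl f).biUnion (fun i => (fib f i).powersetCard 3)

lemma mem_fib {x : Fin n} {i : ℕ} : x ∈ fib f i ↔ f x = i := by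
  simp [fib]

lemma mem_edg {H : Finset (Fin n)} :
    H ∈ edg f ↔ ∃ i ∈ lbl f, H ⊆ fib f i ∧ H.card = 3 := by
  simp [edg, Finset.mem_powersetCard]

lemma edg_card {H : Finset (Fin n)} (hH : H ∈ edg f) : H.card = 3 := by
  obtain ⟨i, _, _, h⟩ := (mem_edg f).mp hH
  exact h

lemma third_elt {i : ℕ} (hf : 3 ≤ (fib f i).card) (a b : Fin n) :
    ∃ c ∈ fib f i, c ≠ a ∧ c ≠ b := by
  have h2 : ({a, b} : Finset (Fin n)).card ≤ 2 := Finset.card_insert_le _ _ |>.trans (by simp)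
  have hsd := Finset.le_card_sdiff ({a, b} : Finset (Fin n)) (fib f i)
  have hpos : 0 < ((fib f i) \ {a, b}).card := by omega
  obtain ⟨c, hc⟩ := Finset.card_pos.mp hpos
  rw [Finset.mem_sdiff] at hc
  refine ⟨c, hc.1, ?_, ?_⟩ <;> · have := hc.2; simp at this; tauto

lemma tripl_mem_edg {i : ℕ} (hi : i ∈ lbl f) {a b c : Fin n}
    (ha : a ∈ fib f i) (hb : b ∈ fib f i) (hc : c ∈ fib f i)
    (hab : a ≠ b) (hac : a ≠ c) (hbc : b ≠ c) : ({a, b, c} : Finset (Fin n)) ∈ edg f := by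
  refine (mem_edg f).mpr ⟨i, hi, ?_, ?_⟩
  · intro x hx; simp at hx; rcases hx with h | h | h <;> subst h <;> assumption
  · rw [Finset.card_insert_of_notMem (by simp [hab, hac]),
      Finset.card_insert_of_notMem (by simp [hbc]), Finset.card_singleton]

lemma msis_iff (hf : ∀ i ∈ lbl f, 3 ≤ (fib f i).card) (S : Finset (Fin n)) :
    MaximalStronglyIndep (edg f) S ↔ ∀ i ∈ lbl f, (S ∩ fib f i).card = 1 := by
  constructor
  · rintro ⟨hSI, hmax⟩ i hi
    -- at most one
    have hle : (S ∩ fib f i).card ≤ 1 := by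
      by_contra h
      push_neg at h
      obtain ⟨a, ha, b, hb, hab⟩ := Finset.one_lt_card.mp h
      simp only [Finset.mem_inter] at ha hb
      obtain ⟨c, hc, hca, hcb⟩ := third_elt f (hf i hi) a b
      have hE := tripl_mem_edg f hi ha.2 hb.2 hc hab (Ne.symm hca) (Ne.symm hcb)
      have := hSI _ hE
      have h2 : ({a, b} : Finset (Fin n)) ⊆ {a, b, c} ∩ S := by
        intro x hx; simp at hx
        rcases hx with h | h <;> subst h <;> simp [ha.1, hb.1]
      have := Finset.card_le_card h2
      have : ({a, b} : Finset (Fin n)).card = 2 := by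
        rw [Finset.card_insert_of_notMem (by simp [hab]), Finset.card_singleton]
      omega
    -- at least one
    rcases Nat.eq_zero_or_pos (S ∩ fib f i).card with h0 | h1
    · exfalso
      have hempty : S ∩ fib f i = ∅ := Finset.card_eq_zero.mp h0
      obtain ⟨x₀, -, hx₀⟩ := Finset.mem_image.mp hi
      have hx₀f : x₀ ∈ fib f i := (mem_fib f).mpr hx₀
      have hT : StronglyIndep (edg f) (insert x₀ S) := by
        intro H hH
        obtain ⟨j, hj, hHj, hH3⟩ := (mem_edg f).mp hH
        by_cases hij : j = i
        · subst hij
          have : H ∩ insert x₀ S ⊆ {x₀} := by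
            intro y hy
            simp only [Finset.mem_inter, Finset.mem_insert] at hy
            rcases hy.2 with h | h
            · simp [h]
            · exfalso
              have : y ∈ S ∩ fib f j := Finset.mem_inter.mpr ⟨h, hHj hy.1⟩
              rw [hempty] at this; simp at this
          calc (H ∩ insert x₀ S).card ≤ ({x₀} : Finset (Fin n)).card :=
                Finset.card_le_card this
            _ = 1 := Finset.card_singleton _
        · have hx₀H : x₀ ∉ H := by
            intro hmem
            exact hij ((mem_fib f).mp (hHj hmem) ▸ hx₀.symm ▸ rfl)
          have : H ∩ insert x₀ S = H ∩ S := by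
            ext y; simp only [Finset.mem_inter, Finset.mem_insert]
            constructor
            · rintro ⟨hyH, h | h⟩
              · exact absurd (h ▸ hyH) hx₀H
              · exact ⟨hyH, h⟩
            · rintro ⟨hyH, hyS⟩; exact ⟨hyH, Or.inr hyS⟩
          rw [this]; exact hSI H hH
      have heq := hmax _ hT (Finset.subset_insert _ _)
      have : x₀ ∈ S := heq ▸ Finset.mem_insert_self x₀ S
      have : x₀ ∈ S ∩ fib f i := Finset.mem_inter.mpr ⟨this, hx₀f⟩
      rw [hempty] at this; simp at this
    · omega
  · intro h
    constructor
    · intro H hH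
      obtain ⟨i, hi, hHi, hH3⟩ := (mem_edg f).mp hH
      calc (H ∩ S).card ≤ (S ∩ fib f i).card := by
            apply Finset.card_le_card
            intro y hy
            simp only [Finset.mem_inter] at hy ⊢
            exact ⟨hy.2, hHi hy.1⟩
        _ = 1 := h i hi
    · intro T hT hST
      apply Finset.Subset.antisymm hST
      intro x hxT
      have hfx : f x ∈ lbl f := Finset.mem_image.mpr ⟨x, Finset.mem_univ x, rfl⟩
      obtain ⟨s, hs⟩ := Finset.card_eq_one.mp (h (f x) hfx)
      have hsS : s ∈ S := by
        have : s ∈ S ∩ fib f (f x) := hs ▸ Finset.mem_singleton_self s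
        exact (Finset.mem_inter.mp this).1
      have hsfib : s ∈ fib f (f x) := by
        have : s ∈ S ∩ fib f (f x) := hs ▸ Finset.mem_singleton_self s
        exact (Finset.mem_inter.mp this).2
      by_cases hxs : x = s
      · exact hxs ▸ hsS
      · exfalso
        obtain ⟨c, hc, hcx, hcs⟩ := third_elt f (hf (f x) hfx) x s
        have hE := tripl_mem_edg f hfx ((mem_fib f).mpr rfl) hsfib hc hxs
          (Ne.symm hcx) (Ne.symm hcs)
        have := hT _ hE
        have h2 : ({x, s} : Finset (Fin n)) ⊆ {x, s, c} ∩ T := by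
          intro y hy; simp at hy
          rcases hy with h | h <;> subst h <;> simp [hxT, hST hsS]
        have := Finset.card_le_card h2
        have : ({x, s} : Finset (Fin n)).card = 2 := by
          rw [Finset.card_insert_of_notMem (by simp [hxs]), Finset.card_singleton]
        omega

lemma trans_nonempty {S : Finset (Fin n)}
    (hS : ∀ i ∈ lbl f, (S ∩ fib f i).card = 1) {i : ℕ} (hi : i ∈ lbl f) :
    (S ∩ fib f i).Nonempty := by
  rw [← Finset.card_pos, hS i hi]; norm_num

lemma trans_inter {g : (i : ℕ) → i ∈ lbl f → Fin n}
    (hg : ∀ (i : ℕ) (hi : i ∈ lbl f), g i hi ∈ fib f i) {i : ℕ} (hi : i ∈ lbl f) :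
    ((lbl f).attach.image (fun j => g j.1 j.2)) ∩ fib f i = {g i hi} := by
  ext y
  simp only [Finset.mem_inter, Finset.mem_image, Finset.mem_attach, true_and,
    Finset.mem_singleton, Subtype.exists]
  constructor
  · rintro ⟨⟨j, hj, rfl⟩, hy⟩
    have h1 : g j hj ∈ fib f j := hg j hj
    have : j = i := by rw [mem_fib] at h1 hy; omega
    subst this; rfl
  · rintro rfl
    exact ⟨⟨i, hi, rfl⟩, hg i hi⟩

lemma count_transversals :
    (Finset.univ.filter (fun S : Finset (Fin n) => ∀ i ∈ lbl f, (S ∩ fib f i).card = 1)).card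
      = ∏ i ∈ lbl f, (fib f i).card := by
  rw [← Finset.card_pi]
  refine Finset.card_bij'
    (fun S hS => fun i hi =>
      (S ∩ fib f i).min' (trans_nonempty f ((Finset.mem_filter.mp hS).2) hi))
    (fun g _ => (lbl f).attach.image (fun i => g i.1 i.2)) ?_ ?_ ?_ ?_
  · intro S hS
    rw [Finset.mem_pi]
    intro i hi
    exact (Finset.mem_inter.mp (Finset.min'_mem (S ∩ fib f i) _)).2
  · intro g hg
    rw [Finset.mem_pi] at hg
    rw [Finset.mem_filter]
    refine ⟨Finset.mem_univ _, fun i hi => ?_⟩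
    rw [trans_inter f hg hi, Finset.card_singleton]
  · intro S hS
    rw [Finset.mem_filter] at hS
    ext x
    simp only [Finset.mem_image, Finset.mem_attach, true_and, Subtype.exists]
    constructor
    · rintro ⟨i, hi, rfl⟩
      exact (Finset.mem_inter.mp (Finset.min'_mem (S ∩ fib f i) _)).1
    · intro hx
      have hfx : f x ∈ lbl f := Finset.mem_image.mpr ⟨x, Finset.mem_univ x, rfl⟩
      refine ⟨f x, hfx, ?_⟩
      have h1 := Finset.min'_mem (S ∩ fib f (f x))
        (trans_nonempty f hS.2 hfx)
      have hx' : x ∈ S ∩ fib f (f x) := Finset.mem_inter.mpr ⟨hx, (mem_fib f).mpr rfl⟩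
      exact Finset.card_le_one.mp (le_of_eq (hS.2 (f x) hfx)) _ h1 _ hx'
  · intro g hg
    rw [Finset.mem_pi] at hg
    funext i hi
    have heq := trans_inter f hg hi
    simp only [heq]
    exact Finset.min'_singleton _

lemma main_count (hf : ∀ i ∈ lbl f, 3 ≤ (fib f i).card) :
    ∃ E : Finset (Finset (Fin n)), (∀ H ∈ E, H.card = 3) ∧
      {S : Finset (Fin n) | MaximalStronglyIndep E S}.ncard = ∏ i ∈ lbl f, (fib f i).card := by
  refine ⟨edg f, fun H hH => edg_card f hH, ?_⟩
  have hset : {S : Finset (Fin n) | MaximalStronglyIndep (edg f) S}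
      = ↑(Finset.univ.filter (fun S : Finset (Fin n) => ∀ i ∈ lbl f, (S ∩ fib f i).card = 1)) := by
    ext S
    simp only [Set.mem_setOf_eq, Finset.coe_filter, Finset.mem_univ, true_and, Set.mem_setOf_eq]
    exact msis_iff f hf S
  rw [hset, Set.ncard_coe_finset, count_transversals]

end Main

/-- labeling: first `b` blocks of size 4, then blocks of size 3 -/
def lab (b : ℕ) (m : ℕ) : ℕ := if m < 4*b then m/4 else b + (m - 4*b)/3

lemma card_filter_fin (n : ℕ) (p : ℕ → Prop) [DecidablePred p] :
    (Finset.univ.filter (fun x : Fin n => p x.val)).card = ((Finset.range n).filter p).card := by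
  apply Finset.card_bij (fun x _ => x.val)
  · intro x hx
    simp only [Finset.mem_filter, Finset.mem_univ, true_and] at hx
    simp [Finset.mem_filter, Finset.mem_range, x.isLt, hx]
  · intro x _ y _ h
    exact Fin.val_injective h
  · intro m hm
    simp only [Finset.mem_filter, Finset.mem_range] at hm
    exact ⟨⟨m, hm.1⟩, by simp [Finset.mem_filter, hm.2], rfl⟩

lemma filter_lab_lt {n b a : ℕ} (h : n = 4*b+3*a) {i : ℕ} (hi : i < b) :
    (Finset.range n).filter (fun m => lab b m = i) = Finset.Ico (4*i) (4*i+4) := by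
  ext m
  simp only [Finset.mem_filter, Finset.mem_range, Finset.mem_Ico]
  by_cases hm : m < 4*b <;> simp only [lab, hm, if_true, if_false] <;> omega

lemma filter_lab_ge {n b a : ℕ} (h : n = 4*b+3*a) {i : ℕ} (hb : b ≤ i) (hi : i < b + a) :
    (Finset.range n).filter (fun m => lab b m = i)
      = Finset.Ico (4*b+3*(i-b)) (4*b+3*(i-b)+3) := by
  ext m
  simp only [Finset.mem_filter, Finset.mem_range, Finset.mem_Ico]
  by_cases hm : m < 4*b <;> simp only [lab, hm, if_true, if_false] <;> omega

lemma lbl_lab {n b a : ℕ} (h : n = 4*b+3*a) :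
    lbl (fun x : Fin n => lab b x.val) = Finset.range (b + a) := by
  ext i
  simp only [lbl, Finset.mem_image, Finset.mem_univ, true_and, Finset.mem_range]
  constructor
  · rintro ⟨x, rfl⟩
    have := x.isLt
    simp only [lab]
    by_cases hm : (x : ℕ) < 4*b <;> simp only [hm, if_true, if_false] <;> omega
  · intro hi
    by_cases hib : i < b
    · refine ⟨⟨4*i, by omega⟩, ?_⟩
      simp only [lab]
      rw [if_pos (by omega)]
      omega
    · refine ⟨⟨4*b+3*(i-b), by omega⟩, ?_⟩
      simp only [lab]
      rw [if_neg (by omega)]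
      omega

lemma fib_card_lt {n b a : ℕ} (h : n = 4*b+3*a) {i : ℕ} (hi : i < b) :
    (fib (fun x : Fin n => lab b x.val) i).card = 4 := by
  show (Finset.univ.filter (fun x : Fin n => lab b x.val = i)).card = 4
  rw [card_filter_fin n (fun m => lab b m = i), filter_lab_lt h hi, Nat.card_Ico]
  omega

lemma fib_card_ge {n b a : ℕ} (h : n = 4*b+3*a) {i : ℕ} (hb : b ≤ i) (hi : i < b + a) :
    (fib (fun x : Fin n => lab b x.val) i).card = 3 := by
  show (Finset.univ.filter (fun x : Fin n => lab b x.val = i)).card = 3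
  rw [card_filter_fin n (fun m => lab b m = i), filter_lab_ge h hb hi, Nat.card_Ico]
  omega

theorem exists_msis_eq_g (n : ℕ) (hn : 6 ≤ n) :
    ∃ E : Finset (Finset (Fin n)), (∀ H ∈ E, H.card = 3) ∧
      {S : Finset (Fin n) | MaximalStronglyIndep E S}.ncard = gN n := by
  set b := n % 3 with hb
  set a := (n - 4*b)/3 with ha
  have h : n = 4*b+3*a := by omega
  set f : Fin n → ℕ := fun x => lab b x.val with hfdef
  have hf : ∀ i ∈ lbl f, 3 ≤ (fib f i).card := by
    intro i hi
    rw [lbl_lab h, Finset.mem_range] at hi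
    by_cases hib : i < b
    · rw [fib_card_lt h hib]; omega
    · rw [fib_card_ge h (by omega) hi]
  obtain ⟨E, hE3, hEcard⟩ := main_count f hf
  refine ⟨E, hE3, ?_⟩
  rw [hEcard, lbl_lab h]
  have hsplit : Finset.range (b + a) = Finset.Ico 0 b ∪ Finset.Ico b (b+a) := by
    rw [Finset.range_eq_Ico, Finset.Ico_union_Ico_eq_Ico (by omega) (by omega)]
  rw [hsplit, Finset.prod_union (by
    apply Finset.Ico_disjoint_Ico_consecutive)]
  have h1 : ∏ i ∈ Finset.Ico 0 b, (fib f i).card = 4 ^ b :=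
    calc ∏ i ∈ Finset.Ico 0 b, (fib f i).card
        = ∏ _i ∈ Finset.Ico 0 b, 4 :=
          Finset.prod_congr rfl (fun i hi => fib_card_lt h (Finset.mem_Ico.mp hi).2)
      _ = 4 ^ b := by rw [Finset.prod_const, Nat.card_Ico, Nat.sub_zero]
  have h2 : ∏ i ∈ Finset.Ico b (b+a), (fib f i).card = 3 ^ a :=
    calc ∏ i ∈ Finset.Ico b (b+a), (fib f i).card
        = ∏ _i ∈ Finset.Ico b (b+a), 3 :=
          Finset.prod_congr rfl (fun i hi =>
            fib_card_ge h (Finset.mem_Ico.mp hi).1 (Finset.mem_Ico.mp hi).2)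
      _ = 3 ^ a := by rw [Finset.prod_const, Nat.card_Ico, Nat.add_sub_cancel_left]
  rw [h1, h2]
  rcases (by omega : b = 0 ∨ b = 1 ∨ b = 2) with hb0 | hb0 | hb0
  · have hgn : gN n = 3 ^ (n / 3) := by unfold gN; rw [if_pos (by omega)]
    have ha' : a = n / 3 := by omega
    rw [hgn, hb0, ha']
    simp
  · have hgn : gN n = 4 * 3 ^ ((n - 4) / 3) := by
      unfold gN; rw [if_neg (by omega), if_pos (by omega)]
    have ha' : a = (n - 4) / 3 := by omega
    rw [hgn, hb0, ha']
    norm_num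
  · have hgn : gN n = 16 * 3 ^ ((n - 8) / 3) := by
      unfold gN; rw [if_neg (by omega), if_neg (by omega)]
    have ha' : a = (n - 8) / 3 := by omega
    rw [hgn, hb0, ha']
    norm_num
end

section
/- For every integer n ≥ 2, the maximum, over all simple graphs G on n vertices, of the number of maximal independent sets of G equals 3^{n/3} if n ≡ 0 (mod 3), equals 4·3^{⌊n/3⌋ − 1} if n ≡ 1 (mod 3), and equals 2·3^{⌊n/3⌋} if n ≡ 2 (mod 3). -/
def MM (n : ℕ) : ℕ :=
  if n % 3 = 0 then 3 ^ (n / 3)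
  else if n % 3 = 1 then 4 * 3 ^ (n / 3 - 1)
  else 2 * 3 ^ (n / 3)

/-- `S` is an independent set of the simple graph `G`. -/
def IsIndep {n : ℕ} (G : SimpleGraph (Fin n)) (S : Finset (Fin n)) : Prop :=
  ∀ u ∈ S, ∀ v ∈ S, ¬ G.Adj u v

/-- `S` is a maximal independent set of `G`. -/
def IsMaxIndep {n : ℕ} (G : SimpleGraph (Fin n)) (S : Finset (Fin n)) : Prop :=
  IsIndep G S ∧ ∀ T : Finset (Fin n), IsIndep G T → S ⊆ T → S = T

/-- auxiliary bound function for the induction -/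
def gb (n : ℕ) : ℕ := if n ≤ 1 then 1 else MM n

lemma MM_0 (p : ℕ) : MM (3*p) = 3^p := by
  have h1 : (3*p) % 3 = 0 := by omega
  have h2 : (3*p) / 3 = p := by omega
  simp [MM, h1, h2]

lemma MM_1 (p : ℕ) : MM (3*p+4) = 4 * 3^p := by
  have h1 : (3*p+4) % 3 = 1 := by omega
  have h2 : (3*p+4) / 3 = p + 1 := by omega
  simp [MM, h1, h2]

lemma MM_2 (p : ℕ) : MM (3*p+2) = 2 * 3^p := by
  have h1 : (3*p+2) % 3 = 2 := by omega
  have h2 : (3*p+2) / 3 = p := by omega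
  simp [MM, h1, h2]

lemma gb_of_two_le {n : ℕ} (h : 2 ≤ n) : gb n = MM n := by simp [gb]; omega

lemma gb_0 (p : ℕ) (hp : 1 ≤ p) : gb (3*p) = 3^p := by
  rw [gb_of_two_le (by omega), MM_0]

lemma gb_1 (p : ℕ) : gb (3*p+4) = 4 * 3^p := by
  rw [gb_of_two_le (by omega), MM_1]

lemma gb_2 (p : ℕ) : gb (3*p+2) = 2 * 3^p := by
  rw [gb_of_two_le (by omega), MM_2]

lemma gb_mono : Monotone gb := by
  apply monotone_nat_of_le_succ
  intro n
  obtain ⟨k, r, hr, rfl⟩ : ∃ k r, r < 3 ∧ n = 3*k + r := ⟨n/3, n%3, by omega, by omega⟩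
  interval_cases r
  · simp only [add_zero]
    rcases Nat.eq_zero_or_pos k with rfl|hk
    · simp [gb]
    · obtain ⟨q, rfl⟩ : ∃ q, k = q + 1 := ⟨k-1, by omega⟩
      rw [gb_0 _ (by omega), show 3*(q+1)+1 = 3*q+4 by ring, gb_1, pow_succ]
      set t := 3^q; omega
  · rcases Nat.eq_zero_or_pos k with rfl|hk
    · show gb 1 ≤ gb 2
      rw [show (2:ℕ) = 3*0+2 by ring, gb_2]; simp [gb]
    · obtain ⟨q, rfl⟩ : ∃ q, k = q + 1 := ⟨k-1, by omega⟩
      rw [show 3*(q+1)+1 = 3*q+4 by ring, gb_1, show 3*q+4+1 = 3*(q+1)+2 by ring, gb_2, pow_succ]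
      set t := 3^q; omega
  · rw [gb_2, show 3*k+2+1 = 3*(k+1) by ring, gb_0 _ (by omega), pow_succ]
    set t := 3^k; omega

/-- canonical form of numbers ≥ 2 -/
lemma form_of_two_le {a : ℕ} (h : 2 ≤ a) :
    (∃ p, a = 3*(p+1)) ∨ (∃ p, a = 3*p+4) ∨ (∃ p, a = 3*p+2) := by
  have h3 : a % 3 = 0 ∨ a % 3 = 1 ∨ a % 3 = 2 := by omega
  rcases h3 with h0|h1|h2
  · exact Or.inl ⟨a/3 - 1, by omega⟩
  · exact Or.inr (Or.inl ⟨a/3 - 1, by omega⟩)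
  · exact Or.inr (Or.inr ⟨a/3, by omega⟩)

lemma gb_0' (p : ℕ) : gb (3*(p+1)) = 3^(p+1) := gb_0 _ (by omega)

lemma gb_superadd (a b : ℕ) : gb a * gb b ≤ gb (a + b) := by
  rcases le_or_gt a 1 with ha|ha
  · have : gb a = 1 := by simp [gb, ha]
    rw [this, one_mul]; exact gb_mono (by omega)
  rcases le_or_gt b 1 with hb|hb
  · have : gb b = 1 := by simp [gb, hb]
    rw [this, mul_one]; exact gb_mono (by omega)
  rcases form_of_two_le ha with ⟨p, rfl⟩|⟨p, rfl⟩|⟨p, rfl⟩ <;>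
    rcases form_of_two_le hb with ⟨q, rfl⟩|⟨q, rfl⟩|⟨q, rfl⟩
  · rw [gb_0', gb_0', show 3*(p+1)+3*(q+1) = 3*((p+q+1)+1) by ring, gb_0', ← pow_add]
    apply Nat.pow_le_pow_right (by norm_num); omega
  · rw [gb_0', gb_1, show 3*(p+1)+(3*q+4) = 3*(p+q+1)+4 by ring, gb_1]
    rw [show 3^(p+1) * (4*3^q) = 4*3^(p+1+q) by rw [pow_add]; ring, show p+q+1 = p+1+q by ring]
  · rw [gb_0', gb_2, show 3*(p+1)+(3*q+2) = 3*(p+q+1)+2 by ring, gb_2]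
    rw [show 3^(p+1) * (2*3^q) = 2*3^(p+1+q) by rw [pow_add]; ring, show p+q+1 = p+1+q by ring]
  · rw [gb_1, gb_0', show 3*p+4+3*(q+1) = 3*(p+q+1)+4 by ring, gb_1]
    exact Nat.le_of_eq (by rw [show p+q+1 = p+(q+1) by ring, pow_add]; ring)
  · rw [gb_1, gb_1, show (3*p+4)+(3*q+4) = 3*(p+q+2)+2 by ring, gb_2]
    rw [show 3^(p+q+2) = 3^p*3^q*9 by rw [pow_add, pow_add]; ring,
        show (4*3^p)*(4*3^q) = (3^p*3^q)*16 by ring]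
    set t := 3^p*3^q; omega
  · rw [gb_1, gb_2, show (3*p+4)+(3*q+2) = 3*((p+q+1)+1) by ring, gb_0']
    rw [show 3^(p+q+1+1) = 3^p*3^q*9 by rw [pow_add, pow_add]; ring,
        show (4*3^p)*(2*3^q) = (3^p*3^q)*8 by ring]
    set t := 3^p*3^q; omega
  · rw [gb_2, gb_0', show (3*p+2)+3*(q+1) = 3*(p+q+1)+2 by ring, gb_2]
    rw [show 3^(p+q+1) = 3^p*3^(q+1) by rw [pow_add]; ring,
        show (2*3^p)*3^(q+1) = 2*(3^p*3^(q+1)) by ring]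
  · rw [gb_2, gb_1, show (3*p+2)+(3*q+4) = 3*((p+q+1))+3*1 by ring,
        show 3*(p+q+1)+3*1 = 3*((p+q+1)+1) by ring, gb_0']
    rw [show 3^(p+q+1+1) = 3^p*3^q*9 by rw [pow_add, pow_add]; ring,
        show (2*3^p)*(4*3^q) = (3^p*3^q)*8 by ring]
    set t := 3^p*3^q; omega
  · rw [gb_2, gb_2, show (3*p+2)+(3*q+2) = 3*(p+q)+4 by ring, gb_1]
    rw [show 3^(p+q) = 3^p*3^q by rw [pow_add],
        show (2*3^p)*(2*3^q) = (3^p*3^q)*4 by ring]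
    omega

lemma aux_le (c p : ℕ) (hc : 2 ≤ c) : 3*p + c ≤ c * 3^p := by
  induction p with
  | zero => simp
  | succ p ih =>
    have h1 : 1 ≤ 3^p := Nat.one_le_pow _ _ (by norm_num)
    rw [pow_succ]
    nlinarith

lemma le_gb (m : ℕ) : m ≤ gb m := by
  rcases le_or_gt m 1 with hm|hm
  · have h1 : gb m = 1 := by simp [gb, hm]
    omega
  rcases form_of_two_le hm with ⟨p, rfl⟩|⟨p, rfl⟩|⟨p, rfl⟩
  · rw [gb_0']
    have := aux_le 3 p (by norm_num)
    calc 3*(p+1) = 3*p+3 := by ring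
      _ ≤ 3*3^p := this
      _ = 3^(p+1) := by rw [pow_succ]; ring
  · rw [gb_1]; exact aux_le 4 p (by norm_num)
  · rw [gb_2]; exact aux_le 2 p (by norm_num)

lemma gb_rec {n d : ℕ} (h : d < n) : (d+1) * gb (n-d-1) ≤ gb n := by
  calc (d+1) * gb (n-d-1) ≤ gb (d+1) * gb (n-d-1) :=
        Nat.mul_le_mul_right _ (le_gb _)
    _ ≤ gb ((d+1) + (n-d-1)) := gb_superadd _ _
    _ = gb n := by congr 1; omega

def IndepG {V : Type} (G : SimpleGraph V) (S : Finset V) : Prop :=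
  ∀ u ∈ S, ∀ v ∈ S, ¬ G.Adj u v

def MaxIndepG {V : Type} (G : SimpleGraph V) (S : Finset V) : Prop :=
  IndepG G S ∧ ∀ T : Finset V, IndepG G T → S ⊆ T → S = T

/-- Disjoint union of cliques, given by a block function. -/
def clusterGraph {V : Type} [DecidableEq V] {m : ℕ} (b : V → Fin m) : SimpleGraph V where
  Adj x y := x ≠ y ∧ b x = b y
  symm := by constructor; intro x y ⟨h1, h2⟩; exact ⟨h1.symm, h2.symm⟩
  loopless := by constructor; intro x ⟨h1, _⟩; exact h1 rfl

theorem cluster_count {V : Type} [Fintype V] [DecidableEq V] {m : ℕ} (b : V → Fin m)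
    (hsurj : ∀ j, ∃ x, b x = j) :
    {S : Finset V | MaxIndepG (clusterGraph b) S}.ncard
      = ∏ j : Fin m, Nat.card {x // b x = j} := by
  classical
  set f : (∀ j : Fin m, {x // b x = j}) → Finset V :=
    fun c => Finset.univ.image (fun j => (c j).1) with hf
  have mem_f : ∀ c x, x ∈ f c ↔ (c (b x)).1 = x := by
    intro c x
    simp only [hf, Finset.mem_image, Finset.mem_univ, true_and]
    constructor
    · rintro ⟨j, rfl⟩
      rw [(c j).2]
    · intro h
      exact ⟨b x, h⟩
  have hA : ∀ c, MaxIndepG (clusterGraph b) (f c) := by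
    intro c
    constructor
    · intro x hx y hy hadj
      rw [mem_f] at hx hy
      obtain ⟨hne, hb⟩ := hadj
      rw [← hx, ← hy, hb] at hne
      exact hne rfl
    · intro T hT hsubT
      apply Finset.Subset.antisymm hsubT
      intro x hxT
      have hy : (c (b x)).1 ∈ T := hsubT ((mem_f c _).mpr (by rw [(c (b x)).2]))
      rcases eq_or_ne x (c (b x)).1 with heq|hne
      · rw [mem_f]; exact heq.symm
      · have hadj : (clusterGraph b).Adj x (c (b x)).1 := ⟨hne, by rw [(c (b x)).2]⟩
        exact (hT x hxT _ hy hadj).elim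
  have hrange : {S : Finset V | MaxIndepG (clusterGraph b) S} = Set.range f := by
    ext S
    simp only [Set.mem_setOf_eq, Set.mem_range]
    constructor
    · intro hS
      have hex : ∀ j, ∃ x, x ∈ S ∧ b x = j := by
        intro j
        by_contra hcon
        push_neg at hcon
        obtain ⟨x0, hx0⟩ := hsurj j
        have hind : IndepG (clusterGraph b) (insert x0 S) := by
          intro a ha b' hb' hadj
          obtain ⟨hne, hbeq⟩ := hadj
          rcases Finset.mem_insert.mp ha with rfl|ha' <;>
            rcases Finset.mem_insert.mp hb' with rfl|hb''
          · exact hne rfl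
          · exact hcon b' hb'' (by rw [← hbeq, hx0])
          · exact hcon a ha' (by rw [hbeq, hx0])
          · exact hS.1 a ha' b' hb'' ⟨hne, hbeq⟩
        have := hS.2 _ hind (Finset.subset_insert _ _)
        exact hcon x0 (this ▸ Finset.mem_insert_self x0 S) hx0
      set c : ∀ j : Fin m, {x // b x = j} := fun j => ⟨(hex j).choose, (hex j).choose_spec.2⟩
        with hc
      refine ⟨c, ?_⟩
      apply Finset.Subset.antisymm
      · intro x hx
        rw [mem_f] at hx
        rw [← hx]
        exact (hex (b x)).choose_spec.1
      · intro x hx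
        rw [mem_f]
        have h1 : (c (b x)).1 ∈ S := (hex (b x)).choose_spec.1
        have h2 : b (c (b x)).1 = b x := (c (b x)).2
        rcases eq_or_ne (c (b x)).1 x with heq|hne
        · exact heq
        · have hadj : (clusterGraph b).Adj (c (b x)).1 x := ⟨hne, h2⟩
          exact (hS.1 _ h1 x hx hadj).elim
    · rintro ⟨c, rfl⟩
      exact hA c
  rw [hrange, ← Set.image_univ]
  have hinj : Function.Injective f := by
    intro c c' heq
    funext j
    have h1 : (c j).1 ∈ f c' := by
      rw [← heq, mem_f, (c j).2]
    rw [mem_f, (c j).2] at h1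
    exact Subtype.ext h1.symm
  rw [Set.ncard_image_of_injective _ hinj, Set.ncard_univ, Nat.card_pi]

theorem mis_bound (n : ℕ) : ∀ (V : Type) [Fintype V] [DecidableEq V] (G : SimpleGraph V),
    Fintype.card V = n → {S : Finset V | MaxIndepG G S}.ncard ≤ gb n := by
  induction n using Nat.strong_induction_on with
  | _ n IH =>
    intro V _ _ G hcard
    classical
    set F : Finset (Finset V) := Finset.univ.filter (fun S => MaxIndepG G S) with hF
    have hncard : {S : Finset V | MaxIndepG G S}.ncard = F.card := by
      rw [← Set.ncard_coe_finset]
      congr 1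
      ext S
      simp [hF]
    rw [hncard]
    rcases Nat.eq_zero_or_pos n with rfl|hn
    · haveI : IsEmpty V := Fintype.card_eq_zero_iff.mp hcard
      have hsub : F ⊆ {∅} := by
        intro S _
        simp only [Finset.mem_singleton]
        exact Finset.eq_empty_of_isEmpty S
      calc F.card ≤ ({∅} : Finset (Finset V)).card := Finset.card_le_card hsub
        _ = 1 := Finset.card_singleton _
        _ ≤ gb 0 := le_refl _
    · -- pick a vertex of minimum degree
      haveI : Nonempty V := Fintype.card_pos_iff.mp (hcard ▸ hn)
      obtain ⟨v, -, hv⟩ := Finset.exists_min_image (Finset.univ : Finset V)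
        (fun x => G.degree x) ⟨Classical.arbitrary V, Finset.mem_univ _⟩
      set d := G.degree v with hd
      set N : Finset V := insert v (G.neighborFinset v) with hN
      have hvN : ∀ x ∈ N, x = v ∨ G.Adj v x := by
        intro x hx
        rcases Finset.mem_insert.mp hx with h|h
        · exact Or.inl h
        · exact Or.inr ((SimpleGraph.mem_neighborFinset _ _ _).mp h)
      have hNcard : N.card = d + 1 := by
        rw [hN, Finset.card_insert_of_notMem (by simp), SimpleGraph.card_neighborFinset_eq_degree]
      -- every maximal independent set meets N
      have hmeet : ∀ S ∈ F, ∃ u ∈ N, u ∈ S := by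
        intro S hS
        simp only [hF, Finset.mem_filter] at hS
        obtain ⟨-, hSm⟩ := hS
        by_contra hcon
        push_neg at hcon
        have hind : IndepG G (insert v S) := by
          intro a ha b hb hadj
          rcases Finset.mem_insert.mp ha with rfl|ha' <;>
            rcases Finset.mem_insert.mp hb with rfl|hb'
          · exact G.irrefl hadj
          · exact hcon b (Finset.mem_insert_of_mem ((SimpleGraph.mem_neighborFinset _ _ _).mpr hadj)) hb'
          · exact hcon a (Finset.mem_insert_of_mem ((SimpleGraph.mem_neighborFinset _ _ _).mpr hadj.symm)) ha'
          · exact hSm.1 a ha' b hb' hadj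
        have := hSm.2 (insert v S) hind (Finset.subset_insert _ _)
        exact hcon v (Finset.mem_insert_self _ _) (this ▸ Finset.mem_insert_self v S)
      have hsub : F ⊆ N.biUnion (fun u =>
          Finset.univ.filter (fun S => MaxIndepG G S ∧ u ∈ S)) := by
        intro S hS
        obtain ⟨u, huN, huS⟩ := hmeet S hS
        apply Finset.mem_biUnion.mpr ⟨u, huN, _⟩
        simp only [Finset.mem_filter, Finset.mem_univ, true_and]
        exact ⟨(Finset.mem_filter.mp hS).2, huS⟩
      -- per-vertex bound
      have hper : ∀ u ∈ N, (Finset.univ.filter (fun S => MaxIndepG G S ∧ u ∈ S)).card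
          ≤ gb (n - d - 1) := by
        intro u huN
        set s : Set V := {x | x ≠ u ∧ ¬ G.Adj u x} with hs
        haveI : Fintype s := Fintype.ofFinite _
        set H : SimpleGraph s := G.induce s with hH
        -- card of s
        have hscard : Fintype.card s = n - G.degree u - 1 := by
          have h2 : s.toFinset = Finset.univ \ insert u (G.neighborFinset u) := by
            ext x
            simp only [Set.mem_toFinset, hs, Set.mem_setOf_eq, Finset.mem_sdiff,
              Finset.mem_univ, true_and, Finset.mem_insert, SimpleGraph.mem_neighborFinset]
            tauto
          rw [← Set.toFinset_card, h2, Finset.card_sdiff_of_subset (Finset.subset_univ _),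
            Finset.card_insert_of_notMem (by simp),
            SimpleGraph.card_neighborFinset_eq_degree, Finset.card_univ, hcard]
          omega
        have hslt : Fintype.card s < n := by
          rw [hscard]
          have : 0 < n := hn
          omega
        -- the injection
        have hinj : (Finset.univ.filter (fun S => MaxIndepG G S ∧ u ∈ S)).card
            ≤ (Finset.univ.filter (fun T : Finset s => MaxIndepG H T)).card := by
          apply Finset.card_le_card_of_injOn (fun S => (S.erase u).subtype (· ∈ s))
          · -- maps to
            intro S hS
            simp only [Finset.mem_coe, Finset.mem_filter, Finset.mem_univ, true_and] at hS ⊢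
            obtain ⟨⟨hSi, hSm⟩, huS⟩ := hS
            have hmem : ∀ a, a ∈ S.erase u → a ∈ s := by
              intro a ha
              obtain ⟨hne, haS⟩ := Finset.mem_erase.mp ha
              exact ⟨hne, fun hadj => hSi u huS a haS hadj⟩
            constructor
            · intro a ha b hb hadj
              rw [Finset.mem_subtype] at ha hb
              exact hSi a (Finset.mem_erase.mp ha).2 b (Finset.mem_erase.mp hb).2 hadj
            · intro T hT hsubT
              set T' : Finset V := insert u (T.map (Function.Embedding.subtype _)) with hT'
              have hsubST' : S ⊆ T' := by
                intro a haS
                rcases eq_or_ne a u with rfl|hne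
                · exact Finset.mem_insert_self _ _
                · have ha' : a ∈ S.erase u := Finset.mem_erase.mpr ⟨hne, haS⟩
                  have : (⟨a, hmem a ha'⟩ : s) ∈ (S.erase u).subtype (· ∈ s) := by
                    rw [Finset.mem_subtype]; exact ha'
                  apply Finset.mem_insert_of_mem
                  rw [Finset.mem_map]
                  exact ⟨⟨a, hmem a ha'⟩, hsubT this, rfl⟩
              have hT'ind : IndepG G T' := by
                intro a ha b hb hadj
                rcases Finset.mem_insert.mp ha with rfl|ha' <;>
                  rcases Finset.mem_insert.mp hb with rfl|hb'
                · exact G.irrefl hadj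
                · obtain ⟨b', hb'T, rfl⟩ := Finset.mem_map.mp hb'
                  exact b'.2.2 hadj
                · obtain ⟨a', ha'T, rfl⟩ := Finset.mem_map.mp ha'
                  exact a'.2.2 hadj.symm
                · obtain ⟨a', ha'T, rfl⟩ := Finset.mem_map.mp ha'
                  obtain ⟨b', hb'T, rfl⟩ := Finset.mem_map.mp hb'
                  exact hT a' ha'T b' hb'T hadj
              have hST' : S = T' := hSm T' hT'ind hsubST'
              apply Finset.Subset.antisymm hsubT
              intro x hxT
              rw [Finset.mem_subtype, Finset.mem_erase]
              refine ⟨x.2.1, ?_⟩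
              have : (x : V) ∈ T' := by
                apply Finset.mem_insert_of_mem
                rw [Finset.mem_map]
                exact ⟨x, hxT, rfl⟩
              rwa [← hST'] at this
          · -- injective
            intro S1 h1 S2 h2 heq
            simp only [Finset.mem_coe, Finset.mem_filter, Finset.mem_univ, true_and] at h1 h2
            have key : ∀ (S : Finset V), MaxIndepG G S → u ∈ S →
                S = insert u (((S.erase u).subtype (· ∈ s)).map (Function.Embedding.subtype _)) := by
              intro S hS huS
              rw [Finset.subtype_map_of_mem, Finset.insert_erase huS]
              intro a ha
              obtain ⟨hne, haS⟩ := Finset.mem_erase.mp ha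
              exact ⟨hne, fun hadj => hS.1 u huS a haS hadj⟩
            dsimp only at heq
            rw [key S1 h1.1 h1.2, key S2 h2.1 h2.2, heq]
        -- apply IH
        have hIH := IH (Fintype.card s) hslt s H rfl
        have hset : {T : Finset s | MaxIndepG H T}.ncard
            = (Finset.univ.filter (fun T : Finset s => MaxIndepG H T)).card := by
          rw [← Set.ncard_coe_finset]
          congr 1
          ext T
          simp
        rw [hset] at hIH
        calc (Finset.univ.filter (fun S => MaxIndepG G S ∧ u ∈ S)).card
            ≤ _ := hinj
          _ ≤ gb (Fintype.card s) := hIH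
          _ ≤ gb (n - d - 1) := by
              apply gb_mono
              have : d ≤ G.degree u := hv u (Finset.mem_univ u)
              omega
      -- combine
      have hdlt : d < n := by
        rw [hd, ← hcard]
        exact G.degree_lt_card_verts v
      calc F.card ≤ (N.biUnion (fun u =>
            Finset.univ.filter (fun S => MaxIndepG G S ∧ u ∈ S))).card :=
            Finset.card_le_card hsub
        _ ≤ ∑ u ∈ N, (Finset.univ.filter (fun S => MaxIndepG G S ∧ u ∈ S)).card :=
            Finset.card_biUnion_le
        _ ≤ ∑ _u ∈ N, gb (n - d - 1) := Finset.sum_le_sum hper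
        _ = (d + 1) * gb (n - d - 1) := by rw [Finset.sum_const, hNcard, smul_eq_mul]
        _ ≤ gb n := gb_rec hdlt


lemma fiber_card_eq {n m : ℕ} (b : Fin n → Fin m) (j : Fin m) (l u : ℕ)
    (h : ∀ x : Fin n, b x = j ↔ (l ≤ x.1 ∧ x.1 < u)) (hu : u ≤ n) :
    Nat.card {x : Fin n // b x = j} = u - l := by
  classical
  rw [Nat.card_eq_fintype_card, Fintype.card_subtype, ← Nat.card_Ico l u]
  apply Finset.card_bij (fun (x : Fin n) _ => x.1)
  · intro x hx
    rw [Finset.mem_filter] at hx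
    rw [Finset.mem_Ico]
    exact (h x).mp hx.2
  · intro x _ y _ hxy
    exact Fin.ext hxy
  · intro a ha
    rw [Finset.mem_Ico] at ha
    have han : a < n := lt_of_lt_of_le ha.2 hu
    refine ⟨⟨a, han⟩, ?_, rfl⟩
    rw [Finset.mem_filter]
    exact ⟨Finset.mem_univ _, (h _).mpr ha⟩

theorem moon_moser (n : ℕ) (hn : 2 ≤ n) :
    IsGreatest {m : ℕ | ∃ G : SimpleGraph (Fin n),
      {S : Finset (Fin n) | IsMaxIndep G S}.ncard = m} (MM n) := by
  have hIsMax : ∀ (G : SimpleGraph (Fin n)) (S : Finset (Fin n)),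
      IsMaxIndep G S ↔ MaxIndepG G S := fun G S => Iff.rfl
  constructor
  · -- membership: the cluster graph achieves the bound
    set t : ℕ := (n-2)/3 with ht
    set m : ℕ := t + 1 with hm
    set b : Fin n → Fin m := fun x => ⟨min (x.1/3) t, by omega⟩ with hb
    have hsurj : ∀ j : Fin m, ∃ x : Fin n, b x = j := by
      intro j
      have hj : j.1 ≤ t := by omega
      refine ⟨⟨3*j.1, by omega⟩, Fin.ext ?_⟩
      show min ((3*j.1)/3) t = j.1
      omega
    refine ⟨clusterGraph b, ?_⟩
    have hset : {S : Finset (Fin n) | IsMaxIndep (clusterGraph b) S}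
        = {S : Finset (Fin n) | MaxIndepG (clusterGraph b) S} := by
      ext S; exact hIsMax _ S
    rw [hset, cluster_count b hsurj]
    have hfib : ∀ j : Fin m, Nat.card {x : Fin n // b x = j}
        = if j.1 = t then n - 3*t else 3 := by
      intro j
      have hjlt : j.1 < m := j.isLt
      rcases eq_or_ne j.1 t with hj|hj
      · rw [if_pos hj]
        have h3t : 3*t ≤ n := by omega
        rw [show n - 3*t = n - 3*t - 0 by omega]
        apply fiber_card_eq b j (3*t) n _ (le_refl n) |>.trans (by omega)
        intro x
        rw [Fin.ext_iff]
        have hx := x.isLt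
        show min (x.1/3) t = j.1 ↔ _
        omega
      · rw [if_neg hj]
        have hjt : j.1 < t := by omega
        have hu : 3*j.1+3 ≤ n := by omega
        apply fiber_card_eq b j (3*j.1) (3*j.1+3) _ hu |>.trans (by omega)
        intro x
        rw [Fin.ext_iff]
        have hx := x.isLt
        show min (x.1/3) t = j.1 ↔ _
        omega
    rw [Finset.prod_congr rfl (fun j _ => hfib j)]
    -- compute the product
    have hprod : (∏ j : Fin m, if j.1 = t then n - 3*t else 3) = 3^t * (n - 3*t) := by
      rw [hm, Fin.prod_univ_castSucc]
      congr 1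
      · rw [Finset.prod_congr rfl (fun i _ => ?_), Finset.prod_const, Finset.card_univ,
          Fintype.card_fin]
        have hi := i.isLt
        simp only [Fin.coe_castSucc]
        exact if_neg (by omega)
      · simp [Fin.last]
    rw [hprod]
    -- identify with MM n
    have h3 : n % 3 = 0 ∨ n % 3 = 1 ∨ n % 3 = 2 := by omega
    rcases h3 with h|h|h
    · obtain ⟨k, hk1, hk2⟩ : ∃ k, n = 3*(k+1) ∧ t = k := ⟨n/3 - 1, by omega, by omega⟩
      rw [hk1, hk2, MM_0, show 3*(k+1) - 3*k = 3 by omega, pow_succ]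
    · obtain ⟨k, hk1, hk2⟩ : ∃ k, n = 3*k+4 ∧ t = k := ⟨n/3 - 1, by omega, by omega⟩
      rw [hk1, hk2, MM_1, show 3*k+4 - 3*k = 4 by omega, mul_comm]
    · obtain ⟨k, hk1, hk2⟩ : ∃ k, n = 3*k+2 ∧ t = k := ⟨n/3, by omega, by omega⟩
      rw [hk1, hk2, MM_2, show 3*k+2 - 3*k = 2 by omega, mul_comm]
  · -- upper bound
    rintro m' ⟨G, hG⟩
    rw [← hG]
    have hset : {S : Finset (Fin n) | IsMaxIndep G S}
        = {S : Finset (Fin n) | MaxIndepG G S} := by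
      ext S; exact hIsMax G S
    rw [hset]
    calc {S : Finset (Fin n) | MaxIndepG G S}.ncard ≤ gb n :=
          mis_bound n (Fin n) G (Fintype.card_fin n)
      _ = MM n := gb_of_two_le hn
end

section
/- For every integer n ≥ 2, the maximum number of {1}-transversals over all graphs on n vertices with no isolated vertices equals 2^{⌊n/2⌋}. -/
lemma pair_card_one {α : Type*} [DecidableEq α] {a b : α} (S : Finset α) (hab : a ≠ b) :
    (({a, b} : Finset α) ∩ S).card = 1 ↔ (a ∈ S ↔ b ∉ S) := by
  by_cases ha : a ∈ S <;> by_cases hb : b ∈ S <;>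
    simp [Finset.insert_inter_of_mem, Finset.insert_inter_of_notMem,
      Finset.singleton_inter_of_mem, Finset.singleton_inter_of_notMem,
      Finset.card_insert_of_notMem, ha, hb, hab]

lemma walk_flip {V : Type*} {G : SimpleGraph V} {S S' : Finset V}
    (h : ∀ u v, G.Adj u v → ((u ∈ S ↔ v ∉ S) ∧ (u ∈ S' ↔ v ∉ S'))) :
    ∀ {a b : V}, G.Walk a b → (a ∈ S ↔ a ∈ S') → (b ∈ S ↔ b ∈ S') := by
  intro a b w
  induction w with
  | nil => exact id
  | cons h' p ih => intro hab; exact ih (by have := h _ _ h'; tauto)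
def prN (n v : ℕ) : ℕ := if v % 2 = 1 then v - 1 else if v + 1 < n then v + 1 else v - 1

def memBN (n : ℕ) (b : ℕ → Bool) (v : ℕ) : Bool :=
  if v % 2 = 1 then !(b (v / 2)) else if v + 1 < n then b (v / 2) else b (v / 2 - 1)

lemma prN_lt {n v : ℕ} (hv : v < n) : prN n v < n := by unfold prN; split_ifs <;> omega

lemma prN_ne {n v : ℕ} (hn : 2 ≤ n) (hv : v < n) : prN n v ≠ v := by
  unfold prN; split_ifs <;> omega

def pFin {n : ℕ} (v : Fin n) : Fin n := ⟨prN n v.val, prN_lt v.isLt⟩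

lemma pFin_ne {n : ℕ} (hn : 2 ≤ n) (v : Fin n) : v ≠ pFin v := by
  intro h
  exact prN_ne hn v.isLt (congrArg Fin.val h).symm

lemma prN_odd (n v : ℕ) (h : v % 2 = 1) : prN n v = v - 1 := if_pos h
lemma prN_even_lt (n v : ℕ) (h : ¬ v % 2 = 1) (h2 : v + 1 < n) : prN n v = v + 1 := by
  unfold prN; rw [if_neg h, if_pos h2]
lemma prN_even_ge (n v : ℕ) (h : ¬ v % 2 = 1) (h2 : ¬ v + 1 < n) : prN n v = v - 1 := by
  unfold prN; rw [if_neg h, if_neg h2]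
lemma memBN_odd (n : ℕ) (b : ℕ → Bool) (v : ℕ) (h : v % 2 = 1) :
    memBN n b v = !(b (v / 2)) := if_pos h
lemma memBN_even_lt (n : ℕ) (b : ℕ → Bool) (v : ℕ) (h : ¬ v % 2 = 1) (h2 : v + 1 < n) :
    memBN n b v = b (v / 2) := by unfold memBN; rw [if_neg h, if_pos h2]
lemma memBN_even_ge (n : ℕ) (b : ℕ → Bool) (v : ℕ) (h : ¬ v % 2 = 1) (h2 : ¬ v + 1 < n) :
    memBN n b v = b (v / 2 - 1) := by unfold memBN; rw [if_neg h, if_neg h2]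

lemma memBN_flip (n : ℕ) (hn : 2 ≤ n) (b : ℕ → Bool) (v : ℕ) (hv : v < n) :
    (memBN n b v = true) ↔ ¬ (memBN n b (prN n v) = true) := by
  by_cases h1 : v % 2 = 1
  · rw [memBN_odd _ _ _ h1, prN_odd _ _ h1,
      memBN_even_lt _ _ _ (by omega) (by omega)]
    have hh : (v - 1) / 2 = v / 2 := by omega
    rw [hh]; cases b (v / 2) <;> simp
  · by_cases h2 : v + 1 < n
    · rw [memBN_even_lt _ _ _ h1 h2, prN_even_lt _ _ h1 h2,
        memBN_odd _ _ _ (by omega)]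
      have hh : (v + 1) / 2 = v / 2 := by omega
      rw [hh]; cases b (v / 2) <;> simp
    · rw [memBN_even_ge _ _ _ h1 h2, prN_even_ge _ _ h1 h2,
        memBN_odd _ _ _ (by omega)]
      have hh : (v - 1) / 2 = v / 2 - 1 := by omega
      rw [hh]; cases b (v / 2 - 1) <;> simp

-- memBN only looks at indices < n/2 (for v < n)
lemma memBN_congr (n : ℕ) (hn : 2 ≤ n) (b b' : ℕ → Bool)
    (hbb : ∀ k, k < n / 2 → b k = b' k) (v : ℕ) (hv : v < n) :
    memBN n b v = memBN n b' v := by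
  by_cases h1 : v % 2 = 1
  · rw [memBN_odd _ _ _ h1, memBN_odd _ _ _ h1, hbb _ (by omega)]
  · by_cases h2 : v + 1 < n
    · rw [memBN_even_lt _ _ _ h1 h2, memBN_even_lt _ _ _ h1 h2, hbb _ (by omega)]
    · rw [memBN_even_ge _ _ _ h1 h2, memBN_even_ge _ _ _ h1 h2, hbb _ (by omega)]

lemma surj_aux (n : ℕ) (hn : 2 ≤ n) (S : Finset (Fin n))
    (hX : ∀ v : Fin n, v ∈ S ↔ pFin v ∉ S) (v : Fin n) :
    (v ∈ S) ↔ memBN n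
      (fun k => if h : k < n / 2 then decide ((⟨2 * k, by omega⟩ : Fin n) ∈ S) else false)
      v.val = true := by
  set b : ℕ → Bool :=
    fun k => if h : k < n / 2 then decide ((⟨2 * k, by omega⟩ : Fin n) ∈ S) else false with hb
  have hv := v.isLt
  have hbev : ∀ (k : ℕ) (hk : k < n / 2), b k = true ↔ (⟨2 * k, by omega⟩ : Fin n) ∈ S := by
    intro k hk; rw [hb]; simp [hk]
  by_cases h1 : v.val % 2 = 1
  · rw [memBN_odd _ _ _ h1]
    have h2 : v.val / 2 < n / 2 := by omega
    have hfin : (⟨2 * (v.val / 2), by omega⟩ : Fin n) = pFin v := by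
      apply Fin.ext
      simp only [pFin, prN_odd _ _ h1]
      omega
    rw [hX v, ← hfin, ← hbev _ h2]
    cases b (v.val / 2) <;> simp
  · by_cases h2 : v.val + 1 < n
    · rw [memBN_even_lt _ _ _ h1 h2]
      have h3 : v.val / 2 < n / 2 := by omega
      have hfin : (⟨2 * (v.val / 2), by omega⟩ : Fin n) = v := by apply Fin.ext; simp; omega
      rw [hbev _ h3, hfin]
    · rw [memBN_even_ge _ _ _ h1 h2]
      have h3 : v.val / 2 - 1 < n / 2 := by omega
      have e1 : prN n v.val = v.val - 1 := prN_even_ge _ _ h1 h2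
      have e2 : prN n (v.val - 1) = v.val - 2 := (prN_odd _ _ (by omega)).trans (by omega)
      have hfin : (⟨2 * (v.val / 2 - 1), by omega⟩ : Fin n) = pFin (pFin v) := by
        apply Fin.ext
        simp only [pFin]
        rw [e1, e2]
        omega
      rw [hbev _ h3, hfin, hX v, hX (pFin v)]
      tauto

lemma upper_bd (n : ℕ) (hn : 2 ≤ n) (E : Finset (Finset (Fin n)))
    (h2 : ∀ e ∈ E, e.card = 2) (hcov : ∀ v : Fin n, ∃ e ∈ E, v ∈ e) :
    {S : Finset (Fin n) | ∀ e ∈ E, (e ∩ S).card = 1}.ncard ≤ 2 ^ (n / 2) := by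
  classical
  set T := {S : Finset (Fin n) | ∀ e ∈ E, (e ∩ S).card = 1} with hT
  set G : SimpleGraph (Fin n) :=
    { Adj := fun u v => u ≠ v ∧ ({u, v} : Finset (Fin n)) ∈ E
      symm := by
        constructor
        rintro u v ⟨h1, h2⟩
        exact ⟨h1.symm, by rwa [Finset.pair_comm]⟩
      loopless := ⟨fun v h => h.1 rfl⟩ } with hG
  have : Fintype G.ConnectedComponent := Fintype.ofFinite _
  have hflip : ∀ S ∈ T, ∀ u v : Fin n, G.Adj u v → (u ∈ S ↔ v ∉ S) := by
    rintro S hS u v ⟨huv, he⟩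
    exact (pair_card_one S huv).mp (hS _ he)
  set Φ : Finset (Fin n) → (G.ConnectedComponent → Bool) :=
    fun S c => decide (c.out ∈ S) with hΦdef
  have hinj : Set.InjOn Φ T := by
    intro S hS S' hS' hΦ
    ext v
    have h1 : ((G.connectedComponentMk v).out ∈ S) ↔ ((G.connectedComponentMk v).out ∈ S') := by
      have := congrFun hΦ (G.connectedComponentMk v)
      simpa [hΦdef] using this
    have hreach : G.Reachable ((G.connectedComponentMk v).out) v :=
      SimpleGraph.ConnectedComponent.exact (Quot.out_eq _)
    obtain ⟨w⟩ := hreach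
    exact walk_flip (fun u v huv => ⟨hflip S hS u v huv, hflip S' hS' u v huv⟩) w h1
  have hle1 : T.ncard ≤ (Set.univ : Set (G.ConnectedComponent → Bool)).ncard :=
    Set.ncard_le_ncard_of_injOn Φ (fun a _ => Set.mem_univ _) hinj Set.finite_univ
  have hcardcc : 2 * Fintype.card G.ConnectedComponent ≤ n := by
    have hsum : (Finset.univ : Finset (Fin n)).card =
        ∑ c ∈ Finset.univ, (Finset.univ.filter (fun v => G.connectedComponentMk v = c)).card :=
      Finset.card_eq_sum_card_fiberwise (fun v _ => Finset.mem_univ _)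
    have hfib : ∀ c : G.ConnectedComponent,
        2 ≤ (Finset.univ.filter (fun v => G.connectedComponentMk v = c)).card := by
      intro c
      obtain ⟨e, he, hve⟩ := hcov c.out
      obtain ⟨a, b, hab, rfl⟩ := Finset.card_eq_two.mp (h2 e he)
      have hmk : G.connectedComponentMk c.out = c := Quot.out_eq c
      -- find the partner
      obtain hva | hvb : c.out = a ∨ c.out = b := by simpa using hve
      · have hadj : G.Adj c.out b := ⟨by rw [hva]; exact hab, by rw [hva]; exact he⟩
        have hsub : ({c.out, b} : Finset (Fin n)) ⊆
            Finset.univ.filter (fun v => G.connectedComponentMk v = c) := by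
          intro x hx
          simp only [Finset.mem_insert, Finset.mem_singleton] at hx
          rcases hx with rfl | rfl
          · simp only [Finset.mem_filter, Finset.mem_univ, true_and]
            exact hmk
          · simp only [Finset.mem_filter, Finset.mem_univ, true_and]
            exact (SimpleGraph.ConnectedComponent.connectedComponentMk_eq_of_adj hadj.symm).trans hmk
        calc 2 = ({c.out, b} : Finset (Fin n)).card := (Finset.card_pair (by rw [hva]; exact hab)).symm
          _ ≤ _ := Finset.card_le_card hsub
      · have hadj : G.Adj c.out a := ⟨by rw [hvb]; exact hab.symm,
          by rw [hvb, Finset.pair_comm]; exact he⟩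
        have hsub : ({c.out, a} : Finset (Fin n)) ⊆
            Finset.univ.filter (fun v => G.connectedComponentMk v = c) := by
          intro x hx
          simp only [Finset.mem_insert, Finset.mem_singleton] at hx
          rcases hx with rfl | rfl
          · simp only [Finset.mem_filter, Finset.mem_univ, true_and]
            exact hmk
          · simp only [Finset.mem_filter, Finset.mem_univ, true_and]
            exact (SimpleGraph.ConnectedComponent.connectedComponentMk_eq_of_adj hadj.symm).trans hmk
        calc 2 = ({c.out, a} : Finset (Fin n)).card := (Finset.card_pair (by rw [hvb]; exact hab.symm)).symm
          _ ≤ _ := Finset.card_le_card hsub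
    calc 2 * Fintype.card G.ConnectedComponent
        = ∑ _c ∈ (Finset.univ : Finset G.ConnectedComponent), 2 := by
          simp [Finset.sum_const, mul_comm]
      _ ≤ ∑ c ∈ Finset.univ, (Finset.univ.filter (fun v => G.connectedComponentMk v = c)).card :=
          Finset.sum_le_sum (fun c _ => hfib c)
      _ = n := by rw [← hsum]; simp
  have huniv : (Set.univ : Set (G.ConnectedComponent → Bool)).ncard =
      2 ^ Fintype.card G.ConnectedComponent := by
    rw [Set.ncard_univ, Nat.card_eq_fintype_card]
    simp [Fintype.card_fun]
  calc T.ncard ≤ _ := hle1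
    _ = 2 ^ Fintype.card G.ConnectedComponent := huniv
    _ ≤ 2 ^ (n / 2) := Nat.pow_le_pow_right (by norm_num) (by omega)

theorem max_one_transversals (n : ℕ) (hn : 2 ≤ n) :
    IsGreatest {m : ℕ | ∃ E : Finset (Finset (Fin n)),
      (∀ e ∈ E, e.card = 2) ∧ (∀ v : Fin n, ∃ e ∈ E, v ∈ e) ∧
      {S : Finset (Fin n) | ∀ e ∈ E, (e ∩ S).card = 1}.ncard = m}
      (2 ^ (n / 2)) := by
  classical
  constructor
  · -- membership: the near-perfect matching achieves 2^(n/2)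
    refine ⟨Finset.image (fun v : Fin n => ({v, pFin v} : Finset (Fin n))) Finset.univ,
      ?_, ?_, ?_⟩
    · intro e he
      obtain ⟨v, -, rfl⟩ := Finset.mem_image.mp he
      exact Finset.card_pair (pFin_ne hn v)
    · intro v
      exact ⟨{v, pFin v}, Finset.mem_image_of_mem _ (Finset.mem_univ v),
        Finset.mem_insert_self _ _⟩
    · set m := n / 2 with hm
      have hmn : 2 * m ≤ n := by omega
      set F : (Fin m → Bool) → Finset (Fin n) := fun c =>
        Finset.univ.filter
          (fun v => memBN n (fun k => if h : k < m then c ⟨k, h⟩ else false) v.val = true)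
        with hF
      have hmemF : ∀ (c : Fin m → Bool) (v : Fin n),
          v ∈ F c ↔ memBN n (fun k => if h : k < m then c ⟨k, h⟩ else false) v.val = true := by
        intro c v; simp [hF]
      have hchar : ∀ S : Finset (Fin n),
          (∀ e ∈ Finset.image (fun v : Fin n => ({v, pFin v} : Finset (Fin n))) Finset.univ,
            (e ∩ S).card = 1) ↔ ∀ v : Fin n, (v ∈ S ↔ pFin v ∉ S) := by
        intro S
        constructor
        · intro h v
          exact (pair_card_one S (pFin_ne hn v)).mp
            (h _ (Finset.mem_image_of_mem _ (Finset.mem_univ v)))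
        · intro h e he
          obtain ⟨v, -, rfl⟩ := Finset.mem_image.mp he
          exact (pair_card_one S (pFin_ne hn v)).mpr (h v)
      have hset : {S : Finset (Fin n) |
            ∀ e ∈ Finset.image (fun v : Fin n => ({v, pFin v} : Finset (Fin n))) Finset.univ,
              (e ∩ S).card = 1} = F '' Set.univ := by
        ext S
        rw [Set.mem_setOf_eq, hchar S]
        constructor
        · intro hX
          refine ⟨fun i => decide ((⟨2 * i.val, by omega⟩ : Fin n) ∈ S), Set.mem_univ _, ?_⟩
          ext v
          simp only [hF, Finset.mem_filter, Finset.mem_univ, true_and]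
          exact (surj_aux n hn S hX v).symm
        · rintro ⟨c, -, rfl⟩
          intro v
          rw [hmemF, hmemF]
          exact memBN_flip n hn _ v.val v.isLt
      have hFinj : Function.Injective F := by
        intro c c' hcc
        funext i
        have h2i : 2 * i.val < n := by omega
        have hv := Finset.ext_iff.mp hcc (⟨2 * i.val, h2i⟩ : Fin n)
        rw [hmemF, hmemF] at hv
        have hval : ((⟨2 * i.val, h2i⟩ : Fin n) : ℕ) = 2 * i.val := rfl
        rw [hval, memBN_even_lt n _ _ (by omega) (by omega),
          memBN_even_lt n _ _ (by omega) (by omega)] at hv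
        have hdiv : 2 * i.val / 2 = i.val := by omega
        rw [hdiv, dif_pos i.isLt, dif_pos i.isLt] at hv
        have heta : (⟨i.val, i.isLt⟩ : Fin m) = i := rfl
        rw [heta] at hv
        cases hc : c i <;> cases hc' : c' i <;> simp_all
      rw [hset, Set.ncard_image_of_injective _ hFinj, Set.ncard_univ,
        Nat.card_eq_fintype_card, Fintype.card_fun]
      simp
  · -- upper bound
    rintro k ⟨E, h2, hcov, rfl⟩
    exact upper_bd n hn E h2 hcov
end

section
/- For every integer n ≥ 2, the maximum number of maximal {1}-transversals over all graphs on n vertices equals 2^{⌊n/2⌋}. -/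
def IsOneTransversal {n : ℕ} (E : Finset (Finset (Fin n))) (S : Finset (Fin n)) : Prop :=
  ∀ e ∈ E, (e ∩ S).card = 1

def IsMaxOneTransversal {n : ℕ} (E : Finset (Finset (Fin n))) (S : Finset (Fin n)) : Prop :=
  IsOneTransversal E S ∧
    ∀ T : Finset (Fin n), IsOneTransversal E T → S ⊆ T → S = T

lemma pair_iff {n : ℕ} {E : Finset (Finset (Fin n))} (hE : ∀ e ∈ E, e.card = 2)
    {S : Finset (Fin n)} (hS : IsOneTransversal E S) {u v : Fin n}
    (h : ({u, v} : Finset (Fin n)) ∈ E) : (u ∈ S ↔ v ∉ S) := by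
  have hc := hS _ h
  have h2 := hE _ h
  have hne : u ≠ v := by
    intro huv; subst huv; simp at h2
  constructor
  · intro hu hv
    have heq : ({u, v} : Finset (Fin n)) ∩ S = {u, v} := by
      apply Finset.inter_eq_left.mpr
      intro x hx
      rcases Finset.mem_insert.mp hx with rfl | hx
      · exact hu
      · rwa [Finset.mem_singleton.mp hx]
    rw [heq, h2] at hc
    omega
  · intro hv
    by_contra hu
    have heq : ({u, v} : Finset (Fin n)) ∩ S = ∅ := by
      ext x
      simp only [Finset.mem_inter, Finset.mem_insert, Finset.mem_singleton,
        Finset.notMem_empty, iff_false, not_and]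
      rintro (rfl | rfl) <;> assumption
    rw [heq] at hc
    simp at hc
  
lemma isolated_mem {n : ℕ} {E : Finset (Finset (Fin n))} {S : Finset (Fin n)}
    (hS : IsMaxOneTransversal E S) {v : Fin n} (hv : ∀ e ∈ E, v ∉ e) : v ∈ S := by
  have : S = insert v S := by
    apply hS.2
    · intro e he
      rw [show e ∩ insert v S = e ∩ S from Finset.inter_insert_of_notMem (hv e he)]
      exact hS.1 e he
    · exact Finset.subset_insert _ _
  rw [this]; exact Finset.mem_insert_self _ _

lemma agree {n : ℕ} {E : Finset (Finset (Fin n))} (hE : ∀ e ∈ E, e.card = 2)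
    {S T : Finset (Fin n)} (hS : IsOneTransversal E S) (hT : IsOneTransversal E T)
    {u v : Fin n}
    (h : Relation.ReflTransGen (fun x y => ({x, y} : Finset (Fin n)) ∈ E) u v)
    (huv : u ∈ S ↔ u ∈ T) : (v ∈ S ↔ v ∈ T) := by
  induction h with
  | refl => exact huv
  | tail _ hadj ih =>
    have h1 := pair_iff hE hS hadj
    have h2 := pair_iff hE hT hadj
    tauto


lemma upper_bound {n : ℕ} (E : Finset (Finset (Fin n))) (hE : ∀ e ∈ E, e.card = 2) :
    {S : Finset (Fin n) | IsMaxOneTransversal E S}.ncard ≤ 2 ^ (n / 2) := by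
  classical
  set adj : Fin n → Fin n → Prop := fun x y => ({x, y} : Finset (Fin n)) ∈ E with hadj
  have hsym : Symmetric adj := by
    intro x y h
    simpa [adj, Finset.pair_comm] using h
  set r : Fin n → Fin n → Prop := Relation.ReflTransGen adj with hr
  have hequiv : Equivalence r := ⟨fun _ => Relation.ReflTransGen.refl,
    fun h => by haveI : Std.Symm adj := ⟨hsym⟩; exact Std.Symm.symm _ _ h,
    fun h1 h2 => Relation.ReflTransGen.trans h1 h2⟩
  set s : Setoid (Fin n) := ⟨r, hequiv⟩ with hs
  set rep : Fin n → Fin n := fun v => (Quotient.mk s v).out with hrep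
  have hrspec : ∀ v, r v (rep v) := fun v => hequiv.symm (Quotient.mk_out (s := s) v)
  have hrconst : ∀ u v, r u v → rep u = rep v := by
    intro u v huv
    simp only [hrep]
    congr 1
    exact Quotient.sound huv
  have hridem : ∀ v, rep (rep v) = rep v :=
    fun v => (hrconst _ _ (hrspec v)).symm
  set Vp : Finset (Fin n) := Finset.univ.filter (fun v => ∃ e ∈ E, v ∈ e) with hVp
  have hmemVp : ∀ v : Fin n, v ∈ Vp ↔ ∃ e ∈ E, v ∈ e := by
    intro v; simp [hVp]
  -- reachability from a vertex stays in Vp (except possibly the start)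
  have hreach : ∀ u v : Fin n, r u v → v = u ∨ v ∈ Vp := by
    intro u v huv
    induction huv with
    | refl => left; rfl
    | tail _ hbc _ =>
      right
      exact (hmemVp _).mpr ⟨_, hbc, by simp⟩
  have hrepVp : ∀ v ∈ Vp, rep v ∈ Vp := by
    intro v hv
    rcases hreach v (rep v) (hrspec v) with h | h
    · rwa [h]
    · exact h
  set R : Finset (Fin n) := Vp.image rep with hR
  -- every element of R is its own rep and lies in Vp
  have hRfix : ∀ x ∈ R, rep x = x ∧ x ∈ Vp := by
    intro x hx
    rw [hR, Finset.mem_image] at hx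
    obtain ⟨v, hv, rfl⟩ := hx
    exact ⟨hridem v, hrepVp v hv⟩
  -- card bound : R.card ≤ n / 2
  have hcardR : R.card ≤ n / 2 := by
    set φ : Fin n → Finset (Fin n) := fun x => Vp.filter (fun w => rep w = x) with hφ
    have hdisj : ∀ x ∈ R, ∀ y ∈ R, x ≠ y → Disjoint (φ x) (φ y) := by
      intro x _ y _ hxy
      rw [Finset.disjoint_left]
      intro a ha hay
      simp only [hφ, Finset.mem_filter] at ha hay
      exact hxy (ha.2 ▸ hay.2 ▸ rfl)
    have hbig : ∀ x ∈ R, 2 ≤ (φ x).card := by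
      intro x hx
      obtain ⟨hfix, hxVp⟩ := hRfix x hx
      obtain ⟨e, he, hxe⟩ := (hmemVp x).mp hxVp
      obtain ⟨u, w, huw, hew⟩ := Finset.card_eq_two.mp (hE e he)
      -- get y ≠ x with e = {x, y}
      have : ∃ y, y ≠ x ∧ e = ({x, y} : Finset (Fin n)) := by
        subst hew
        rcases Finset.mem_insert.mp hxe with rfl | hxu
        · exact ⟨w, fun h => huw h.symm, rfl⟩
        · rw [Finset.mem_singleton] at hxu
          subst hxu
          exact ⟨u, fun h => huw h, Finset.pair_comm u x⟩
      obtain ⟨y, hyx, rfl⟩ := this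
      have hadjxy : adj x y := by rwa [hadj]
      have hyVp : y ∈ Vp := (hmemVp y).mpr ⟨_, he, by simp⟩
      have hrepy : rep y = x := by
        rw [← hrconst x y (Relation.ReflTransGen.single hadjxy), hfix]
      have hsub : ({x, y} : Finset (Fin n)) ⊆ φ x := by
        intro z hz
        rcases Finset.mem_insert.mp hz with rfl | hz
        · simp [hφ, hxVp, hfix]
        · rw [Finset.mem_singleton] at hz
          subst hz
          simp [hφ, hyVp, hrepy]
      calc 2 = ({x, y} : Finset (Fin n)).card := by rw [Finset.card_pair hyx.symm]
        _ ≤ (φ x).card := Finset.card_le_card hsub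
    have : 2 * R.card ≤ n := by
      calc 2 * R.card = ∑ _x ∈ R, 2 := by rw [Finset.sum_const, smul_eq_mul, mul_comm]
        _ ≤ ∑ x ∈ R, (φ x).card := Finset.sum_le_sum hbig
        _ = (R.biUnion φ).card := (Finset.card_biUnion hdisj).symm
        _ ≤ (Finset.univ : Finset (Fin n)).card := Finset.card_le_card (Finset.subset_univ _)
        _ = n := Finset.card_univ.trans (Fintype.card_fin n)
    omega
  -- injection into powerset of R
  have hinj : Set.InjOn (fun S : Finset (Fin n) => S ∩ R)
      {S : Finset (Fin n) | IsMaxOneTransversal E S} := by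
    intro S hS T hT hST
    simp only [Set.mem_setOf_eq] at hS hT
    ext v
    have key : v ∈ S ↔ v ∈ T := by
      by_cases hv : v ∈ Vp
      · have hrv : rep v ∈ R := Finset.mem_image_of_mem _ hv
        have hST' : S ∩ R = T ∩ R := hST
        have hrepiff : rep v ∈ S ↔ rep v ∈ T := by
          constructor
          · intro h
            have h2 : rep v ∈ S ∩ R := Finset.mem_inter.mpr ⟨h, hrv⟩
            rw [hST'] at h2
            exact (Finset.mem_inter.mp h2).1
          · intro h
            have h2 : rep v ∈ T ∩ R := Finset.mem_inter.mpr ⟨h, hrv⟩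
            rw [← hST'] at h2
            exact (Finset.mem_inter.mp h2).1
        exact agree hE (hS.1) (hT.1)
          (hequiv.symm (hrspec v)) hrepiff
      · have hv' : ∀ e ∈ E, v ∉ e := by
          intro e he hve
          exact hv ((hmemVp v).mpr ⟨e, he, hve⟩)
        exact ⟨fun _ => isolated_mem hT hv', fun _ => isolated_mem hS hv'⟩
    exact key
  calc {S : Finset (Fin n) | IsMaxOneTransversal E S}.ncard
      = ((fun S : Finset (Fin n) => S ∩ R) ''
          {S : Finset (Fin n) | IsMaxOneTransversal E S}).ncard :=
        (Set.ncard_image_of_injOn hinj).symm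
    _ ≤ (↑R.powerset : Set (Finset (Fin n))).ncard := by
        apply Set.ncard_le_ncard _ (Set.toFinite _)
        rintro x ⟨S, _, rfl⟩
        simp [Finset.mem_powerset]
    _ = R.powerset.card := Set.ncard_coe_finset _
    _ = 2 ^ R.card := Finset.card_powerset R
    _ ≤ 2 ^ (n / 2) := Nat.pow_le_pow_right (by norm_num) hcardR


lemma pair_card {α : Type*} [DecidableEq α] {u v : α} (h : u ≠ v) (S : Finset α) :
    (({u, v} : Finset α) ∩ S).card = 1 ↔ (u ∈ S ↔ v ∉ S) := by
  by_cases hu : u ∈ S <;> by_cases hv : v ∈ S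
  · have : ({u, v} : Finset α) ∩ S = {u, v} := by
      ext x; simp only [Finset.mem_inter, Finset.mem_insert, Finset.mem_singleton]
      constructor
      · exact fun h => h.1
      · rintro (rfl | rfl) <;> simp [hu, hv]
    rw [this, Finset.card_pair h]
    simp [hu, hv]
  · have : ({u, v} : Finset α) ∩ S = {u} := by
      ext x; simp only [Finset.mem_inter, Finset.mem_insert, Finset.mem_singleton]
      constructor
      · rintro ⟨rfl | rfl, hx⟩
        · rfl
        · exact absurd hx hv
      · rintro rfl; exact ⟨Or.inl rfl, hu⟩
    rw [this, Finset.card_singleton]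
    simp [hu, hv]
  · have : ({u, v} : Finset α) ∩ S = {v} := by
      ext x; simp only [Finset.mem_inter, Finset.mem_insert, Finset.mem_singleton]
      constructor
      · rintro ⟨rfl | rfl, hx⟩
        · exact absurd hx hu
        · rfl
      · rintro rfl; exact ⟨Or.inr rfl, hv⟩
    rw [this, Finset.card_singleton]
    simp [hu, hv]
  · have : ({u, v} : Finset α) ∩ S = ∅ := by
      ext x; simp only [Finset.mem_inter, Finset.mem_insert, Finset.mem_singleton,
        Finset.notMem_empty, iff_false, not_and]
      rintro (rfl | rfl) <;> assumption
    rw [this, Finset.card_empty]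
    simp [hu, hv]

open Fin.NatCast in
lemma construction {n : ℕ} (hn : 2 ≤ n) :
    ∃ E : Finset (Finset (Fin n)), (∀ e ∈ E, e.card = 2) ∧
      {S : Finset (Fin n) | IsMaxOneTransversal E S}.ncard = 2 ^ (n / 2) := by
  classical
  haveI : NeZero n := ⟨by omega⟩
  set m := n / 2 with hmdef
  have hm : 2 * m ≤ n := by omega
  set a : ℕ → Fin n := fun i => ((2 * i : ℕ) : Fin n) with ha
  set b : ℕ → Fin n := fun i => ((2 * i + 1 : ℕ) : Fin n) with hb
  have hav : ∀ i, i < m → (a i).val = 2 * i := by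
    intro i hi
    simp only [ha, Fin.val_natCast]
    exact Nat.mod_eq_of_lt (by omega)
  have hbv : ∀ i, i < m → (b i).val = 2 * i + 1 := by
    intro i hi
    simp only [hb, Fin.val_natCast]
    exact Nat.mod_eq_of_lt (by omega)
  have hab : ∀ i, i < m → a i ≠ b i := by
    intro i hi h
    have := congrArg Fin.val h
    rw [hav i hi, hbv i hi] at this
    omega
  set E : Finset (Finset (Fin n)) :=
    (Finset.range m).image (fun i => ({a i, b i} : Finset (Fin n))) with hEdef
  have hEmem : ∀ e, e ∈ E ↔ ∃ i < m, e = ({a i, b i} : Finset (Fin n)) := by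
    intro e
    simp only [hEdef, Finset.mem_image, Finset.mem_range]
    constructor
    · rintro ⟨i, hi, rfl⟩; exact ⟨i, hi, rfl⟩
    · rintro ⟨i, hi, rfl⟩; exact ⟨i, hi, rfl⟩
  have hE2 : ∀ e ∈ E, e.card = 2 := by
    intro e he
    obtain ⟨i, hi, rfl⟩ := (hEmem e).mp he
    exact Finset.card_pair (hab i hi)
  -- characterization of transversals
  have htr : ∀ S : Finset (Fin n),
      IsOneTransversal E S ↔ ∀ i < m, (a i ∈ S ↔ b i ∉ S) := by
    intro S
    constructor
    · intro hS i hi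
      exact (pair_card (hab i hi) S).mp (hS _ ((hEmem _).mpr ⟨i, hi, rfl⟩))
    · intro h e he
      obtain ⟨i, hi, rfl⟩ := (hEmem e).mp he
      exact (pair_card (hab i hi) S).mpr (h i hi)
  -- vertices with val ≥ 2m are in no edge
  have hfree : ∀ v : Fin n, 2 * m ≤ v.val → ∀ e ∈ E, v ∉ e := by
    intro v hv e he hve
    obtain ⟨i, hi, rfl⟩ := (hEmem e).mp he
    rcases Finset.mem_insert.mp hve with rfl | h
    · have := hav i hi; omega
    · rw [Finset.mem_singleton] at h
      subst h
      have := hbv i hi; omega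
  -- characterization of maximal transversals
  have hchar : ∀ S : Finset (Fin n), IsMaxOneTransversal E S ↔
      ((∀ i < m, (a i ∈ S ↔ b i ∉ S)) ∧ ∀ v : Fin n, 2 * m ≤ v.val → v ∈ S) := by
    intro S
    constructor
    · intro hS
      exact ⟨(htr S).mp hS.1, fun v hv => isolated_mem hS (hfree v hv)⟩
    · rintro ⟨h1, h2⟩
      refine ⟨(htr S).mpr h1, ?_⟩
      intro T hT hST
      apply Finset.Subset.antisymm hST
      intro v hv
      by_cases hv2 : 2 * m ≤ v.val
      · exact h2 v hv2
      · push_neg at hv2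
        set i := v.val / 2 with hi
        have him : i < m := by omega
        have hT' := (htr T).mp hT
        by_cases hpar : v.val % 2 = 0
        · -- v = a i
          have hva : v = a i := by
            apply Fin.ext
            rw [hav i him]
            omega
          by_contra hvS
          have hbS : b i ∈ S := by
            by_contra hbS
            exact hvS (hva ▸ (h1 i him).mpr hbS)
          exact ((hT' i him).mp (hva ▸ hv)) (hST hbS)
        · -- v = b i
          have hvb : v = b i := by
            apply Fin.ext
            rw [hbv i him]
            omega
          by_contra hvS
          have haS : a i ∈ S := by
            by_contra haS
            exact hvS (hvb ▸ (by_contra fun hb => haS ((h1 i him).mpr hb)))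
          exact ((hT' i him).mp (hST haS)) (hvb ▸ hv)
  -- the bijection with subsets of range m
  set g : Finset ℕ → Finset (Fin n) := fun A =>
    Finset.univ.filter (fun v : Fin n =>
      if v.val < 2 * m then ((v.val / 2 ∈ A) ↔ (v.val % 2 = 0)) else True) with hg
  have hgmem : ∀ (A : Finset ℕ) (v : Fin n), v ∈ g A ↔
      (if v.val < 2 * m then ((v.val / 2 ∈ A) ↔ (v.val % 2 = 0)) else True) := by
    intro A v
    simp [hg]
  have hga : ∀ (A : Finset ℕ) (i : ℕ), i < m → (a i ∈ g A ↔ i ∈ A) := by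
    intro A i hi
    rw [hgmem, hav i hi, if_pos (by omega)]
    have e1 : 2 * i / 2 = i := by omega
    have e2 : 2 * i % 2 = 0 := by omega
    rw [e1, e2]
    simp
  have hgb : ∀ (A : Finset ℕ) (i : ℕ), i < m → (b i ∈ g A ↔ i ∉ A) := by
    intro A i hi
    rw [hgmem, hbv i hi, if_pos (by omega)]
    have e1 : (2 * i + 1) / 2 = i := by omega
    have e2 : (2 * i + 1) % 2 = 1 := by omega
    rw [e1, e2]
    simp
  have hgmax : ∀ A : Finset ℕ, IsMaxOneTransversal E (g A) := by
    intro A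
    rw [hchar]
    constructor
    · intro i hi
      rw [hga A i hi, hgb A i hi]
      tauto
    · intro v hv
      rw [hgmem, if_neg (by omega)]
      trivial
  have hsurj : ∀ S : Finset (Fin n), IsMaxOneTransversal E S →
      g ((Finset.range m).filter (fun i => a i ∈ S)) = S := by
    intro S hS
    obtain ⟨h1, h2⟩ := (hchar S).mp hS
    ext v
    by_cases hv2 : v.val < 2 * m
    · set i := v.val / 2 with hi
      have him : i < m := by omega
      by_cases hpar : v.val % 2 = 0
      · have hva : v = a i := by
          apply Fin.ext
          rw [hav i him]
          omega
        rw [hva, hga _ i him, Finset.mem_filter, Finset.mem_range]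
        simp [him]
      · have hvb : v = b i := by
          apply Fin.ext
          rw [hbv i him]
          omega
        rw [hvb, hgb _ i him, Finset.mem_filter, Finset.mem_range]
        have := h1 i him
        tauto
    · rw [hgmem, if_neg hv2]
      simp [h2 v (by omega)]
  have hinj : Set.InjOn g ↑((Finset.range m).powerset) := by
    intro A hA B hB hAB
    rw [Finset.mem_coe, Finset.mem_powerset] at hA hB
    ext i
    by_cases him : i < m
    · rw [← hga A i him, ← hga B i him, hAB]
    · constructor
      · intro h; exact absurd (Finset.mem_range.mp (hA h)) him
      · intro h; exact absurd (Finset.mem_range.mp (hB h)) him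
  have hset : {S : Finset (Fin n) | IsMaxOneTransversal E S} =
      ↑(((Finset.range m).powerset).image g) := by
    ext S
    simp only [Set.mem_setOf_eq, Finset.coe_image, Set.mem_image, Finset.mem_coe,
      Finset.mem_powerset]
    constructor
    · intro hS
      exact ⟨(Finset.range m).filter (fun i => a i ∈ S), Finset.filter_subset _ _, hsurj S hS⟩
    · rintro ⟨A, _, rfl⟩
      exact hgmax A
  refine ⟨E, hE2, ?_⟩
  rw [hset, Set.ncard_coe_finset, Finset.card_image_of_injOn hinj,
    Finset.card_powerset, Finset.card_range]


theorem max_maximal_one_transversals (n : ℕ) (hn : 2 ≤ n) :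
    IsGreatest {m : ℕ | ∃ E : Finset (Finset (Fin n)),
      (∀ e ∈ E, e.card = 2) ∧
      {S : Finset (Fin n) | IsMaxOneTransversal E S}.ncard = m}
      (2 ^ (n / 2)) := by
  constructor
  · obtain ⟨E, h1, h2⟩ := construction hn
    exact ⟨E, h1, h2⟩
  · rintro k ⟨E, hE, rfl⟩
    exact upper_bound E hE
end

section
/- For every integer n ≥ 2, the maximum number of independent sets over all graphs on n vertices with no isolated vertices equals 1 + 2^{n−1}. -/
open Finset
open scoped symmDiff

namespace MaxIndepAux

variable {n : ℕ}

def indep (E : Finset (Finset (Fin n))) (S : Finset (Fin n)) : Prop :=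
  ∀ e ∈ E, (e ∩ S).card ≤ 1

instance (E : Finset (Finset (Fin n))) : DecidablePred (indep E) := fun _ =>
  Finset.decidableDforallFinset

lemma pair_not_both {S : Finset (Fin n)} {x y : Fin n} (hxy : x ≠ y)
    (h : (({x, y} : Finset (Fin n)) ∩ S).card ≤ 1) : ¬(x ∈ S ∧ y ∈ S) := by
  rintro ⟨hx, hy⟩
  have hsub : ({x, y} : Finset (Fin n)) ⊆ ({x, y} : Finset (Fin n)) ∩ S :=
    subset_inter Subset.rfl (insert_subset hx (singleton_subset_iff.mpr hy))
  have := card_le_card hsub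
  rw [card_pair hxy] at this
  omega

lemma indep_iff_not_subset {E : Finset (Finset (Fin n))} (h2 : ∀ e ∈ E, e.card = 2)
    {S : Finset (Fin n)} : indep E S ↔ ∀ e ∈ E, ¬ e ⊆ S := by
  constructor
  · intro h e he hsub
    have h1 := h e he
    rw [Finset.inter_eq_left.mpr hsub, h2 e he] at h1
    omega
  · intro h e he
    by_contra hc
    push_neg at hc
    have h1 : e.card ≤ (e ∩ S).card := by rw [h2 e he]; omega
    have h2' : e ∩ S = e := Finset.eq_of_subset_of_card_le (Finset.inter_subset_left) h1
    exact h e he (Finset.inter_eq_left.mp h2')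

lemma symm_dep {E : Finset (Finset (Fin n))} (h2 : ∀ e ∈ E, e.card = 2)
    (hcov : ∀ v : Fin n, ∃ e ∈ E, v ∈ e) {S T : Finset (Fin n)}
    (hS : indep E S) (hSc : indep E Sᶜ) (hT : indep E T) (hTc : indep E Tᶜ)
    (hne1 : T ≠ S) (hne2 : T ≠ Sᶜ) : ¬ indep E (S ∆ T) ∧ ¬ indep E (S ∆ T)ᶜ := by
  have inout : ∀ e ∈ E, e ⊆ S ∆ T ∨ e ⊆ (S ∆ T)ᶜ := by
    intro e he
    obtain ⟨x, y, hxy, rfl⟩ := Finset.card_eq_two.mp (h2 e he)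
    have hS1 := pair_not_both hxy (hS _ he)
    have hS2 := pair_not_both hxy (hSc _ he)
    have hT1 := pair_not_both hxy (hT _ he)
    have hT2 := pair_not_both hxy (hTc _ he)
    simp only [Finset.mem_compl] at hS2 hT2
    simp only [insert_subset_iff, singleton_subset_iff, Finset.mem_symmDiff,
      Finset.mem_compl]
    tauto
  have hbot : S ∆ T ≠ ⊥ := by
    intro h; exact hne1 (symmDiff_eq_bot.mp h).symm
  have htop : S ∆ T ≠ ⊤ := by
    intro h
    have hst : S ∆ Sᶜ = (⊤ : Finset (Fin n)) := by
      ext v; simp [Finset.mem_symmDiff]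
    exact hne2 (symmDiff_right_injective S (h.trans hst.symm))
  constructor
  · obtain ⟨v, hv⟩ := Finset.nonempty_iff_ne_empty.mpr hbot
    obtain ⟨e, he, hve⟩ := hcov v
    rcases inout e he with hin | hout
    · intro hind
      exact (indep_iff_not_subset h2).mp hind e he hin
    · exact absurd hv (by simpa using (Finset.mem_compl.mp (hout hve)))
  · have : ((S ∆ T)ᶜ : Finset (Fin n)).Nonempty := by
      rw [Finset.nonempty_iff_ne_empty]
      intro h
      exact htop (by simpa using congrArg compl h)
    obtain ⟨v, hv⟩ := this
    obtain ⟨e, he, hve⟩ := hcov v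
    rcases inout e he with hin | hout
    · exact absurd (hin hve) (Finset.mem_compl.mp hv)
    · intro hind
      exact (indep_iff_not_subset h2).mp hind e he hout


lemma ub (hn : 1 ≤ n) {E : Finset (Finset (Fin n))} (h2 : ∀ e ∈ E, e.card = 2)
    (hcov : ∀ v : Fin n, ∃ e ∈ E, v ∈ e) :
    (univ.filter (indep E)).card ≤ 1 + 2 ^ (n - 1) := by
  set P : Finset (Fin n) → Prop := indep E with hP
  set A := univ.filter (fun S : Finset (Fin n) => P S ∧ P Sᶜ) with hA
  set B := univ.filter (fun S : Finset (Fin n) => ¬ P S ∧ ¬ P Sᶜ) with hB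
  set C := univ.filter (fun S : Finset (Fin n) => P S ∧ ¬ P Sᶜ) with hC
  set C' := univ.filter (fun S : Finset (Fin n) => ¬ P S ∧ P Sᶜ) with hC'
  have h1 : A.card + C.card = (univ.filter P).card := by
    rw [hA, hC, ← Finset.filter_filter, ← Finset.filter_filter]
    exact Finset.card_filter_add_card_filter_not _
  have h1' : C'.card + B.card = (univ.filter (fun S => ¬ P S)).card := by
    rw [hB, hC', ← Finset.filter_filter, ← Finset.filter_filter]
    exact Finset.card_filter_add_card_filter_not _
  have hCC : C.card = C'.card := by
    apply Finset.card_bij (fun S _ => Sᶜ)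
    · intro S hS
      simp only [hC, hC', mem_filter, mem_univ, true_and, compl_compl] at *
      exact ⟨hS.2, hS.1⟩
    · intro a ha b hb hab
      simpa using congrArg compl hab
    · intro T hT
      refine ⟨Tᶜ, ?_, by simp⟩
      simp only [hC, hC', mem_filter, mem_univ, true_and, compl_compl] at *
      exact ⟨hT.2, hT.1⟩
  have hAB : A.card ≤ B.card + 2 := by
    rcases A.eq_empty_or_nonempty with h | ⟨S0, hS0⟩
    · simp [h]
    · have hS0' : P S0 ∧ P S0ᶜ := by
        have := hS0; rw [hA, mem_filter] at this; exact this.2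
      have hmaps : ∀ T ∈ A \ ({S0, S0ᶜ} : Finset (Finset (Fin n))), S0 ∆ T ∈ B := by
        intro T hT
        rw [mem_sdiff, mem_insert, mem_singleton] at hT
        push_neg at hT
        obtain ⟨hTA, hT1, hT2⟩ := hT
        rw [hA, mem_filter] at hTA
        have hd := symm_dep h2 hcov hS0'.1 hS0'.2 hTA.2.1 hTA.2.2 hT1 hT2
        rw [hB, mem_filter]
        exact ⟨mem_univ _, hd.1, hd.2⟩
      have hinj : Set.InjOn (fun T => S0 ∆ T) ↑(A \ ({S0, S0ᶜ} : Finset (Finset (Fin n)))) := by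
        intro a _ b _ hab
        exact symmDiff_right_injective S0 hab
      have hcard1 := Finset.card_le_card_of_injOn _ hmaps hinj
      have hcard2 : A.card ≤ (A \ ({S0, S0ᶜ} : Finset (Finset (Fin n)))).card + 2 := by
        have := Finset.card_le_card_sdiff_add_card (s := A) (t := {S0, S0ᶜ})
        have h2' : ({S0, S0ᶜ} : Finset (Finset (Fin n))).card ≤ 2 := by
          apply le_trans (Finset.card_insert_le _ _); simp
        omega
      omega
  have htot : (univ.filter P).card + (univ.filter (fun S => ¬ P S)).card = 2 ^ n := by
    rw [Finset.card_filter_add_card_filter_not]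
    simp [Fintype.card_finset]
  have hpow : 2 ^ n = 2 * 2 ^ (n - 1) := by
    rw [← pow_succ']; congr 1; omega
  have hgoal : univ.filter (indep E) = univ.filter P := rfl
  rw [hgoal]
  omega

lemma star_stuff (hn : 2 ≤ n) :
    ∃ E : Finset (Finset (Fin n)), (∀ e ∈ E, e.card = 2) ∧
      (∀ v : Fin n, ∃ e ∈ E, v ∈ e) ∧
      (univ.filter (indep E)).card = 1 + 2 ^ (n - 1) := by
  haveI : NeZero n := ⟨by omega⟩
  set E0 : Finset (Finset (Fin n)) :=
    (univ.filter (fun v : Fin n => v ≠ 0)).image (fun v => ({0, v} : Finset (Fin n))) with hE0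
  have hmem : ∀ e, e ∈ E0 ↔ ∃ v : Fin n, v ≠ 0 ∧ e = {0, v} := by
    intro e
    simp only [hE0, mem_image, mem_filter, mem_univ, true_and]
    constructor
    · rintro ⟨v, hv, rfl⟩; exact ⟨v, hv, rfl⟩
    · rintro ⟨v, hv, rfl⟩; exact ⟨v, hv, rfl⟩
  have h2 : ∀ e ∈ E0, e.card = 2 := by
    intro e he
    obtain ⟨v, hv, rfl⟩ := (hmem e).mp he
    exact card_pair (Ne.symm hv)
  have hone : (⟨1, by omega⟩ : Fin n) ≠ 0 := by
    intro h
    have := congrArg Fin.val h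
    simp [Fin.val_zero] at this
  refine ⟨E0, h2, ?_, ?_⟩
  · intro v
    by_cases hv : v = 0
    · refine ⟨{0, ⟨1, by omega⟩}, (hmem _).mpr ⟨_, hone, rfl⟩, ?_⟩
      subst hv; simp
    · exact ⟨{0, v}, (hmem _).mpr ⟨v, hv, rfl⟩, by simp⟩
  · have key : univ.filter (indep E0) =
        insert ({0} : Finset (Fin n)) ((univ.erase (0 : Fin n)).powerset) := by
      ext S
      simp only [mem_filter, mem_univ, true_and, mem_insert, mem_powerset, subset_erase,
        subset_univ, true_and]
      constructor
      · intro h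
        by_cases h0 : (0 : Fin n) ∈ S
        · left
          apply Finset.Subset.antisymm
          · intro u hu
            rw [mem_singleton]
            by_contra hu0
            have he : ({0, u} : Finset (Fin n)) ∈ E0 := (hmem _).mpr ⟨u, hu0, rfl⟩
            have hsub : ({0, u} : Finset (Fin n)) ⊆ ({0, u} : Finset (Fin n)) ∩ S :=
              subset_inter Subset.rfl (insert_subset h0 (singleton_subset_iff.mpr hu))
            have hc := card_le_card hsub
            rw [card_pair (Ne.symm hu0)] at hc
            have := h _ he
            omega
          · exact singleton_subset_iff.mpr h0
        · right; exact h0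
      · rintro (rfl | h0)
        · intro e he
          calc (e ∩ {0}).card ≤ ({0} : Finset (Fin n)).card := card_le_card inter_subset_right
          _ = 1 := card_singleton 0
        · intro e he
          obtain ⟨v, hv, rfl⟩ := (hmem e).mp he
          have : ({0, v} : Finset (Fin n)) ∩ S ⊆ {v} := by
            intro u hu
            rw [mem_inter, mem_insert, mem_singleton] at hu
            rw [mem_singleton]
            rcases hu.1 with rfl | rfl
            · exact absurd hu.2 h0
            · rfl
          calc (({0, v} : Finset (Fin n)) ∩ S).card ≤ ({v} : Finset (Fin n)).card :=
                card_le_card this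
          _ = 1 := card_singleton v
    rw [key]
    rw [card_insert_of_notMem (by simp [mem_powerset, subset_erase])]
    rw [card_powerset, card_erase_of_mem (mem_univ _), card_univ, Fintype.card_fin]
    omega

end MaxIndepAux

theorem max_indep_sets_no_isolated (n : ℕ) (hn : 2 ≤ n) :
    IsGreatest {m : ℕ | ∃ E : Finset (Finset (Fin n)),
      (∀ e ∈ E, e.card = 2) ∧ (∀ v : Fin n, ∃ e ∈ E, v ∈ e) ∧
      {S : Finset (Fin n) | ∀ e ∈ E, (e ∩ S).card ≤ 1}.ncard = m}
      (1 + 2 ^ (n - 1)) := by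
  have hset : ∀ E : Finset (Finset (Fin n)),
      {S : Finset (Fin n) | ∀ e ∈ E, (e ∩ S).card ≤ 1}
        = ↑(Finset.univ.filter (MaxIndepAux.indep E)) := by
    intro E; ext S; simp [MaxIndepAux.indep]
  constructor
  · obtain ⟨E, h2, hcov, hcard⟩ := MaxIndepAux.star_stuff hn
    exact ⟨E, h2, hcov, by rw [hset, Set.ncard_coe_finset, hcard]⟩
  · rintro m ⟨E, h2, hcov, hm⟩
    rw [hset, Set.ncard_coe_finset] at hm
    rw [← hm]
    exact MaxIndepAux.ub (by omega) h2 hcov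
end

section
/- For every integer n ≥ 2, the maximum number of {1,2}-transversals over all graphs on n vertices with no isolated vertices equals 1 + 2^{n−1}. -/
open Finset

variable {α : Type*} [DecidableEq α] [Fintype α]

theorem indep_bound : ∀ (N : ℕ) (V : Finset α) (E : Finset (Finset α)),
    V.card ≤ N → (∀ e ∈ E, e.card = 2) → (∀ e ∈ E, e ⊆ V) →
    (∀ v ∈ V, ∃ e ∈ E, v ∈ e) → 2 ≤ V.card →
    (V.powerset.filter (fun S => ∀ e ∈ E, ¬ e ⊆ S)).card ≤ 2 ^ (V.card - 1) + 1 := by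
  intro N
  induction N with
  | zero =>
    intro V E hN _ _ _ h2
    exact absurd (le_trans h2 hN) (by norm_num)
  | succ N IH =>
    intro V E hN hcard2 hsub hcov h2
    by_cases hV2 : V.card = 2
    · obtain ⟨v, hv⟩ := Finset.card_pos.mp (show 0 < V.card by omega)
      obtain ⟨e, heE, hve⟩ := hcov v hv
      have heV : e = V := Finset.eq_of_subset_of_card_le (hsub e heE)
        (by rw [hcard2 e heE, hV2])
      have hsubset : (V.powerset.filter (fun S => ∀ e ∈ E, ¬ e ⊆ S)) ⊆ V.powerset.erase V := by
        intro S hS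
        simp only [mem_filter, mem_powerset] at hS
        refine Finset.mem_erase.mpr ⟨?_, Finset.mem_powerset.mpr hS.1⟩
        intro h
        exact hS.2 e heE (by rw [heV, h])
      calc (V.powerset.filter (fun S => ∀ e ∈ E, ¬ e ⊆ S)).card
          ≤ (V.powerset.erase V).card := card_le_card hsubset
        _ = 2 ^ V.card - 1 := by
            rw [card_erase_of_mem (mem_powerset_self _), card_powerset]
        _ ≤ 2 ^ (V.card - 1) + 1 := by rw [hV2]; norm_num
    · have h3 : 3 ≤ V.card := by omega
      by_cases hc : ∃ v ∈ V, ∀ u ∈ V.erase v, ∃ e ∈ E, u ∈ e ∧ v ∉ e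
      · -- Case 1 : remove v
        obtain ⟨v, hvV, hv⟩ := hc
        obtain ⟨e₀, he₀E, hve₀⟩ := hcov v hvV
        obtain ⟨a, b, hab, he₀⟩ := Finset.card_eq_two.mp (hcard2 e₀ he₀E)
        rw [he₀] at hve₀
        have hu : ∃ u, u ≠ v ∧ e₀ = {v, u} := by
          rcases Finset.mem_insert.mp hve₀ with h | h
          · subst h
            exact ⟨b, fun hb => hab hb.symm, he₀⟩
          · rw [Finset.mem_singleton] at h
            subst h
            exact ⟨a, hab, by rw [he₀, Finset.pair_comm]⟩
        obtain ⟨u, huv, he₀uv⟩ := hu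
        have huV : u ∈ V := hsub e₀ he₀E
          (by rw [he₀uv]; exact mem_insert_of_mem (mem_singleton_self u))
        have hsplit := Finset.card_filter_add_card_filter_not
          (s := V.powerset.filter (fun S => ∀ e ∈ E, ¬ e ⊆ S)) (p := fun S => v ∈ S)
        -- bound B : sets containing v
        have hB : ((V.powerset.filter (fun S => ∀ e ∈ E, ¬ e ⊆ S)).filter
            (fun S => v ∈ S)).card ≤ 2 ^ (V.card - 2) := by
          have hcle := Finset.card_le_card_of_injOn (f := fun S => S.erase v)
            (s := (V.powerset.filter (fun S => ∀ e ∈ E, ¬ e ⊆ S)).filter (fun S => v ∈ S))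
            (t := ((V.erase v).erase u).powerset)
            (by
              intro S hS
              simp only [mem_coe, mem_filter, mem_powerset] at hS
              obtain ⟨⟨hSV, hP⟩, hvS⟩ := hS
              have huS : u ∉ S := by
                intro huS
                exact hP e₀ he₀E (by
                  rw [he₀uv]
                  exact Finset.insert_subset hvS (Finset.singleton_subset_iff.mpr huS))
              rw [mem_coe, mem_powerset]
              intro x hx
              rw [Finset.mem_erase] at hx
              refine Finset.mem_erase.mpr ⟨?_, Finset.mem_erase.mpr ⟨hx.1, hSV hx.2⟩⟩
              intro h; rw [h] at hx; exact huS hx.2)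
            (by
              intro S₁ hS₁ S₂ hS₂ h
              simp only [coe_filter, Set.mem_setOf_eq] at hS₁ hS₂
              replace h : S₁.erase v = S₂.erase v := h
              have h1 : insert v (S₁.erase v) = insert v (S₂.erase v) := by rw [h]
              rwa [Finset.insert_erase hS₁.2, Finset.insert_erase hS₂.2] at h1)
          have hcard : (((V.erase v).erase u).powerset).card = 2 ^ (V.card - 2) := by
            rw [card_powerset, card_erase_of_mem (Finset.mem_erase.mpr ⟨huv, huV⟩),
              card_erase_of_mem hvV, show V.card - 1 - 1 = V.card - 2 from by omega]
          omega
        -- bound A : sets not containing v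
        have hAeq : (V.powerset.filter (fun S => ∀ e ∈ E, ¬ e ⊆ S)).filter (fun S => ¬ v ∈ S)
            = (V.erase v).powerset.filter
              (fun S => ∀ e ∈ E.filter (fun e => v ∉ e), ¬ e ⊆ S) := by
          ext S
          simp only [mem_filter, mem_powerset]
          constructor
          · rintro ⟨⟨hSV, hP⟩, hvS⟩
            refine ⟨fun x hx => Finset.mem_erase.mpr ⟨?_, hSV hx⟩, fun e he => hP e he.1⟩
            intro hxv; rw [hxv] at hx; exact hvS hx
          · rintro ⟨hSV', hP'⟩
            have hvS : v ∉ S := fun h => (Finset.mem_erase.mp (hSV' h)).1 rfl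
            refine ⟨⟨hSV'.trans (Finset.erase_subset _ _), fun e heE hes => ?_⟩, hvS⟩
            by_cases hve : v ∈ e
            · exact hvS (hes hve)
            · exact hP' e ⟨heE, hve⟩ hes
        have hcardV' : (V.erase v).card = V.card - 1 := card_erase_of_mem hvV
        have hA : ((V.powerset.filter (fun S => ∀ e ∈ E, ¬ e ⊆ S)).filter
            (fun S => ¬ v ∈ S)).card ≤ 2 ^ (V.card - 2) + 1 := by
          rw [hAeq]
          have hIH := IH (V.erase v) (E.filter (fun e => v ∉ e))
            (by rw [hcardV']; omega)
            (fun e he => hcard2 e (mem_filter.mp he).1)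
            (fun e he => by
              obtain ⟨heE, hvne⟩ := mem_filter.mp he
              intro x hx
              exact Finset.mem_erase.mpr ⟨fun h => hvne (h ▸ hx), hsub e heE hx⟩)
            (fun w hw => by
              obtain ⟨e, heE, hwe, hvne⟩ := hv w hw
              exact ⟨e, mem_filter.mpr ⟨heE, hvne⟩, hwe⟩)
            (by rw [hcardV']; omega)
          rw [hcardV'] at hIH
          have h5 : (2:ℕ) ^ (V.card - 1 - 1) = 2 ^ (V.card - 2) := by
            rw [show V.card - 1 - 1 = V.card - 2 from by omega]
          omega
        have harith : 2 ^ (V.card - 2) + (2 ^ (V.card - 2) + 1) ≤ 2 ^ (V.card - 1) + 1 := by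
          obtain ⟨k, hk⟩ : ∃ k, V.card = k + 3 := ⟨V.card - 3, by omega⟩
          rw [hk]
          have h1 : k + 3 - 2 = k + 1 := by omega
          have h2' : k + 3 - 1 = k + 2 := by omega
          rw [h1, h2']
          have h6 : (2:ℕ) ^ (k + 2) = 2 ^ (k + 1) + 2 ^ (k + 1) := by ring
          omega
        omega
      · -- Case 2 : all degrees 1
        push_neg at hc
        have star : ∀ v ∈ V, ∃ u ∈ V, u ≠ v ∧ {u, v} ∈ E ∧ ∀ e ∈ E, u ∈ e → e = {u, v} := by
          intro v hvV
          obtain ⟨u, huV', hu⟩ := hc v hvV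
          obtain ⟨hune, huV⟩ := Finset.mem_erase.mp huV'
          have key : ∀ e ∈ E, u ∈ e → e = {u, v} := by
            intro e heE hue
            have hve : v ∈ e := hu e heE hue
            have hsub' : ({u, v} : Finset α) ⊆ e :=
              Finset.insert_subset hue (Finset.singleton_subset_iff.mpr hve)
            have hcuv : ({u, v} : Finset α).card = 2 := by
              rw [Finset.card_insert_of_notMem (by simpa using hune), Finset.card_singleton]
            exact (Finset.eq_of_subset_of_card_le hsub' (by rw [hcard2 e heE, hcuv])).symm
          obtain ⟨e, heE, hue⟩ := hcov u huV
          exact ⟨u, huV, hune, (key e heE hue) ▸ heE, key⟩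
        have deg1 : ∀ v ∈ V, ∃ u ∈ V, u ≠ v ∧ {u, v} ∈ E ∧
            (∀ e ∈ E, u ∈ e → e = {u, v}) ∧ (∀ e ∈ E, v ∈ e → e = {u, v}) := by
          intro v hvV
          obtain ⟨u, huV, hune, huvE, hu⟩ := star v hvV
          obtain ⟨w, hwV, hwne, hwuE, hw⟩ := star u huV
          have hwv : w = v := by
            have h1 : ({w, u} : Finset α) = {u, v} :=
              hu {w, u} hwuE (mem_insert_of_mem (mem_singleton_self u))
            have h2' : w ∈ ({u, v} : Finset α) := h1 ▸ mem_insert_self w {u}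
            rcases Finset.mem_insert.mp h2' with h | h
            · exact absurd h hwne
            · exact Finset.mem_singleton.mp h
          refine ⟨u, huV, hune, huvE, hu, fun e he hve => ?_⟩
          have h7 := hw e he (hwv ▸ hve)
          rw [h7, hwv, Finset.pair_comm]
        obtain ⟨v₀, hv₀V⟩ := Finset.card_pos.mp (show 0 < V.card by omega)
        obtain ⟨u₀, hu₀V, hu₀ne, he₀E, hEu, hEv⟩ := deg1 v₀ hv₀V
        set V'' := (V.erase v₀).erase u₀ with hV''def
        set E'' := E.filter (fun e => v₀ ∉ e ∧ u₀ ∉ e) with hE''def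
        have hu₀mem : u₀ ∈ V.erase v₀ := Finset.mem_erase.mpr ⟨hu₀ne, hu₀V⟩
        have hcardV'' : V''.card = V.card - 2 := by
          rw [hV''def, card_erase_of_mem hu₀mem, card_erase_of_mem hv₀V]
          omega
        have hsub'' : ∀ e ∈ E'', e ⊆ V'' := by
          intro e he x hx
          have hm := mem_filter.mp he
          exact Finset.mem_erase.mpr ⟨fun h => hm.2.2 (h ▸ hx),
            Finset.mem_erase.mpr ⟨fun h => hm.2.1 (h ▸ hx), hsub e hm.1 hx⟩⟩
        have hcov'' : ∀ w ∈ V'', ∃ e ∈ E'', w ∈ e := by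
          intro w hw
          have h1' := Finset.mem_erase.mp hw
          have h2' := Finset.mem_erase.mp h1'.2
          obtain ⟨e, heE, hwe⟩ := hcov w h2'.2
          have hv₀e : v₀ ∉ e := by
            intro h
            have h8 := hEv e heE h
            rw [h8] at hwe
            rcases Finset.mem_insert.mp hwe with h' | h'
            · exact h1'.1 h'
            · exact h2'.1 (Finset.mem_singleton.mp h')
          have hu₀e : u₀ ∉ e := by
            intro h
            have h8 := hEu e heE h
            rw [h8] at hwe
            rcases Finset.mem_insert.mp hwe with h' | h'
            · exact h1'.1 h'
            · exact h2'.1 (Finset.mem_singleton.mp h')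
          exact ⟨e, mem_filter.mpr ⟨heE, hv₀e, hu₀e⟩, hwe⟩
        have hV''2 : 2 ≤ V''.card := by
          by_contra hlt
          have h1' : V''.card = 1 := by omega
          obtain ⟨w, hw⟩ := Finset.card_pos.mp (show 0 < V''.card by omega)
          obtain ⟨e, heE'', hwe⟩ := hcov'' w hw
          have h9 := Finset.card_le_card (hsub'' e heE'')
          rw [h1', hcard2 e (mem_filter.mp heE'').1] at h9
          omega
        have hV4 : 4 ≤ V.card := by omega
        have hM := IH V'' E'' (by omega) (fun e he => hcard2 e (mem_filter.mp he).1)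
          hsub'' hcov'' hV''2
        have hinj : (V.powerset.filter (fun S => ∀ e ∈ E, ¬ e ⊆ S)).card ≤
            (({∅, {v₀}, {u₀}} : Finset (Finset α)) ×ˢ
              (V''.powerset.filter (fun S => ∀ e ∈ E'', ¬ e ⊆ S))).card := by
          apply Finset.card_le_card_of_injOn (fun S => (S ∩ {v₀, u₀}, S \ {v₀, u₀}))
          · intro S hS
            simp only [mem_coe, mem_filter, mem_powerset] at hS
            obtain ⟨hSV, hP⟩ := hS
            rw [Finset.mem_coe]
            have hnotboth : ¬ (v₀ ∈ S ∧ u₀ ∈ S) := by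
              rintro ⟨h1, h2⟩
              exact hP {u₀, v₀} he₀E
                (Finset.insert_subset h2 (Finset.singleton_subset_iff.mpr h1))
            refine Finset.mem_product.mpr ⟨?_, ?_⟩
            · -- S ∩ {v₀, u₀} ∈ {∅, {v₀}, {u₀}}
              dsimp only
              by_cases h1 : v₀ ∈ S <;> by_cases h2 : u₀ ∈ S
              · exact absurd ⟨h1, h2⟩ hnotboth
              · have heq : S ∩ {v₀, u₀} = {v₀} := by
                  ext x
                  simp only [mem_inter, mem_insert, mem_singleton]
                  constructor
                  · rintro ⟨hxS, rfl | rfl⟩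
                    · rfl
                    · exact absurd hxS h2
                  · rintro rfl; exact ⟨h1, Or.inl rfl⟩
                rw [heq]; simp
              · have heq : S ∩ {v₀, u₀} = {u₀} := by
                  ext x
                  simp only [mem_inter, mem_insert, mem_singleton]
                  constructor
                  · rintro ⟨hxS, rfl | rfl⟩
                    · exact absurd hxS h1
                    · rfl
                  · rintro rfl; exact ⟨h2, Or.inr rfl⟩
                rw [heq]; simp
              · have heq : S ∩ {v₀, u₀} = ∅ := by
                  rw [Finset.eq_empty_iff_forall_notMem]
                  intro x hx
                  obtain ⟨hxS, hxp⟩ := Finset.mem_inter.mp hx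
                  rcases Finset.mem_insert.mp hxp with h' | h'
                  · exact h1 (h' ▸ hxS)
                  · exact h2 ((Finset.mem_singleton.mp h') ▸ hxS)
                rw [heq]; simp
            · dsimp only
              rw [mem_filter, mem_powerset]
              constructor
              · intro x hx
                obtain ⟨hxS, hxp⟩ := Finset.mem_sdiff.mp hx
                simp only [mem_insert, mem_singleton] at hxp
                push_neg at hxp
                exact Finset.mem_erase.mpr ⟨hxp.2,
                  Finset.mem_erase.mpr ⟨hxp.1, hSV hxS⟩⟩
              · intro e heE'' hes
                exact hP e (mem_filter.mp heE'').1 (hes.trans Finset.sdiff_subset)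
          · intro S₁ hS₁ S₂ hS₂ h
            have h1 : S₁ ∩ {v₀, u₀} = S₂ ∩ {v₀, u₀} := congrArg Prod.fst h
            have h2 : S₁ \ {v₀, u₀} = S₂ \ {v₀, u₀} := congrArg Prod.snd h
            have e1 : S₁ \ {v₀, u₀} ∪ S₁ ∩ {v₀, u₀} = S₁ := Finset.sdiff_union_inter _ _
            have e2 : S₂ \ {v₀, u₀} ∪ S₂ ∩ {v₀, u₀} = S₂ := Finset.sdiff_union_inter _ _
            rw [← e1, ← e2, h1, h2]
        have hcP : (({∅, {v₀}, {u₀}} : Finset (Finset α)) ×ˢ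
            (V''.powerset.filter (fun S => ∀ e ∈ E'', ¬ e ⊆ S))).card ≤
            3 * (2 ^ (V''.card - 1) + 1) := by
          rw [Finset.card_product]
          have h3' : ({∅, {v₀}, {u₀}} : Finset (Finset α)).card ≤ 3 := by
            apply le_trans (Finset.card_insert_le _ _)
            have h10 := Finset.card_insert_le ({v₀} : Finset α) ({{u₀}} : Finset (Finset α))
            simp only [Finset.card_singleton] at h10 ⊢
            omega
          exact Nat.mul_le_mul h3' hM
        have harith : 3 * (2 ^ (V''.card - 1) + 1) ≤ 2 ^ (V.card - 1) + 1 := by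
          obtain ⟨k, hk⟩ : ∃ k, V.card = k + 4 := ⟨V.card - 4, by omega⟩
          rw [hcardV'', hk]
          have h1 : k + 4 - 2 - 1 = k + 1 := by omega
          have h2' : k + 4 - 1 = k + 3 := by omega
          rw [h1, h2']
          have h3' : (2:ℕ) ^ (k + 3) = 4 * 2 ^ (k + 1) := by ring
          have h4 : 2 ≤ (2:ℕ) ^ (k + 1) := by
            calc (2:ℕ) = 2 ^ 1 := (pow_one 2).symm
              _ ≤ 2 ^ (k + 1) := Nat.pow_le_pow_right (by norm_num) (by omega)
          omega
        omega

theorem max_one_two_transversals (n : ℕ) (hn : 2 ≤ n) :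
    IsGreatest {m : ℕ | ∃ E : Finset (Finset (Fin n)),
      (∀ e ∈ E, e.card = 2) ∧ (∀ v : Fin n, ∃ e ∈ E, v ∈ e) ∧
      {S : Finset (Fin n) |
        ∀ e ∈ E, (e ∩ S).card = 1 ∨ (e ∩ S).card = 2}.ncard = m}
      (1 + 2 ^ (n - 1)) := by
  constructor
  · -- the star achieves the maximum
    set z : Fin n := ⟨0, by omega⟩ with hz
    set o : Fin n := ⟨1, by omega⟩ with ho
    have hoz : o ≠ z := by
      intro h
      have := congrArg Fin.val h
      simp [hz, ho] at this
    refine ⟨(Finset.univ.erase z).image (fun v => {z, v}), ?_, ?_, ?_⟩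
    · intro e he
      obtain ⟨v, hv, rfl⟩ := Finset.mem_image.mp he
      have hvz : v ≠ z := (Finset.mem_erase.mp hv).1
      rw [Finset.card_insert_of_notMem (by simpa using hvz.symm), Finset.card_singleton]
    · intro v
      by_cases hvz : v = z
      · refine ⟨{z, o}, Finset.mem_image.mpr ⟨o, Finset.mem_erase.mpr ⟨hoz, mem_univ o⟩, rfl⟩, ?_⟩
        rw [hvz]; exact mem_insert_self z {o}
      · exact ⟨{z, v}, Finset.mem_image.mpr ⟨v, Finset.mem_erase.mpr ⟨hvz, mem_univ v⟩, rfl⟩,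
          mem_insert_of_mem (mem_singleton_self v)⟩
    · have hsetF : {S : Finset (Fin n) |
          ∀ e ∈ (Finset.univ.erase z).image (fun v => ({z, v} : Finset (Fin n))),
            (e ∩ S).card = 1 ∨ (e ∩ S).card = 2}
          = ↑(((Finset.univ : Finset (Finset (Fin n))).filter (fun S => z ∈ S)) ∪
              {Finset.univ.erase z}) := by
        ext S
        simp only [Set.mem_setOf_eq, Finset.coe_union, Set.mem_union, Finset.mem_coe,
          Finset.mem_filter, Finset.mem_univ, true_and, Finset.coe_singleton,
          Set.mem_singleton_iff]
        constructor
        · intro h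
          by_cases hzS : z ∈ S
          · exact Or.inl hzS
          · refine Or.inr ?_
            apply Finset.Subset.antisymm
            · intro x hx
              exact Finset.mem_erase.mpr ⟨fun hxz => hzS (hxz ▸ hx), mem_univ x⟩
            · intro x hx
              obtain ⟨hxz, -⟩ := Finset.mem_erase.mp hx
              have hcard := h {z, x} (Finset.mem_image.mpr
                ⟨x, Finset.mem_erase.mpr ⟨hxz, mem_univ x⟩, rfl⟩)
              have hne : ({z, x} ∩ S).Nonempty := by
                rw [← Finset.card_pos]; omega
              obtain ⟨y, hy⟩ := hne
              obtain ⟨hy1, hy2⟩ := Finset.mem_inter.mp hy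
              rcases Finset.mem_insert.mp hy1 with h' | h'
              · exact absurd (h' ▸ hy2) hzS
              · rw [Finset.mem_singleton] at h'
                exact h' ▸ hy2
        · intro h e he
          obtain ⟨v, hv, rfl⟩ := Finset.mem_image.mp he
          have hvz : v ≠ z := (Finset.mem_erase.mp hv).1
          have hcard2' : ({z, v} : Finset (Fin n)).card = 2 := by
            rw [Finset.card_insert_of_notMem (by simpa using hvz.symm), Finset.card_singleton]
          have hle : (({z, v} : Finset (Fin n)) ∩ S).card ≤ 2 := by
            calc _ ≤ ({z, v} : Finset (Fin n)).card := card_le_card Finset.inter_subset_left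
              _ = 2 := hcard2'
          have hpos : 0 < (({z, v} : Finset (Fin n)) ∩ S).card := by
            rw [Finset.card_pos]
            rcases h with hzS | rfl
            · exact ⟨z, Finset.mem_inter.mpr ⟨mem_insert_self z {v}, hzS⟩⟩
            · exact ⟨v, Finset.mem_inter.mpr ⟨mem_insert_of_mem (mem_singleton_self v),
                Finset.mem_erase.mpr ⟨hvz, mem_univ v⟩⟩⟩
          omega
      rw [hsetF, Set.ncard_coe_finset]
      have hdisj : Disjoint ((Finset.univ : Finset (Finset (Fin n))).filter (fun S => z ∈ S))
          ({Finset.univ.erase z} : Finset (Finset (Fin n))) := by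
        rw [Finset.disjoint_singleton_right, Finset.mem_filter]
        rintro ⟨-, hmem⟩
        exact (Finset.mem_erase.mp hmem).1 rfl
      rw [Finset.card_union_of_disjoint hdisj, Finset.card_singleton]
      have hbij : ((Finset.univ : Finset (Finset (Fin n))).filter (fun S => z ∈ S)).card
          = ((Finset.univ.erase z).powerset).card := by
        refine Finset.card_bij' (fun S _ => S.erase z) (fun S _ => insert z S) ?_ ?_ ?_ ?_
        · intro S hS
          rw [Finset.mem_powerset]
          intro x hx
          obtain ⟨hxz, hxS⟩ := Finset.mem_erase.mp hx
          exact Finset.mem_erase.mpr ⟨hxz, mem_univ x⟩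
        · intro S hS
          exact Finset.mem_filter.mpr ⟨mem_univ _, mem_insert_self z S⟩
        · intro S hS
          exact Finset.insert_erase (Finset.mem_filter.mp hS).2
        · intro S hS
          refine Finset.erase_insert ?_
          intro hzS
          exact (Finset.mem_erase.mp ((Finset.mem_powerset.mp hS) hzS)).1 rfl
      rw [hbij, Finset.card_powerset, Finset.card_erase_of_mem (mem_univ z),
        Finset.card_univ, Fintype.card_fin]
      omega
  · -- upper bound
    rintro m ⟨E, hcard2, hcov, rfl⟩
    have hsetF : {S : Finset (Fin n) | ∀ e ∈ E, (e ∩ S).card = 1 ∨ (e ∩ S).card = 2}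
        = ↑((Finset.univ : Finset (Finset (Fin n))).filter
            (fun S => ∀ e ∈ E, (e ∩ S).card = 1 ∨ (e ∩ S).card = 2)) := by
      ext S
      simp
    rw [hsetF, Set.ncard_coe_finset]
    have key : ∀ S : Finset (Fin n),
        (∀ e ∈ E, (e ∩ S).card = 1 ∨ (e ∩ S).card = 2) ↔ (∀ e ∈ E, ¬ e ⊆ Sᶜ) := by
      intro S
      constructor
      · intro h e he hsub
        have hec := h e he
        have : e ∩ S = ∅ := by
          rw [Finset.eq_empty_iff_forall_notMem]
          intro x hx
          obtain ⟨hxe, hxS⟩ := Finset.mem_inter.mp hx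
          exact (Finset.mem_compl.mp (hsub hxe)) hxS
        rw [this, Finset.card_empty] at hec
        omega
      · intro h e he
        have hle : (e ∩ S).card ≤ 2 := by
          calc _ ≤ e.card := card_le_card Finset.inter_subset_left
            _ = 2 := hcard2 e he
        have hpos : 0 < (e ∩ S).card := by
          rw [Finset.card_pos]
          by_contra hne
          rw [Finset.not_nonempty_iff_eq_empty] at hne
          refine h e he ?_
          intro x hxe
          rw [Finset.mem_compl]
          intro hxS
          have : x ∈ e ∩ S := Finset.mem_inter.mpr ⟨hxe, hxS⟩
          rw [hne] at this
          exact Finset.notMem_empty x this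
        omega
    have hbij : ((Finset.univ : Finset (Finset (Fin n))).filter
          (fun S => ∀ e ∈ E, (e ∩ S).card = 1 ∨ (e ∩ S).card = 2)).card
        = ((Finset.univ : Finset (Finset (Fin n))).filter
            (fun S => ∀ e ∈ E, ¬ e ⊆ S)).card := by
      refine Finset.card_bij' (fun S _ => Sᶜ) (fun S _ => Sᶜ) ?_ ?_ ?_ ?_
      · intro S hS
        rw [Finset.mem_filter] at hS
        show Sᶜ ∈ Finset.filter _ _
        rw [Finset.mem_filter]
        exact ⟨mem_univ _, (key S).mp hS.2⟩
      · intro S hS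
        rw [Finset.mem_filter] at hS
        show Sᶜ ∈ Finset.filter _ _
        rw [Finset.mem_filter]
        refine ⟨mem_univ _, (key Sᶜ).mpr ?_⟩
        intro e he
        rw [compl_compl]
        exact hS.2 e he
      · intro S _; exact compl_compl S
      · intro S _; exact compl_compl S
    rw [hbij]
    have hcardn : (Finset.univ : Finset (Fin n)).card = n := by
      rw [Finset.card_univ, Fintype.card_fin]
    have hbound := indep_bound n (Finset.univ : Finset (Fin n)) E
      (le_of_eq hcardn) hcard2 (fun e _ => Finset.subset_univ e)
      (fun v _ => hcov v) (by omega)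
    rw [hcardn] at hbound
    refine le_trans (le_trans ?_ hbound) (by omega)
    apply Finset.card_le_card
    intro S hS
    exact Finset.mem_filter.mpr ⟨Finset.mem_powerset.mpr (Finset.subset_univ S),
      (Finset.mem_filter.mp hS).2⟩
end

section
/- Let r ≥ 1, let a be an integer with 0 ≤ a ≤ r, and let n ≥ r. Then the maximum number of {a}-transversals over all r-uniform hypergraphs on n vertices with no isolated vertices equals the maximum number of maximal {a}-transversals over all r-uniform hypergraphs on n vertices. -/
/-- `S` is an `{a}`-transversal: `|H ∩ S| = a` for every hyperedge `H`. -/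
def IsSingletonTransversal {n : ℕ} (a : ℕ) (E : Finset (Finset (Fin n)))
    (S : Finset (Fin n)) : Prop :=
  ∀ H ∈ E, (H ∩ S).card = a

/-- `S` is a maximal `{a}`-transversal. -/
def IsMaxSingletonTransversal {n : ℕ} (a : ℕ) (E : Finset (Finset (Fin n)))
    (S : Finset (Fin n)) : Prop :=
  IsSingletonTransversal a E S ∧
    ∀ T : Finset (Fin n), IsSingletonTransversal a E T → S ⊆ T → S = T

def isoSet {n : ℕ} (E : Finset (Finset (Fin n))) : Finset (Fin n) :=
  Finset.univ.filter fun v => ∀ H ∈ E, v ∉ H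

lemma edge_inter_iso {n : ℕ} {E : Finset (Finset (Fin n))} {H : Finset (Fin n)}
    (hH : H ∈ E) : H ∩ isoSet E = ∅ := by
  rw [Finset.eq_empty_iff_forall_notMem]
  intro x hx
  rw [Finset.mem_inter] at hx
  have := hx.2
  rw [isoSet, Finset.mem_filter] at this
  exact this.2 H hH hx.1

lemma iso_subset_max {n a : ℕ} {E : Finset (Finset (Fin n))} {S : Finset (Fin n)}
    (hS : IsMaxSingletonTransversal a E S) : isoSet E ⊆ S := by
  have htr : IsSingletonTransversal a E (S ∪ isoSet E) := by
    intro H hH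
    rw [Finset.inter_union_distrib_left, edge_inter_iso hH, Finset.union_empty]
    exact hS.1 H hH
  have := hS.2 _ htr Finset.subset_union_left
  rw [this]
  exact Finset.subset_union_right


lemma max_of_cover {n a : ℕ} {E : Finset (Finset (Fin n))}
    (hcov : ∀ v : Fin n, ∃ H ∈ E, v ∈ H) {S : Finset (Fin n)}
    (hS : IsSingletonTransversal a E S) : IsMaxSingletonTransversal a E S := by
  refine ⟨hS, fun T hT hST => ?_⟩
  by_contra hne
  obtain ⟨v, hvT, hvS⟩ : ∃ v, v ∈ T ∧ v ∉ S := by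
    by_contra h; push_neg at h
    exact hne (Finset.Subset.antisymm hST h)
  obtain ⟨H, hHE, hvH⟩ := hcov v
  have hsub : H ∩ S ⊆ H ∩ T := Finset.inter_subset_inter (le_refl H) hST
  have heq : H ∩ S = H ∩ T := Finset.eq_of_subset_of_card_le hsub
    (by rw [hS H hHE, hT H hHE])
  have : v ∈ H ∩ S := heq ▸ Finset.mem_inter.2 ⟨hvH, hvT⟩
  exact hvS (Finset.mem_inter.1 this).2

lemma key {n : ℕ} (a r : ℕ) (hr : 1 ≤ r) (ha : a ≤ r) (hn : r ≤ n)
    (E : Finset (Finset (Fin n))) (hE : ∀ H ∈ E, H.card = r) :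
    ∃ E' : Finset (Finset (Fin n)), (∀ H ∈ E', H.card = r) ∧
      (∀ v : Fin n, ∃ H ∈ E', v ∈ H) ∧
      {S : Finset (Fin n) | IsMaxSingletonTransversal a E S}.ncard ≤
      {S : Finset (Fin n) | IsSingletonTransversal a E' S}.ncard := by
  classical
  set I : Finset (Fin n) := isoSet E with hI
  -- generic injectivity helper
  have injgen : ∀ (g : Finset (Fin n) → Finset (Fin n)),
      (∀ S, g S ⊆ I) →
      Set.InjOn (fun S => (S \ I) ∪ g S)
        {S : Finset (Fin n) | IsMaxSingletonTransversal a E S} := by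
    intro g hg S hS S' hS' heq
    have hrec : ∀ T : Finset (Fin n), ((T \ I) ∪ g T) \ I = T \ I := by
      intro T
      rw [Finset.union_sdiff_distrib, Finset.sdiff_idem,
        Finset.sdiff_eq_empty_iff_subset.2 (hg T), Finset.union_empty]
    have h1 : S \ I = S' \ I := by
      have := congrArg (· \ I) heq
      simpa [hrec] using this
    have e1 : S \ I ∪ I = S := Finset.sdiff_union_of_subset (iso_subset_max hS)
    have e2 : S' \ I ∪ I = S' := Finset.sdiff_union_of_subset (iso_subset_max hS')
    rw [← e1, ← e2, h1]
  rcases Nat.eq_zero_or_pos I.card with hI0 | hIpos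
  · -- no isolated vertices
    refine ⟨E, hE, ?_, ?_⟩
    · intro v
      have : v ∉ I := by
        intro hv
        have : I = ∅ := Finset.card_eq_zero.1 hI0
        simp [this] at hv
      rw [hI, isoSet, Finset.mem_filter] at this
      push_neg at this
      exact this (Finset.mem_univ v)
    · exact Set.ncard_le_ncard (fun S hS => hS.1) (Set.toFinite _)
  rcases lt_or_ge I.card r with hIr | hIr
  · -- 0 < |I| < r : one extra edge H' = I ∪ P with P ⊆ H₀
    have hInev : I ≠ Finset.univ := by
      intro h
      rw [h, Finset.card_univ, Fintype.card_fin] at hIr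
      omega
    obtain ⟨v, hv⟩ : ∃ v : Fin n, v ∉ I := by
      by_contra h; push_neg at h
      exact hInev (Finset.eq_univ_of_forall h)
    have hv' : ∃ H ∈ E, v ∈ H := by
      rw [hI, isoSet, Finset.mem_filter] at hv
      push_neg at hv
      exact hv (Finset.mem_univ v)
    obtain ⟨H₀, hH₀E, _⟩ := hv'
    have hH₀card : H₀.card = r := hE H₀ hH₀E
    obtain ⟨P, hPH₀, hPcard⟩ : ∃ P ⊆ H₀, P.card = r - I.card :=
      Finset.exists_subset_card_eq (by omega)
    have hPI : Disjoint P I := by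
      rw [Finset.disjoint_left]
      intro x hxP hxI
      have : x ∈ H₀ ∩ isoSet E := Finset.mem_inter.2 ⟨hPH₀ hxP, hxI⟩
      rw [edge_inter_iso hH₀E] at this
      exact absurd this (Finset.notMem_empty x)
    set H' : Finset (Fin n) := I ∪ P with hH'
    have hH'card : H'.card = r := by
      rw [hH', Finset.card_union_of_disjoint hPI.symm, hPcard]
      omega
    refine ⟨insert H' E, ?_, ?_, ?_⟩
    · intro H hH
      rcases Finset.mem_insert.1 hH with h | h
      · rw [h]; exact hH'card
      · exact hE H h
    · intro w
      by_cases hw : w ∈ I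
      · exact ⟨H', Finset.mem_insert_self _ _, by rw [hH']; exact Finset.mem_union_left _ hw⟩
      · rw [hI, isoSet, Finset.mem_filter] at hw
        push_neg at hw
        obtain ⟨H, hHE, hwH⟩ := hw (Finset.mem_univ w)
        exact ⟨H, Finset.mem_insert_of_mem hHE, hwH⟩
    · -- counting
      set g : Finset (Fin n) → Finset (Fin n) := fun S =>
        if h : a - (P ∩ S).card ≤ I.card
        then (Finset.exists_subset_card_eq h).choose else ∅ with hg
      have hgI : ∀ S, g S ⊆ I := by
        intro S
        simp only [hg]
        split
        · exact (Finset.exists_subset_card_eq (by assumption)).choose_spec.1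
        · exact Finset.empty_subset I
      apply Set.ncard_le_ncard_of_injOn (fun S => (S \ I) ∪ g S) _ (injgen g hgI)
        (Set.toFinite _)
      intro S hS
      simp only [Set.mem_setOf_eq] at hS ⊢
      have hIS : I ⊆ S := iso_subset_max hS
      have hH₀S : (H₀ ∩ S).card = a := hS.1 H₀ hH₀E
      have hPSle : (P ∩ S).card ≤ a := by
        rw [← hH₀S]
        exact Finset.card_le_card (Finset.inter_subset_inter hPH₀ (le_refl S))
      have hsizeok : a - (P ∩ S).card ≤ I.card := by
        have hsub : H₀ ∩ S ⊆ (P ∩ S) ∪ (H₀ \ P) := by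
          intro x hx
          rw [Finset.mem_inter] at hx
          by_cases hxP : x ∈ P
          · exact Finset.mem_union_left _ (Finset.mem_inter.2 ⟨hxP, hx.2⟩)
          · exact Finset.mem_union_right _ (Finset.mem_sdiff.2 ⟨hx.1, hxP⟩)
        have hcard : a ≤ (P ∩ S).card + (H₀ \ P).card := by
          calc a = (H₀ ∩ S).card := hH₀S.symm
            _ ≤ ((P ∩ S) ∪ (H₀ \ P)).card := Finset.card_le_card hsub
            _ ≤ (P ∩ S).card + (H₀ \ P).card := Finset.card_union_le _ _
        have : (H₀ \ P).card = I.card := by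
          rw [Finset.card_sdiff_of_subset hPH₀, hH₀card, hPcard]
          omega
        omega
      have hgS : g S ⊆ I ∧ (g S).card = a - (P ∩ S).card := by
        simp only [hg]
        rw [dif_pos hsizeok]
        exact (Finset.exists_subset_card_eq hsizeok).choose_spec
      intro H hH
      rcases Finset.mem_insert.1 hH with h | h
      · -- H = H'
        subst h
        have : H' ∩ ((S \ I) ∪ g S) = g S ∪ (P ∩ S) := by
          rw [hH']
          rw [Finset.union_inter_distrib_right, Finset.inter_union_distrib_left,
            Finset.inter_union_distrib_left]
          have e1 : I ∩ (S \ I) = ∅ := by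
            rw [Finset.eq_empty_iff_forall_notMem]
            intro x hx
            rw [Finset.mem_inter, Finset.mem_sdiff] at hx
            exact hx.2.2 hx.1
          have e2 : I ∩ g S = g S := Finset.inter_eq_right.2 (hgI S)
          have e3 : P ∩ (S \ I) = P ∩ S := by
            apply Finset.Subset.antisymm
            · exact Finset.inter_subset_inter (le_refl P) (Finset.sdiff_subset)
            · intro x hx
              rw [Finset.mem_inter] at hx
              rw [Finset.mem_inter, Finset.mem_sdiff]
              exact ⟨hx.1, hx.2, fun hxI => (Finset.disjoint_left.1 hPI) hx.1 hxI⟩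
          have e4 : P ∩ g S = ∅ := by
            rw [Finset.eq_empty_iff_forall_notMem]
            intro x hx
            rw [Finset.mem_inter] at hx
            exact (Finset.disjoint_left.1 hPI) hx.1 (hgI S hx.2)
          rw [e1, e2, e3, e4, Finset.empty_union, Finset.union_empty]
        rw [this, Finset.card_union_of_disjoint, hgS.2]
        · omega
        · rw [Finset.disjoint_left]
          intro x hx hx2
          rw [Finset.mem_inter] at hx2
          exact (Finset.disjoint_left.1 hPI) hx2.1 (hgI S hx)
      · -- H ∈ E
        have hdisj : H ∩ I = ∅ := edge_inter_iso h
        have : H ∩ ((S \ I) ∪ g S) = H ∩ S := by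
          rw [Finset.inter_union_distrib_left]
          have e1 : H ∩ g S = ∅ := by
            rw [Finset.eq_empty_iff_forall_notMem]
            intro x hx
            rw [Finset.mem_inter] at hx
            have : x ∈ H ∩ I := Finset.mem_inter.2 ⟨hx.1, hgI S hx.2⟩
            rw [hdisj] at this
            exact absurd this (Finset.notMem_empty x)
          have e2 : H ∩ (S \ I) = H ∩ S := by
            apply Finset.Subset.antisymm
            · exact Finset.inter_subset_inter (le_refl H) Finset.sdiff_subset
            · intro x hx
              rw [Finset.mem_inter] at hx
              rw [Finset.mem_inter, Finset.mem_sdiff]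
              refine ⟨hx.1, hx.2, fun hxI => ?_⟩
              have : x ∈ H ∩ I := Finset.mem_inter.2 ⟨hx.1, hxI⟩
              rw [hdisj] at this
              exact absurd this (Finset.notMem_empty x)
          rw [e1, e2, Finset.union_empty]
        rw [this]
        exact hS.1 H h
  · -- |I| ≥ r : internal cover of I
    obtain ⟨B, hBI, hBcard⟩ : ∃ B ⊆ I, B.card = r - 1 :=
      Finset.exists_subset_card_eq (by omega)
    set F : Finset (Finset (Fin n)) := (I \ B).image (fun v => insert v B) with hF
    obtain ⟨u, hu⟩ : ∃ u, u ∈ I \ B := by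
      apply Finset.Nonempty.exists_mem
      rw [← Finset.card_pos, Finset.card_sdiff_of_subset hBI]
      omega
    set W : Finset (Fin n) := if h : a = r then I else
      (Finset.exists_subset_card_eq (show a ≤ B.card by rw [hBcard]; omega)).choose with hW
    have hWB : ∀ h : a ≠ r, W ⊆ B ∧ W.card = a := by
      intro h
      rw [hW, dif_neg h]
      exact (Finset.exists_subset_card_eq
        (show a ≤ B.card by rw [hBcard]; omega)).choose_spec
    have hWI : W ⊆ I := by
      by_cases h : a = r
      · rw [hW, dif_pos h]
      · exact le_trans (hWB h).1 hBI
    have hFedge : ∀ H ∈ F, ∃ v ∈ I \ B, H = insert v B := by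
      intro H hH
      rw [hF, Finset.mem_image] at hH
      obtain ⟨v, hv, hveq⟩ := hH
      exact ⟨v, hv, hveq.symm⟩
    refine ⟨E ∪ F, ?_, ?_, ?_⟩
    · intro H hH
      rcases Finset.mem_union.1 hH with h | h
      · exact hE H h
      · obtain ⟨v, hv, hveq⟩ := hFedge H h
        rw [hveq, Finset.card_insert_of_notMem (Finset.mem_sdiff.1 hv).2, hBcard]
        omega
    · intro w
      by_cases hw : w ∈ I
      · by_cases hwB : w ∈ B
        · exact ⟨insert u B, Finset.mem_union_right _
            (Finset.mem_image_of_mem _ hu), Finset.mem_insert_of_mem hwB⟩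
        · exact ⟨insert w B, Finset.mem_union_right _
            (Finset.mem_image_of_mem _ (Finset.mem_sdiff.2 ⟨hw, hwB⟩)),
            Finset.mem_insert_self _ _⟩
      · rw [hI, isoSet, Finset.mem_filter] at hw
        push_neg at hw
        obtain ⟨H, hHE, hwH⟩ := hw (Finset.mem_univ w)
        exact ⟨H, Finset.mem_union_left _ hHE, hwH⟩
    · apply Set.ncard_le_ncard_of_injOn (fun S => (S \ I) ∪ W)
        _ (injgen (fun _ => W) (fun _ => hWI)) (Set.toFinite _)
      intro S hS
      simp only [Set.mem_setOf_eq] at hS ⊢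
      intro H hH
      rcases Finset.mem_union.1 hH with h | h
      · -- H ∈ E : as before
        have hdisj : H ∩ I = ∅ := edge_inter_iso h
        have : H ∩ ((S \ I) ∪ W) = H ∩ S := by
          rw [Finset.inter_union_distrib_left]
          have e1 : H ∩ W = ∅ := by
            rw [Finset.eq_empty_iff_forall_notMem]
            intro x hx
            rw [Finset.mem_inter] at hx
            have : x ∈ H ∩ I := Finset.mem_inter.2 ⟨hx.1, hWI hx.2⟩
            rw [hdisj] at this
            exact absurd this (Finset.notMem_empty x)
          have e2 : H ∩ (S \ I) = H ∩ S := by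
            apply Finset.Subset.antisymm
            · exact Finset.inter_subset_inter (le_refl H) Finset.sdiff_subset
            · intro x hx
              rw [Finset.mem_inter] at hx
              rw [Finset.mem_inter, Finset.mem_sdiff]
              refine ⟨hx.1, hx.2, fun hxI => ?_⟩
              have : x ∈ H ∩ I := Finset.mem_inter.2 ⟨hx.1, hxI⟩
              rw [hdisj] at this
              exact absurd this (Finset.notMem_empty x)
          rw [e1, e2, Finset.union_empty]
        rw [this]
        exact hS.1 H h
      · obtain ⟨v, hv, hveq⟩ := hFedge H h
        have hHsubI : H ⊆ I := by
          rw [hveq]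
          exact Finset.insert_subset ((Finset.mem_sdiff.1 hv).1) hBI
        have e1 : H ∩ (S \ I) = ∅ := by
          rw [Finset.eq_empty_iff_forall_notMem]
          intro x hx
          rw [Finset.mem_inter, Finset.mem_sdiff] at hx
          exact hx.2.2 (hHsubI hx.1)
        rw [Finset.inter_union_distrib_left, e1, Finset.empty_union]
        by_cases har : a = r
        · have hWeq : W = I := by rw [hW, dif_pos har]
          rw [hWeq, Finset.inter_eq_left.2 hHsubI, hveq,
            Finset.card_insert_of_notMem (Finset.mem_sdiff.1 hv).2, hBcard]
          omega
        · obtain ⟨hWB', hWcard⟩ := hWB har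
          have : H ∩ W = W := Finset.inter_eq_right.2
            (le_trans hWB' (by rw [hveq]; exact Finset.subset_insert _ _))
          rw [this, hWcard]

theorem g_eq_h_singleton (r a n : ℕ) (hr : 1 ≤ r) (ha : a ≤ r) (hn : r ≤ n) :
    sSup {m : ℕ | ∃ E : Finset (Finset (Fin n)),
      (∀ H ∈ E, H.card = r) ∧ (∀ v : Fin n, ∃ H ∈ E, v ∈ H) ∧
      {S : Finset (Fin n) | IsSingletonTransversal a E S}.ncard = m} =
    sSup {m : ℕ | ∃ E : Finset (Finset (Fin n)),
      (∀ H ∈ E, H.card = r) ∧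
      {S : Finset (Fin n) | IsMaxSingletonTransversal a E S}.ncard = m} := by
  classical
  set Sg : Set ℕ := {m : ℕ | ∃ E : Finset (Finset (Fin n)),
      (∀ H ∈ E, H.card = r) ∧ (∀ v : Fin n, ∃ H ∈ E, v ∈ H) ∧
      {S : Finset (Fin n) | IsSingletonTransversal a E S}.ncard = m} with hSg
  set Sh : Set ℕ := {m : ℕ | ∃ E : Finset (Finset (Fin n)),
      (∀ H ∈ E, H.card = r) ∧
      {S : Finset (Fin n) | IsMaxSingletonTransversal a E S}.ncard = m} with hSh
  have bddg : BddAbove Sg := by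
    refine ⟨(Set.univ : Set (Finset (Fin n))).ncard, fun m hm => ?_⟩
    obtain ⟨E, _, _, hm⟩ := hm
    rw [← hm]
    exact Set.ncard_le_ncard (Set.subset_univ _) Set.finite_univ
  have bddh : BddAbove Sh := by
    refine ⟨(Set.univ : Set (Finset (Fin n))).ncard, fun m hm => ?_⟩
    obtain ⟨E, _, hm⟩ := hm
    rw [← hm]
    exact Set.ncard_le_ncard (Set.subset_univ _) Set.finite_univ
  have hg_ne : Sg.Nonempty := by
    obtain ⟨E', h1, h2, _⟩ := key a r hr ha hn ∅ (by simp)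
    exact ⟨_, E', h1, h2, rfl⟩
  have hh_ne : Sh.Nonempty :=
    ⟨_, (∅ : Finset (Finset (Fin n))), by simp, rfl⟩
  apply le_antisymm
  · refine csSup_le hg_ne fun m hm => ?_
    obtain ⟨E, hEcard, hEcov, hm⟩ := hm
    have heq : {S : Finset (Fin n) | IsSingletonTransversal a E S} =
        {S : Finset (Fin n) | IsMaxSingletonTransversal a E S} := by
      ext S
      exact ⟨fun h => max_of_cover hEcov h, fun h => h.1⟩
    exact le_csSup bddh ⟨E, hEcard, by rw [← heq]; exact hm⟩
  · refine csSup_le hh_ne fun m hm => ?_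
    obtain ⟨E, hEcard, hm⟩ := hm
    obtain ⟨E', h1, h2, h3⟩ := key a r hr ha hn E hEcard
    calc m = {S : Finset (Fin n) | IsMaxSingletonTransversal a E S}.ncard := hm.symm
      _ ≤ {S : Finset (Fin n) | IsSingletonTransversal a E' S}.ncard := h3
      _ ≤ sSup Sg := le_csSup bddg ⟨E', h1, h2, rfl⟩
end

section
/- Let r ≥ 1 and let A be a non-empty subset of {0,1,…,r}. For integers q, i with 1 ≤ q ≤ r and 0 ≤ i ≤ r − q, let f(q,i,A) = Σ_{b ∈ A(i)} C(q,b) where A(i) = {a − i : a ∈ A, a ≥ i}. Let the maximum of f(q,i,A)^{1/q} over all such pairs (q,i) be attained at q = p and i = i₀. Then there exists a constant c > 0 (depending only on r and A) such that for all n ≥ 2r, the maximum number of A-transversals over all r-uniform hypergraphs on n vertices with no isolated vertices is at least c · f(p,i₀,A)^{n/p}. -/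
/-- `f q i A = Σ_{b ∈ A(i)} C(q,b)`, where `A(i) = {a - i : a ∈ A, a ≥ i}`. -/
def f (q i : ℕ) (A : Finset ℕ) : ℕ :=
  ∑ a ∈ A.filter (fun a => i ≤ a), q.choose (a - i)

def I (n a b : ℕ) : Finset (Fin n) :=
  (Finset.Ico a (min b n)).attachFin
    (fun x hx => lt_of_lt_of_le (Finset.mem_Ico.mp hx).2 (min_le_right _ _))

lemma mem_I {n a b : ℕ} {v : Fin n} : v ∈ I n a b ↔ a ≤ (v : ℕ) ∧ (v : ℕ) < b := by
  have := v.isLt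
  simp only [I, Finset.mem_attachFin, Finset.mem_Ico, lt_min_iff]
  omega

lemma card_I {n a b : ℕ} (h : b ≤ n) : (I n a b).card = b - a := by
  simp [I, Finset.card_attachFin, Nat.card_Ico, min_eq_left h]

lemma disjoint_I {n a b c d : ℕ} (h : b ≤ c) : Disjoint (I n a b) (I n c d) := by
  rw [Finset.disjoint_left]; intro v hv hv'
  rw [mem_I] at hv hv'; omega

lemma count_subsets (A : Finset ℕ) (i₀ : ℕ) {α : Type*} [DecidableEq α] (B : Finset α) :
    (B.powerset.filter (fun s => i₀ + s.card ∈ A)).card = f B.card i₀ A := by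
  have hset : B.powerset.filter (fun s => i₀ + s.card ∈ A)
      = (A.filter (fun a => i₀ ≤ a)).biUnion (fun a => Finset.powersetCard (a - i₀) B) := by
    ext s
    simp only [Finset.mem_filter, Finset.mem_powerset, Finset.mem_biUnion,
      Finset.mem_powersetCard]
    constructor
    · rintro ⟨hs, hmem⟩
      exact ⟨i₀ + s.card, ⟨hmem, by omega⟩, hs, by omega⟩
    · rintro ⟨a, ⟨ha, hia⟩, hs, hc⟩
      refine ⟨hs, ?_⟩
      have : i₀ + s.card = a := by omega
      rwa [this]
  rw [hset, Finset.card_biUnion]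
  · simp only [f, Finset.card_powersetCard]
  · intro a ha a' ha' hne
    simp only [Finset.mem_coe, Finset.mem_filter] at ha ha'
    simp only [Function.onFun]
    rw [Finset.disjoint_left]
    intro s hs hs'
    rw [Finset.mem_powersetCard] at hs hs'
    exact hne (by omega)

theorem transversal_count_lower_bound (r : ℕ) (hr : 1 ≤ r)
    (A : Finset ℕ) (hA : A.Nonempty) (hAr : ∀ a ∈ A, a ≤ r)
    (p i₀ : ℕ) (hp : 1 ≤ p) (hpr : p ≤ r) (hi₀ : i₀ ≤ r - p)
    (hmax : ∀ q i : ℕ, 1 ≤ q → q ≤ r → i ≤ r - q →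
      (f q i A : ℝ) ^ ((1 : ℝ) / q) ≤ (f p i₀ A : ℝ) ^ ((1 : ℝ) / p)) :
    ∃ c : ℝ, 0 < c ∧ ∀ n : ℕ, 2 * r ≤ n →
      ∃ E : Finset (Finset (Fin n)),
        (∀ H ∈ E, H.card = r) ∧ (∀ v : Fin n, ∃ H ∈ E, v ∈ H) ∧
        c * (f p i₀ A : ℝ) ^ ((n : ℝ) / p) ≤
          ({S : Finset (Fin n) | ∀ H ∈ E, (H ∩ S).card ∈ A}.ncard : ℝ) := by
  -- Step 1 : the key quantity is at least 1
  have hF1 : 1 ≤ f p i₀ A := by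
    obtain ⟨a, haA⟩ := hA
    have har := hAr a haA
    -- choose (q, i) for which f q i A ≥ 1
    have hqi : ∃ q i, 1 ≤ q ∧ q ≤ r ∧ i ≤ r - q ∧ 1 ≤ f q i A := by
      rcases eq_or_lt_of_le har with rfl | hlt
      · refine ⟨1, a - 1, le_refl 1, hr, by omega, ?_⟩
        have hmem : a ∈ A.filter (fun x => a - 1 ≤ x) := by
          simp [Finset.mem_filter, haA]
        have hterm : 1 ≤ Nat.choose 1 (a - (a - 1)) := by
          have : a - (a - 1) = 1 := by omega
          rw [this]
          decide
        calc 1 ≤ Nat.choose 1 (a - (a - 1)) := hterm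
          _ ≤ f 1 (a - 1) A := by
            unfold f
            exact Finset.single_le_sum (f := fun x => Nat.choose 1 (x - (a - 1)))
              (fun _ _ => Nat.zero_le _) hmem
      · refine ⟨r - a, a, by omega, by omega, by omega, ?_⟩
        have hmem : a ∈ A.filter (fun x => a ≤ x) := by
          simp [Finset.mem_filter, haA]
        have hterm : 1 ≤ Nat.choose (r - a) (a - a) := by
          simp
        calc 1 ≤ Nat.choose (r - a) (a - a) := hterm
          _ ≤ f (r - a) a A := by
            unfold f
            exact Finset.single_le_sum (f := fun x => Nat.choose (r - a) (x - a))
              (fun _ _ => Nat.zero_le _) hmem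
    obtain ⟨q, i, hq1, hqr, hiq, hfq⟩ := hqi
    by_contra hc
    have hf0 : f p i₀ A = 0 := by omega
    have := hmax q i hq1 hqr hiq
    rw [hf0] at this
    simp only [Nat.cast_zero] at this
    rw [Real.zero_rpow (by positivity)] at this
    have hpos : (0 : ℝ) < (f q i A : ℝ) ^ ((1 : ℝ) / q) :=
      Real.rpow_pos_of_pos (by exact_mod_cast hfq) _
    linarith
  -- Step 2 : a good element a₀ of A
  have ha₀ : ∃ a₀ ∈ A, i₀ ≤ a₀ ∧ a₀ - i₀ ≤ p := by
    have hne : f p i₀ A ≠ 0 := by omega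
    obtain ⟨a, ha, hterm⟩ := Finset.exists_ne_zero_of_sum_ne_zero hne
    rw [Finset.mem_filter] at ha
    refine ⟨a, ha.1, ha.2, ?_⟩
    by_contra hc
    exact hterm (Nat.choose_eq_zero_of_lt (by omega))
  obtain ⟨a₀, ha₀A, ha₀i, ha₀p⟩ := ha₀
  have hFpos : (0 : ℝ) < (f p i₀ A : ℝ) := by exact_mod_cast hF1
  have hF1R : (1 : ℝ) ≤ (f p i₀ A : ℝ) := by exact_mod_cast hF1
  refine ⟨(f p i₀ A : ℝ) ^ (-(2 * r : ℝ)), Real.rpow_pos_of_pos hFpos _, ?_⟩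
  intro n hn
  -- basic numeric setup
  set m := r - p with hm
  have hmp : m + p = r := by omega
  obtain ⟨k, ℓ, hk1, hlp, hn_eq⟩ : ∃ k ℓ, 1 ≤ k ∧ ℓ < p ∧ m + (k * p + ℓ) = n := by
    refine ⟨(n - m) / p, (n - m) % p, ?_, Nat.mod_lt _ hp, ?_⟩
    · rw [Nat.one_le_div_iff hp]; omega
    · have h1 := Nat.div_add_mod (n - m) p
      have h2 : (n - m) / p * p = p * ((n - m) / p) := mul_comm _ _
      omega
  have hk1p : (k - 1) * p + p = k * p := by
    have h1 : (k - 1) * p = k * p - p := by rw [Nat.sub_one_mul]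
    have h2 : p ≤ k * p := Nat.le_mul_of_pos_left p hk1
    omega
  -- the edge set
  set T : Finset (Fin n) := I n 0 m with hT
  set Bf : ℕ → Finset (Fin n) := fun j => I n (m + j * p) (m + j * p + p) with hBf
  set B' : Finset (Fin n) := I n (n - p) n with hB'
  set E : Finset (Finset (Fin n)) :=
    ((Finset.range k).image fun j => T ∪ Bf j) ∪ {T ∪ B'} with hE
  have hmemE : ∀ H, H ∈ E ↔ (∃ j < k, H = T ∪ Bf j) ∨ H = T ∪ B' := by
    intro H
    simp only [hE, Finset.mem_union, Finset.mem_image, Finset.mem_range,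
      Finset.mem_singleton]
    constructor
    · rintro (⟨j, hj, rfl⟩ | h)
      · exact Or.inl ⟨j, hj, rfl⟩
      · exact Or.inr h
    · rintro (⟨j, hj, rfl⟩ | h)
      · exact Or.inl ⟨j, hj, rfl⟩
      · exact Or.inr h
  have hjpk : ∀ j, j < k → j * p + p ≤ k * p := by
    intro j hj
    have := Nat.mul_le_mul_right p (show j + 1 ≤ k from hj)
    simpa [add_mul] using this
  refine ⟨E, ?_, ?_, ?_⟩
  · -- cards
    intro H hH
    rw [hmemE] at hH
    rcases hH with ⟨j, hj, rfl⟩ | rfl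
    · have hble := hjpk j hj
      rw [Finset.card_union_of_disjoint (disjoint_I (by omega)),
        card_I (show m ≤ n by omega), card_I (show m + j * p + p ≤ n by omega)]
      omega
    · rw [Finset.card_union_of_disjoint (disjoint_I (by omega)),
        card_I (show m ≤ n by omega), card_I (le_refl n)]
      omega
  · -- cover
    intro v
    have hv := v.isLt
    by_cases hvm : (v : ℕ) < m
    · exact ⟨T ∪ B', (hmemE _).mpr (Or.inr rfl), Finset.mem_union_left _ (mem_I.mpr ⟨by omega, hvm⟩)⟩
    by_cases hvp : n - p ≤ (v : ℕ)
    · exact ⟨T ∪ B', (hmemE _).mpr (Or.inr rfl), Finset.mem_union_right _ (mem_I.mpr ⟨hvp, hv⟩)⟩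
    · set j := ((v : ℕ) - m) / p with hj
      have hdm : p * j + ((v : ℕ) - m) % p = (v : ℕ) - m := by
        rw [hj]; exact Nat.div_add_mod _ _
      have hmod := Nat.mod_lt ((v : ℕ) - m) (show 0 < p from hp)
      have hcomm : j * p = p * j := mul_comm _ _
      have hjk : j < k := by
        by_contra hc
        have : k * p ≤ j * p := Nat.mul_le_mul_right p (by omega)
        omega
      refine ⟨T ∪ Bf j, (hmemE _).mpr (Or.inl ⟨j, hjk, rfl⟩),
        Finset.mem_union_right _ (mem_I.mpr ⟨by omega, by omega⟩)⟩
  · -- the count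
    obtain ⟨b₀, t, y, hb₀, htl, hty, hypℓ⟩ :
        ∃ b₀ t y, i₀ + b₀ = a₀ ∧ t ≤ ℓ ∧ t + y = b₀ ∧ y ≤ p - ℓ :=
      ⟨a₀ - i₀, min (a₀ - i₀) ℓ, (a₀ - i₀) - min (a₀ - i₀) ℓ, by omega, by omega, by omega,
        by omega⟩
    have hb₀p : b₀ ≤ p := by omega
    have hpkp : p ≤ k * p := by omega
    have hi₀m : i₀ ≤ m := by omega
    set T₀ : Finset (Fin n) := I n 0 i₀ with hT₀
    set Y₁ : Finset (Fin n) := I n (n - p - t) (n - p + y) with hY₁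
    set Y₂ : Finset (Fin n) := I n (n - t) n with hY₂
    set W : Finset (Fin (k - 1) → Finset (Fin n)) :=
      Fintype.piFinset (fun j : Fin (k - 1) =>
        (Bf (j : ℕ)).powerset.filter (fun s => i₀ + s.card ∈ A)) with hW
    set φ : (Fin (k - 1) → Finset (Fin n)) → Finset (Fin n) :=
      fun g => T₀ ∪ (Y₁ ∪ Y₂) ∪ Finset.univ.biUnion (fun j => g j) with hφ
    have hgBf : ∀ g ∈ W, ∀ j : Fin (k - 1), g j ⊆ Bf (j : ℕ) ∧ i₀ + (g j).card ∈ A := by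
      intro g hg j
      have := (Fintype.mem_piFinset.mp hg) j
      rw [Finset.mem_filter, Finset.mem_powerset] at this
      exact this
    have hppk : ∀ i : Fin (k - 1), (i : ℕ) * p + p ≤ (k - 1) * p := by
      intro i
      have := Nat.mul_le_mul_right p (show (i : ℕ) + 1 ≤ k - 1 from i.isLt)
      simpa [add_mul] using this
    -- intersection computations
    have hTS : ∀ g ∈ W, T ∩ φ g = T₀ := by
      intro g hg
      ext v
      simp only [Finset.mem_inter, hφ, Finset.mem_union, Finset.mem_biUnion, Finset.mem_univ,
        true_and, hT, hT₀, hY₁, hY₂, mem_I]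
      constructor
      · rintro ⟨⟨_, hv2⟩, h⟩
        rcases h with (⟨h0, h0'⟩ | (⟨h1, h2⟩ | ⟨h1, h2⟩)) | ⟨i, hi⟩
        · omega
        · omega
        · omega
        · exfalso
          have hb := mem_I.mp ((hgBf g hg i).1 hi)
          omega
      · intro h
        exact ⟨⟨h.1, by omega⟩, Or.inl (Or.inl h)⟩
    have hBjS : ∀ g ∈ W, ∀ j : Fin (k - 1), Bf (j : ℕ) ∩ φ g = g j := by
      intro g hg j
      have hjp1 := hppk j
      simp only [hBf] at hjp1 ⊢
      ext v
      simp only [Finset.mem_inter, hφ, Finset.mem_union, Finset.mem_biUnion, Finset.mem_univ,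
        true_and, hT₀, hY₁, hY₂, mem_I]
      constructor
      · rintro ⟨⟨hv1, hv2⟩, h⟩
        rcases h with (⟨h0, h0'⟩ | (⟨h1, h2⟩ | ⟨h1, h2⟩)) | ⟨i, hi⟩
        · omega
        · omega
        · omega
        · rcases eq_or_ne i j with rfl | hne
          · exact hi
          · exfalso
            have hb := mem_I.mp ((hgBf g hg i).1 hi)
            have hij : (i : ℕ) ≠ (j : ℕ) := fun h => hne (Fin.ext h)
            rcases lt_or_gt_of_ne hij with hlt | hgt
            · have := Nat.mul_le_mul_right p (show (i : ℕ) + 1 ≤ (j : ℕ) from hlt)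
              rw [add_mul, one_mul] at this
              omega
            · have := Nat.mul_le_mul_right p (show (j : ℕ) + 1 ≤ (i : ℕ) from hgt)
              rw [add_mul, one_mul] at this
              omega
      · intro h
        have hb := mem_I.mp ((hgBf g hg j).1 h)
        exact ⟨hb, Or.inr ⟨j, h⟩⟩
    have hBlast : ∀ g ∈ W, Bf (k - 1) ∩ φ g = Y₁ := by
      intro g hg
      ext v
      simp only [Finset.mem_inter, hφ, Finset.mem_union, Finset.mem_biUnion, Finset.mem_univ,
        true_and, hBf, hT₀, hY₁, hY₂, mem_I]
      constructor
      · rintro ⟨⟨hv1, hv2⟩, h⟩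
        rcases h with (⟨h0, h0'⟩ | (⟨h1, h2⟩ | ⟨h1, h2⟩)) | ⟨i, hi⟩
        · omega
        · omega
        · omega
        · exfalso
          have hb := mem_I.mp ((hgBf g hg i).1 hi)
          have := hppk i
          omega
      · intro h
        exact ⟨⟨by omega, by omega⟩, Or.inl (Or.inr (Or.inl h))⟩
    have hB'S : ∀ g ∈ W, B' ∩ φ g = I n (n - p) (n - p + y) ∪ Y₂ := by
      intro g hg
      ext v
      have hv := v.isLt
      simp only [Finset.mem_inter, hφ, Finset.mem_union, Finset.mem_biUnion, Finset.mem_univ,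
        true_and, hB', hT₀, hY₁, hY₂, mem_I]
      constructor
      · rintro ⟨⟨hv1, hv2⟩, h⟩
        rcases h with (⟨h0, h0'⟩ | (⟨h1, h2⟩ | ⟨h1, h2⟩)) | ⟨i, hi⟩
        · omega
        · omega
        · omega
        · exfalso
          have hb := mem_I.mp ((hgBf g hg i).1 hi)
          have := hppk i
          omega
      · rintro (⟨h1, h2⟩ | ⟨h1, h2⟩)
        · exact ⟨⟨h1, by omega⟩, Or.inl (Or.inr (Or.inl ⟨by omega, h2⟩))⟩
        · exact ⟨⟨by omega, h2⟩, Or.inl (Or.inr (Or.inr ⟨h1, h2⟩))⟩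
    -- every φ g is a transversal
    have htrans : ∀ g ∈ W, ∀ H ∈ E, (H ∩ φ g).card ∈ A := by
      intro g hg H hH
      rw [hmemE] at hH
      have hcard_T₀Y₁ : (T₀ ∪ Y₁).card = a₀ := by
        rw [Finset.card_union_of_disjoint (by rw [hT₀, hY₁]; exact disjoint_I (by omega)),
          hT₀, hY₁, card_I (by omega), card_I (by omega)]
        omega
      rcases hH with ⟨j, hjk, rfl⟩ | rfl
      · rw [Finset.union_inter_distrib_right, hTS g hg]
        rcases lt_or_ge j (k - 1) with hjlt | hjge
        · have := hBjS g hg ⟨j, hjlt⟩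
          simp only [Fin.val_mk] at this
          rw [this]
          have hT₀card : T₀.card = i₀ := by
            rw [hT₀, card_I (by omega)]
            omega
          rw [Finset.card_union_of_disjoint, hT₀card]
          · exact (hgBf g hg ⟨j, hjlt⟩).2
          · refine Disjoint.mono_right ((hgBf g hg ⟨j, hjlt⟩).1) ?_
            rw [hT₀, hBf]
            exact disjoint_I (by omega)
        · have hj' : j = k - 1 := by omega
          subst hj'
          rw [hBlast g hg, hcard_T₀Y₁]
          exact ha₀A
      · rw [Finset.union_inter_distrib_right, hTS g hg, hB'S g hg]
        have : (T₀ ∪ (I n (n - p) (n - p + y) ∪ Y₂)).card = a₀ := by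
          rw [Finset.card_union_of_disjoint, Finset.card_union_of_disjoint,
            hT₀, hY₂, card_I (by omega), card_I (by omega), card_I (le_refl n)]
          · omega
          · rw [hY₂]; exact disjoint_I (by omega)
          · rw [hT₀, hY₂]
            refine Finset.disjoint_union_right.mpr ⟨disjoint_I (by omega), disjoint_I (by omega)⟩
        rw [this]
        exact ha₀A
    -- injectivity
    have hinj : Set.InjOn φ (W : Set _) := by
      intro g hg g' hg' heq
      funext j
      rw [← hBjS g (Finset.mem_coe.mp hg) j, ← hBjS g' (Finset.mem_coe.mp hg') j, heq]
    -- cardinality of W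
    have hWcard : W.card = (f p i₀ A) ^ (k - 1) := by
      rw [hW, Fintype.card_piFinset]
      have hconst : ∀ j : Fin (k - 1),
          ((Bf (j : ℕ)).powerset.filter (fun s => i₀ + s.card ∈ A)).card = f p i₀ A := by
        intro j
        rw [count_subsets]
        have hc : (Bf (j : ℕ)).card = p := by
          have := hppk j
          rw [hBf, card_I (by omega)]
          omega
        rw [hc]
      simp only [hconst]
      rw [Finset.prod_const, Finset.card_univ, Fintype.card_fin]
    -- lower bound on the number of transversals
    have hle : ((f p i₀ A) ^ (k - 1) : ℝ) ≤
        ({S : Finset (Fin n) | ∀ H ∈ E, (H ∩ S).card ∈ A}.ncard : ℝ) := by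
      have himg : ((W.image φ : Finset _) : Set _) ⊆
          {S : Finset (Fin n) | ∀ H ∈ E, (H ∩ S).card ∈ A} := by
        intro S hS
        simp only [Finset.coe_image, Set.mem_image, Finset.mem_coe] at hS
        obtain ⟨g, hg, rfl⟩ := hS
        exact fun H hH => htrans g hg H hH
      have h1 : (W.image φ).card ≤
          {S : Finset (Fin n) | ∀ H ∈ E, (H ∩ S).card ∈ A}.ncard := by
        calc (W.image φ).card = ((W.image φ : Finset _) : Set _).ncard :=
              (Set.ncard_coe_finset _).symm
          _ ≤ _ := Set.ncard_le_ncard himg (Set.toFinite _)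
      have h2 : (W.image φ).card = W.card := Finset.card_image_of_injOn hinj
      rw [h2, hWcard] at h1
      exact_mod_cast h1
    refine le_trans ?_ hle
    -- real-exponent bookkeeping
    have hnle : n ≤ (k - 1 + 2 * r) * p := by
      have hexp : (k - 1 + 2 * r) * p = (k - 1) * p + 2 * (r * p) := by ring
      have h1 : r ≤ r * p := Nat.le_mul_of_pos_right r hp
      have h2 : p ≤ r * p := Nat.le_mul_of_pos_left p hr
      omega
    have hppos : (0 : ℝ) < (p : ℝ) := by exact_mod_cast hp
    calc (f p i₀ A : ℝ) ^ (-(2 * r : ℝ)) * (f p i₀ A : ℝ) ^ ((n : ℝ) / p)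
        = (f p i₀ A : ℝ) ^ (-(2 * r : ℝ) + (n : ℝ) / p) := (Real.rpow_add hFpos _ _).symm
      _ ≤ (f p i₀ A : ℝ) ^ ((k - 1 : ℕ) : ℝ) := by
          apply Real.rpow_le_rpow_of_exponent_le hF1R
          have hnR : (n : ℝ) ≤ (((k - 1 : ℕ) : ℝ) + 2 * r) * p := by exact_mod_cast hnle
          have hdiv : (n : ℝ) / p ≤ ((k - 1 : ℕ) : ℝ) + 2 * r := by
            rw [div_le_iff₀ hppos]; linarith
          linarith
      _ = ((f p i₀ A) ^ (k - 1) : ℝ) := by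
          rw [Real.rpow_natCast]
end
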